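/- arXiv:1504.00645 — 6 statements merged into one kernel-verified Lean document; each statement's English description precedes it below -/
import Mathlib

section
/- Let n ≥ 3 be an integer. The permutability graph of non-normal subgroups Γ_N(D_n) of the dihedral group D_n has no edges (i.e., is totally disconnected) if and only if n is an odd prime. -/
open scoped Pointwise

/-- The permutability graph of non-normal subgroups `Γ_N(G)`: vertices are the
non-normal (hence proper) subgroups of `G`, and two distinct vertices are adjacent
iff the corresponding subgroups permute, i.e. `HK = KH` as subsets of `G`. -/
def permGraphN (G : Type*) [Group G] :
    SimpleGraph {H : Subgroup G // ¬ H.Normal} where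
  Adj H K := H ≠ K ∧ (H.1 : Set G) * (K.1 : Set G) = (K.1 : Set G) * (H.1 : Set G)
  symm := ⟨fun _ _ ⟨hne, h⟩ => ⟨hne.symm, h.symm⟩⟩
  loopless := ⟨fun _ ⟨hne, _⟩ => hne rfl⟩

/-- The permutability graph of subgroups `Γ(G)`: vertices are the proper nontrivial
subgroups of `G`, and two distinct vertices are adjacent iff the corresponding
subgroups permute, i.e. `HK = KH` as subsets of `G`. -/
def permGraph (G : Type*) [Group G] :
    SimpleGraph {H : Subgroup G // H ≠ ⊥ ∧ H ≠ ⊤} where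
  Adj H K := H ≠ K ∧ (H.1 : Set G) * (K.1 : Set G) = (K.1 : Set G) * (H.1 : Set G)
  symm := ⟨fun _ _ ⟨hne, h⟩ => ⟨hne.symm, h.symm⟩⟩
  loopless := ⟨fun _ ⟨hne, _⟩ => hne rfl⟩

/-!
For an odd prime `p`, a subgroup of `D_p` has order `1`, `2`, `p` or `2p`, and all but those of
order `2` have index at most `2`, hence are normal. Rotations have order dividing `p`, so the
non-normal subgroups are the `{1, sr i}`. Two of them permute iff `sr i` and `sr j` commute,
i.e. `2i = 2j`, which forces `i = j` as `p` is odd.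

Conversely, for `n = 2m` the reflections `sr 0` and `sr m` commute, so `{1, sr 0}` and
`{1, sr m}` permute. For odd composite `n` with least prime factor `d`, the subgroup `{1, sr 0}`
lies in the subgroup of all `r a`, `sr a` with `d ∣ a`, which is not normal since `d ∤ 2`, and a
subgroup permutes with every subgroup containing it.
-/

section Group

variable {G : Type*} [Group G]

theorem Set.pair_one_mul_comm_iff {a b : G} :
    ({1, a} : Set G) * {1, b} = {1, b} * {1, a} ↔ Commute a b := by
  constructor
  · intro h
    obtain ⟨x, hx, y, hy, hxy⟩ : a * b ∈ ({1, b} : Set G) * {1, a} :=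
      h ▸ Set.mul_mem_mul (by simp) (by simp)
    simp only [Set.mem_insert_iff, Set.mem_singleton_iff] at hx hy
    rcases hx with rfl | rfl <;> rcases hy with rfl | rfl <;> simp only [one_mul, mul_one] at hxy
    · exact hxy.symm.trans (mul_eq_one_comm.mp hxy.symm).symm
    · rw [left_eq_mul.mp hxy]; exact Commute.one_right _
    · rw [right_eq_mul.mp hxy]; exact Commute.one_left _
    · exact hxy.symm
  · intro h
    simp only [Set.pair_mul, Set.smul_set_insert, Set.smul_set_singleton, smul_eq_mul, one_mul,
      mul_one, h.eq]
    ext; simp only [Set.mem_union, Set.mem_insert_iff, Set.mem_singleton_iff]; tauto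

theorem Subgroup.coe_zpowers_of_sq_eq_one {g : G} (hg : g ^ 2 = 1) :
    (zpowers g : Set G) = {1, g} := by
  ext x
  simp only [SetLike.mem_coe, mem_zpowers_iff, Set.mem_insert_iff, Set.mem_singleton_iff]
  constructor
  · rintro ⟨k, rfl⟩
    rw [zpow_eq_zpow_emod' k hg]
    rcases Int.emod_two_eq k with h | h <;> simp [h]
  · rintro (rfl | rfl)
    exacts [⟨0, zpow_zero _⟩, ⟨1, zpow_one _⟩]

theorem Subgroup.exists_eq_zpowers_of_card_eq_two {H : Subgroup G} (hH : Nat.card H = 2) :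
    ∃ g, orderOf g = 2 ∧ H = zpowers g := by
  obtain ⟨g, hgH, hg1⟩ := H.bot_or_exists_ne_one.resolve_left fun h => by
    simp [h] at hH
  have hg : orderOf g = 2 := by
    have := H.orderOf_dvd_natCard hgH
    rw [hH, Nat.dvd_prime Nat.prime_two, orderOf_eq_one_iff] at this
    exact this.resolve_left hg1
  have : Finite H := Nat.finite_of_card_ne_zero (by rw [hH]; norm_num)
  refine ⟨g, hg, (eq_of_le_of_card_ge (zpowers_le.mpr hgH) ?_).symm⟩
  rw [hH, Nat.card_zpowers, hg]

theorem Subgroup.card_eq_two_of_not_normal {p : ℕ} (hp : p.Prime) (hG : Nat.card G = 2 * p)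
    {H : Subgroup G} (hH : ¬ H.Normal) : Nat.card H = 2 := by
  have hindex : H.index * Nat.card H = 2 * p := hG ▸ H.index_mul_card
  obtain ⟨k, l, hk, hl, hkl⟩ := Nat.dvd_mul.mp (hG ▸ H.card_subgroup_dvd_card)
  rw [← hkl] at hindex ⊢
  rcases (Nat.dvd_prime Nat.prime_two).mp hk with rfl | rfl <;>
    rcases (Nat.dvd_prime hp).mp hl with rfl | rfl
  · exact absurd (eq_bot_of_card_eq H hkl.symm) fun h => hH (h ▸ inferInstance)
  · have : H.index = 2 := by nlinarith [hp.pos]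
    exact absurd (normal_of_index_eq_two this) hH
  · rfl
  · have : H.index = 1 := by nlinarith [hp.pos]
    exact absurd (index_eq_one.mp this) fun h => hH (h ▸ inferInstance)

theorem permGraphN_adj_of_lt {H K : Subgroup G} (hH : ¬ H.Normal)
    (hK : ¬ K.Normal) (hHK : H < K) : (permGraphN G).Adj ⟨H, hH⟩ ⟨K, hK⟩ :=
  ⟨fun h => hHK.ne (congrArg Subtype.val h),
    Subgroup.set_mul_normalizer_comm _ _ (hHK.le.trans K.le_normalizer)⟩

end Group

theorem ZMod.ofNat_two_eq_zero_iff {n : ℕ} : (2 : ZMod n) = 0 ↔ n ∣ 2 := by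
  exact_mod_cast ZMod.natCast_eq_zero_iff 2 n

namespace DihedralGroup

open Subgroup

variable {n : ℕ}

theorem coe_zpowers_sr (i : ZMod n) : (zpowers (sr i) : Set (DihedralGroup n)) = {1, sr i} :=
  coe_zpowers_of_sq_eq_one (by rw [sq, sr_mul_self])

theorem zpowers_sr_inj {i j : ZMod n} : zpowers (sr i) = zpowers (sr j) ↔ i = j := by
  rw [← SetLike.coe_set_eq, coe_zpowers_sr, coe_zpowers_sr]
  simp only [Set.pair_eq_pair_iff, one_def, sr.injEq, reduceCtorEq, true_and, false_and, or_false]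

theorem commute_sr_sr_iff {i j : ZMod n} : Commute (sr i) (sr j) ↔ 2 * i = 2 * j := by
  rw [Commute, SemiconjBy, sr_mul_sr, sr_mul_sr, r.injEq]
  constructor <;> intro h <;> linear_combination -h

theorem zpowers_sr_mul_comm_iff {i j : ZMod n} :
    (zpowers (sr i) : Set (DihedralGroup n)) * zpowers (sr j) = zpowers (sr j) * zpowers (sr i) ↔
      2 * i = 2 * j := by
  rw [coe_zpowers_sr, coe_zpowers_sr, Set.pair_one_mul_comm_iff, commute_sr_sr_iff]

theorem sr_sub_two_mem_of_normal {H : Subgroup (DihedralGroup n)} (hH : H.Normal) {i : ZMod n}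
    (hi : sr i ∈ H) : sr (i - 2) ∈ H := by
  convert hH.conj_mem _ hi (r 1) using 1
  rw [inv_r, r_mul_sr, sr_mul_r]
  ring_nf

theorem zpowers_sr_not_normal (hn : ¬ n ∣ 2) (i : ZMod n) : ¬ (zpowers (sr i)).Normal := by
  intro hN
  have := sr_sub_two_mem_of_normal hN (mem_zpowers (sr i))
  rw [← SetLike.mem_coe, coe_zpowers_sr] at this
  simp only [Set.mem_insert_iff, one_def, reduceCtorEq, Set.mem_singleton_iff, sr.injEq,
    sub_eq_self, false_or] at this
  exact hn (ZMod.ofNat_two_eq_zero_iff.mp this)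

theorem orderOf_r_dvd (a : ZMod n) : orderOf (r a) ∣ n :=
  orderOf_dvd_of_pow_eq_one (by rw [r_pow, ZMod.natCast_self, mul_zero, r_zero])

theorem exists_eq_sr_of_orderOf_eq_two (hn : Odd n) {g : DihedralGroup n} (hg : orderOf g = 2) :
    ∃ i, g = sr i := by
  rcases g with a | i
  · exact absurd (hg ▸ orderOf_r_dvd a) hn.not_two_dvd_nat
  · exact ⟨i, rfl⟩

theorem exists_eq_zpowers_sr_of_not_normal (hp : n.Prime) (hn : Odd n)
    {H : Subgroup (DihedralGroup n)} (hH : ¬ H.Normal) : ∃ i, H = zpowers (sr i) := by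
  obtain ⟨g, hg, rfl⟩ := exists_eq_zpowers_of_card_eq_two (card_eq_two_of_not_normal hp nat_card hH)
  obtain ⟨i, rfl⟩ := exists_eq_sr_of_orderOf_eq_two hn hg
  exact ⟨i, rfl⟩

def ofAddSubgroup (A : AddSubgroup (ZMod n)) : Subgroup (DihedralGroup n) where
  carrier := {x | match x with | r a => a ∈ A | sr a => a ∈ A}
  one_mem' := A.zero_mem
  mul_mem' := by
    rintro (a | a) (b | b) ha hb
    exacts [A.add_mem ha hb, A.sub_mem hb ha, A.add_mem ha hb, A.sub_mem hb ha]
  inv_mem' := by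
    rintro (a | a) ha
    exacts [A.neg_mem ha, ha]

variable {A : AddSubgroup (ZMod n)} {a : ZMod n}

theorem r_mem_ofAddSubgroup : r a ∈ ofAddSubgroup A ↔ a ∈ A := Iff.rfl

theorem sr_mem_ofAddSubgroup : sr a ∈ ofAddSubgroup A ↔ a ∈ A := Iff.rfl

theorem ofAddSubgroup_not_normal (hA : (2 : ZMod n) ∉ A) : ¬ (ofAddSubgroup A).Normal := by
  intro hN
  have := sr_sub_two_mem_of_normal hN (sr_mem_ofAddSubgroup.mpr A.zero_mem)
  rw [sr_mem_ofAddSubgroup, zero_sub, neg_mem_iff] at this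
  exact hA this

theorem exists_permGraphN_adj_of_even (hn : 3 ≤ n) (he : Even n) :
    ∃ H K, (permGraphN (DihedralGroup n)).Adj H K := by
  obtain ⟨m, rfl⟩ := he
  have h2 : ¬ m + m ∣ 2 := fun h => by have := Nat.le_of_dvd two_pos h; omega
  refine ⟨⟨_, zpowers_sr_not_normal h2 0⟩, ⟨_, zpowers_sr_not_normal h2 m⟩, ?_, ?_⟩
  · rw [Ne, Subtype.mk.injEq, zpowers_sr_inj, eq_comm, ZMod.natCast_eq_zero_iff]
    intro h
    have := Nat.le_of_dvd (by omega) h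
    omega
  · rw [zpowers_sr_mul_comm_iff, mul_zero, two_mul, ← Nat.cast_add, ZMod.natCast_self]

theorem exists_permGraphN_adj_of_dvd {d : ℕ} (hd : d ∣ n) (hdn : d ≠ n) (hd2 : ¬ d ∣ 2) :
    ∃ H K, (permGraphN (DihedralGroup n)).Adj H K := by
  set A := (ZMod.castHom hd (ZMod d)).toAddMonoidHom.ker
  have hA2 : (2 : ZMod n) ∉ A := by
    change ¬ ZMod.castHom hd (ZMod d) 2 = 0
    rwa [map_ofNat, ZMod.ofNat_two_eq_zero_iff]
  have hAd : (d : ZMod n) ∈ A := by simp [A]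
  refine ⟨_, _, permGraphN_adj_of_lt (zpowers_sr_not_normal (fun h => hd2 (hd.trans h)) 0)
    (ofAddSubgroup_not_normal hA2) (lt_of_le_of_ne ?_ fun h => ?_)⟩
  · exact zpowers_le.mpr (sr_mem_ofAddSubgroup.mpr A.zero_mem)
  · have := r_mem_ofAddSubgroup.mpr hAd
    rw [← h, ← SetLike.mem_coe, coe_zpowers_sr] at this
    simp only [Set.mem_insert_iff, one_def, r.injEq, Set.mem_singleton_iff, reduceCtorEq,
      or_false, ZMod.natCast_eq_zero_iff] at this
    exact hdn (Nat.dvd_antisymm hd this)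

theorem exists_permGraphN_adj (hn : 3 ≤ n) (h : ¬ (Odd n ∧ n.Prime)) :
    ∃ H K, (permGraphN (DihedralGroup n)).Adj H K := by
  rcases Nat.even_or_odd n with he | ho
  · exact exists_permGraphN_adj_of_even hn he
  · have hmin := Nat.minFac_prime (show n ≠ 1 by omega)
    refine exists_permGraphN_adj_of_dvd (Nat.minFac_dvd n) (fun h' => h ⟨ho, h' ▸ hmin⟩)
      fun h2 => ho.not_two_dvd_nat ?_
    rw [← (Nat.prime_dvd_prime_iff_eq hmin Nat.prime_two).mp h2]
    exact Nat.minFac_dvd n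

theorem not_permGraphN_adj_of_odd_prime (hn : Odd n) (hp : n.Prime)
    (H K : {H : Subgroup (DihedralGroup n) // ¬ H.Normal}) :
    ¬ (permGraphN (DihedralGroup n)).Adj H K := by
  rintro ⟨hne, hHK⟩
  obtain ⟨i, hi⟩ := exists_eq_zpowers_sr_of_not_normal hp hn H.2
  obtain ⟨j, hj⟩ := exists_eq_zpowers_sr_of_not_normal hp hn K.2
  have h2 : IsUnit (2 : ZMod n) := by
    exact_mod_cast ZMod.isUnit_prime_of_not_dvd Nat.prime_two hn.not_two_dvd_nat
  rw [hi, hj, zpowers_sr_mul_comm_iff] at hHK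
  exact hne (Subtype.ext (by rw [hi, hj, h2.mul_left_cancel hHK]))

end DihedralGroup

/-- For an integer `n ≥ 3`, the permutability graph of non-normal
subgroups `Γ_N(D_n)` has no edges iff `n` is an odd prime. -/
theorem stmt_0 (n : ℕ) (hn : 3 ≤ n) :
    (∀ H K : {H : Subgroup (DihedralGroup n) // ¬ H.Normal},
        ¬ (permGraphN (DihedralGroup n)).Adj H K) ↔ (Odd n ∧ n.Prime) := by
  refine ⟨fun h => ?_, fun ⟨hodd, hp⟩ =>
    DihedralGroup.not_permGraphN_adj_of_odd_prime hodd hp⟩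
  by_contra hnot
  obtain ⟨H, K, hHK⟩ := DihedralGroup.exists_permGraphN_adj hn hnot
  exact h H K hHK
end

section
/- Let n ≥ 3 be an integer. If n is odd, then the clique number and the chromatic number of Γ_N(D_n) both equal τ(n) − 1. If n = 2^α n' with n' odd and α ≥ 1, then the clique number and the chromatic number of Γ_N(D_n) both equal (2α + 1)τ(n') − 3. In particular, Γ_N(D_n) is weakly perfect (its clique number equals its chromatic number). -/
open scoped Pointwise

/-!
Every non-normal subgroup of `D_n` is `⟨r^d, s r^i⟩` for a divisor `d > 2` of `n`, and
`⟨r^d, s r^i⟩`, `⟨r^e, s r^j⟩` permute iff `gcd(d, e) ∣ 2(i - j)` in `ℤ/n`. Hence the subgroups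
`⟨r^d, s⟩` for all such `d`, together with `⟨r^d, s r^(d/2)⟩` for even `d`, form a clique. The same
labels colour the graph properly: colour `⟨r^d, s r^i⟩` by `d` and, for even `d`, by the parity of
`⌊i / (d/2)⌋`, since two distinct subgroups with the same `d` permute only if `i ≡ j + d/2 (mod d)`.
Counting labels gives `τ(n) - 1`, resp. `(2α + 1)τ(n') - 3`.
-/

open Finset

theorem ZMod.natCast_dvd_intCast_iff {n d : ℕ} (hd : d ∣ n) {z : ℤ} :
    (d : ZMod n) ∣ (z : ZMod n) ↔ (d : ℤ) ∣ z := by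
  refine ⟨fun ⟨k, hk⟩ => ?_, fun h => by exact_mod_cast Int.cast_dvd_cast _ _ h⟩
  rw [← ZMod.intCast_zmod_eq_zero_iff_dvd]
  simpa [map_mul] using congrArg (ZMod.castHom hd (ZMod d)) hk

theorem ZMod.natCast_dvd_natCast_iff {n d m : ℕ} (hd : d ∣ n) :
    (d : ZMod n) ∣ (m : ZMod n) ↔ d ∣ m := by
  exact_mod_cast ZMod.natCast_dvd_intCast_iff (z := m) hd

theorem Nat.cast_gcd_dvd_iff {R : Type*} [CommRing R] {d e : ℕ} {x : R} :
    ((d.gcd e : ℕ) : R) ∣ x ↔ ∃ k l : R, x = d * k + e * l := by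
  constructor
  · rintro ⟨m, rfl⟩
    refine ⟨d.gcdA e * m, d.gcdB e * m, ?_⟩
    have := congrArg (Int.cast : ℤ → R) (Nat.gcd_eq_gcd_ab d e)
    push_cast at this
    rw [this]; ring
  · rintro ⟨k, l, rfl⟩
    exact dvd_add ((Nat.cast_dvd_cast (Nat.gcd_dvd_left d e)).mul_right k)
      ((Nat.cast_dvd_cast (Nat.gcd_dvd_right d e)).mul_right l)

theorem ZMod.exists_natCast_dvd_iff_mem {n : ℕ} [NeZero n] (A : AddSubgroup (ZMod n)) :
    ∃ d, d ∣ n ∧ ∀ x, x ∈ A ↔ (d : ZMod n) ∣ x := by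
  obtain ⟨⟨g, hgA⟩, hg⟩ := IsAddCyclic.exists_generator (α := A)
  refine ⟨g.val.gcd n, Nat.gcd_dvd_right _ _, fun x => ?_⟩
  simp only [Nat.cast_gcd_dvd_iff, ZMod.natCast_self, zero_mul, add_zero, ZMod.natCast_zmod_val,
    exists_const]
  constructor
  · intro hx
    obtain ⟨k, hk⟩ := AddSubgroup.mem_zmultiples_iff.mp (hg ⟨x, hx⟩)
    exact ⟨k, by simpa [zsmul_eq_mul, mul_comm] using congrArg Subtype.val hk.symm⟩
  · rintro ⟨k, rfl⟩
    rw [← ZMod.intCast_zmod_cast k, mul_comm, ← zsmul_eq_mul]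
    exact A.zsmul_mem hgA _

theorem Nat.filter_not_two_dvd_divisors_two_pow_mul {α m : ℕ} (hm : Odd m) :
    {d ∈ (2 ^ α * m).divisors | ¬ 2 ∣ d} = m.divisors := by
  rw [← Nat.divisors_filter_dvd_of_dvd (by positivity [hm.pos]) (dvd_mul_left m (2 ^ α))]
  refine filter_congr fun d hd => ⟨fun h2 => ?_, fun hdm h2 => ?_⟩
  · exact (Nat.Coprime.pow_right α (Nat.odd_iff.mpr (by omega)).coprime_two_right)
      |>.dvd_of_dvd_mul_left (Nat.dvd_of_mem_divisors hd)
  · exact (Nat.not_even_iff_odd.mpr hm) (even_iff_two_dvd.mpr (h2.trans hdm))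

theorem Nat.card_divisors_two_pow_mul {α m : ℕ} (hm : Odd m) :
    #(2 ^ α * m).divisors = (α + 1) * #m.divisors := by
  rw [Nat.Coprime.card_divisors_mul (Nat.Coprime.pow_left α hm.coprime_two_left),
    Nat.divisors_prime_pow Nat.prime_two, card_map, card_range]

theorem SimpleGraph.cliqueNum_eq_and_chromaticNumber_eq {V α : Type*} [Finite V] [Fintype α]
    {G : SimpleGraph V} (f : α → V) (hf : Pairwise fun a b => G.Adj (f a) (f b))
    (hG : G.Colorable (Fintype.card α)) :
    G.cliqueNum = Fintype.card α ∧ G.chromaticNumber = Fintype.card α := by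
  have hinj : Function.Injective f := fun a b hab => by
    by_contra hne
    exact (hf hne).ne hab
  have hclique : G.IsClique (Finset.univ.map ⟨f, hinj⟩ : Finset V) := by
    rw [Finset.coe_map]
    rintro _ ⟨a, -, rfl⟩ _ ⟨b, -, rfl⟩ hab
    exact hf (ne_of_apply_ne _ hab)
  have hle := hclique.card_le_cliqueNum
  rw [Finset.card_map, Finset.card_univ] at hle
  have hχ := hG.chromaticNumber_le
  have hωχ := G.cliqueNum_le_chromaticNumber
  constructor
  · exact le_antisymm (by exact_mod_cast hωχ.trans hχ) hle
  · exact le_antisymm hχ (le_trans (by exact_mod_cast hle) hωχ)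

namespace DihedralGroup

variable {n : ℕ}

/-- The subgroup generated by `r d` and `sr i`. -/
def rsSubgroup (d : ℕ) (i : ZMod n) : Subgroup (DihedralGroup n) where
  carrier := {x | match x with
    | r u => (d : ZMod n) ∣ u
    | sr u => (d : ZMod n) ∣ u - i}
  one_mem' := dvd_zero _
  inv_mem' := by
    rintro (u | u) h
    · exact dvd_neg.mpr h
    · exact h
  mul_mem' := by
    rintro (u | u) (v | v) hu hv
    · exact dvd_add hu hv
    · show (d : ZMod n) ∣ v - u - i
      rw [sub_right_comm]
      exact dvd_sub hv hu
    · simpa [add_sub_right_comm] using dvd_add hu hv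
    · simpa using dvd_sub hv hu

variable {d e : ℕ} {i j u : ZMod n}

@[simp] theorem r_mem_rsSubgroup : r u ∈ rsSubgroup d i ↔ (d : ZMod n) ∣ u := Iff.rfl

@[simp] theorem sr_mem_rsSubgroup : sr u ∈ rsSubgroup d i ↔ (d : ZMod n) ∣ u - i := Iff.rfl

theorem r_mem_rsSubgroup_mul_rsSubgroup :
    r u ∈ (rsSubgroup d i : Set (DihedralGroup n)) * (rsSubgroup e j : Set (DihedralGroup n)) ↔
      ((d.gcd e : ℕ) : ZMod n) ∣ u ∨ ((d.gcd e : ℕ) : ZMod n) ∣ u - (j - i) := by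
  have hgd : ((d.gcd e : ℕ) : ZMod n) ∣ d := Nat.cast_dvd_cast (Nat.gcd_dvd_left d e)
  have hge : ((d.gcd e : ℕ) : ZMod n) ∣ e := Nat.cast_dvd_cast (Nat.gcd_dvd_right d e)
  constructor
  · rintro ⟨a | a, ha, b | b, hb, h⟩ <;>
      simp only [r_mul_r, sr_mul_sr, r_mul_sr, sr_mul_r, r.injEq, reduceCtorEq] at h ⊢
    · exact .inl (h ▸ dvd_add (hgd.trans ha) (hge.trans hb))
    · refine .inr ?_
      convert dvd_sub (hge.trans hb) (hgd.trans ha) using 1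
      rw [← h]; ring
  · rintro (h | h) <;> obtain ⟨k, l, hkl⟩ := Nat.cast_gcd_dvd_iff.mp h
    · exact ⟨r (d * k), by simp, r (e * l), by simp, by simp [r_mul_r, hkl]⟩
    · refine ⟨sr (i - d * k), by simp, sr (j + e * l), by simp, ?_⟩
      simp only [sr_mul_sr, r.injEq]
      linear_combination -hkl

theorem sr_mem_rsSubgroup_mul_rsSubgroup :
    sr u ∈ (rsSubgroup d i : Set (DihedralGroup n)) * (rsSubgroup e j : Set (DihedralGroup n)) ↔
      ((d.gcd e : ℕ) : ZMod n) ∣ u - i ∨ ((d.gcd e : ℕ) : ZMod n) ∣ u - j := by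
  have hgd : ((d.gcd e : ℕ) : ZMod n) ∣ d := Nat.cast_dvd_cast (Nat.gcd_dvd_left d e)
  have hge : ((d.gcd e : ℕ) : ZMod n) ∣ e := Nat.cast_dvd_cast (Nat.gcd_dvd_right d e)
  constructor
  · rintro ⟨a | a, ha, b | b, hb, h⟩ <;>
      simp only [r_mul_r, sr_mul_sr, r_mul_sr, sr_mul_r, sr.injEq, reduceCtorEq] at h ⊢
    · refine .inr ?_
      convert dvd_sub (hge.trans hb) (hgd.trans ha) using 1
      rw [← h]; ring
    · refine .inl ?_
      convert dvd_add (hgd.trans ha) (hge.trans hb) using 1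
      rw [← h]; ring
  · rintro (h | h) <;> obtain ⟨k, l, hkl⟩ := Nat.cast_gcd_dvd_iff.mp h
    · refine ⟨sr (i + d * k), by simp, r (e * l), by simp, ?_⟩
      simp only [sr_mul_r, sr.injEq]
      linear_combination -hkl
    · refine ⟨r (-(d * k)), by simp, sr (j + e * l), by simp, ?_⟩
      simp only [r_mul_sr, sr.injEq]
      linear_combination -hkl

theorem rsSubgroup_mul_comm_iff :
    (rsSubgroup d i : Set (DihedralGroup n)) * (rsSubgroup e j : Set (DihedralGroup n)) =
        (rsSubgroup e j : Set (DihedralGroup n)) * (rsSubgroup d i : Set (DihedralGroup n)) ↔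
      ((d.gcd e : ℕ) : ZMod n) ∣ 2 * (i - j) := by
  constructor
  · intro h
    have hmem : r (i - j) ∈
        (rsSubgroup e j : Set (DihedralGroup n)) * (rsSubgroup d i : Set (DihedralGroup n)) :=
      r_mem_rsSubgroup_mul_rsSubgroup.mpr (.inr (by simp))
    rw [← h, r_mem_rsSubgroup_mul_rsSubgroup] at hmem
    rcases hmem with hmem | hmem
    · exact hmem.mul_left 2
    · convert hmem using 1; ring
  · intro h
    ext (u | u)
    · rw [r_mem_rsSubgroup_mul_rsSubgroup, r_mem_rsSubgroup_mul_rsSubgroup, Nat.gcd_comm e d,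
        show u - (j - i) = u - (i - j) + 2 * (i - j) by ring, dvd_add_left h]
    · rw [sr_mem_rsSubgroup_mul_rsSubgroup, sr_mem_rsSubgroup_mul_rsSubgroup, Nat.gcd_comm e d,
        or_comm]

theorem rsSubgroup_normal_iff : (rsSubgroup d i).Normal ↔ (d : ZMod n) ∣ 2 := by
  constructor
  · intro hN
    have := hN.conj_mem (sr i) (by simp) (r 1)
    simp only [inv_r, r_mul_sr, sr_mul_r, sr_mem_rsSubgroup] at this
    convert this.neg_right using 1; ring
  · intro h2
    refine ⟨?_⟩
    rintro (u | u) hu (v | v) <;>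
      simp only [inv_r, inv_sr, r_mul_r, r_mul_sr, sr_mul_r, sr_mul_sr, r_mem_rsSubgroup,
        sr_mem_rsSubgroup] at hu ⊢
    · convert hu using 1; ring
    · convert hu.neg_right using 1; ring
    · convert dvd_sub hu (h2.mul_right v) using 1; ring
    · convert dvd_sub (h2.mul_right (v - i)) hu using 1; ring

theorem rsSubgroup_eq_iff (hd : d ∣ n) (he : e ∣ n) :
    rsSubgroup d i = rsSubgroup e j ↔ d = e ∧ (d : ZMod n) ∣ i - j := by
  constructor
  · intro h
    have hde : e ∣ d := (ZMod.natCast_dvd_natCast_iff he).mp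
      (r_mem_rsSubgroup.mp (h ▸ r_mem_rsSubgroup.mpr dvd_rfl : r (d : ZMod n) ∈ rsSubgroup e j))
    have hed : d ∣ e := (ZMod.natCast_dvd_natCast_iff hd).mp
      (r_mem_rsSubgroup.mp (h ▸ r_mem_rsSubgroup.mpr dvd_rfl : r (e : ZMod n) ∈ rsSubgroup d i))
    obtain rfl := Nat.dvd_antisymm hed hde
    refine ⟨rfl, ?_⟩
    simpa using (h ▸ sr_mem_rsSubgroup.mpr (by simp) : sr i ∈ rsSubgroup d j)
  · rintro ⟨rfl, h⟩
    ext (u | u)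
    · rfl
    · simp only [sr_mem_rsSubgroup]
      rw [show u - j = u - i + (i - j) by ring, dvd_add_left h]

def rotations (K : Subgroup (DihedralGroup n)) : AddSubgroup (ZMod n) where
  carrier := {u | r u ∈ K}
  zero_mem' := K.one_mem
  add_mem' ha hb := by simpa using K.mul_mem ha hb
  neg_mem' ha := by simpa using K.inv_mem ha

theorem exists_sr_mem_of_not_normal {K : Subgroup (DihedralGroup n)} (hK : ¬ K.Normal) :
    ∃ i, sr i ∈ K := by
  by_contra! h
  refine hK ⟨?_⟩
  rintro (u | u) hu (v | v)
  · simpa using hu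
  · simpa using K.inv_mem hu
  · exact absurd hu (h u)
  · exact absurd hu (h u)

theorem exists_eq_rsSubgroup_of_not_normal [NeZero n] {K : Subgroup (DihedralGroup n)}
    (hK : ¬ K.Normal) : ∃ d i, d ∣ n ∧ 2 < d ∧ K = rsSubgroup d i := by
  obtain ⟨i, hi⟩ := exists_sr_mem_of_not_normal hK
  obtain ⟨d, hdn, hd⟩ := ZMod.exists_natCast_dvd_iff_mem (rotations K)
  have hKd : K = rsSubgroup d i := by
    ext (u | u)
    · exact hd u
    · rw [sr_mem_rsSubgroup, ← hd, ← K.mul_mem_cancel_left hi, sr_mul_sr]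
      rfl
  refine ⟨d, i, hdn, ?_, hKd⟩
  have hd2 : ¬ (d : ZMod n) ∣ 2 := fun h => hK (hKd ▸ rsSubgroup_normal_iff.mpr h)
  have hd0 : d ≠ 0 := by rintro rfl; exact NeZero.ne n (zero_dvd_iff.mp hdn)
  by_contra! h
  interval_cases d <;> simp_all

theorem rsSubgroup_not_normal (hd : d ∣ n) (h2 : 2 < d) : ¬ (rsSubgroup d i).Normal := by
  rw [rsSubgroup_normal_iff, ← Nat.cast_two, ZMod.natCast_dvd_natCast_iff hd]
  exact Nat.not_dvd_of_pos_of_lt two_pos h2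

/-- Indexes both a maximum clique and the colours of `permGraphN (DihedralGroup n)`. -/
def labels (n : ℕ) : Finset (ℕ × Bool) :=
  {d ∈ n.divisors | 2 < d} ×ˢ {false} ∪ {d ∈ n.divisors | 2 < d ∧ 2 ∣ d} ×ˢ {true}

theorem mem_labels [NeZero n] {p : ℕ × Bool} :
    p ∈ labels n ↔ p.1 ∣ n ∧ 2 < p.1 ∧ (p.2 → 2 ∣ p.1) := by
  obtain ⟨d, _ | _⟩ := p <;> simp [labels, NeZero.ne n]

theorem card_labels :
    #(labels n) = #{d ∈ n.divisors | 2 < d} + #{d ∈ n.divisors | 2 < d ∧ 2 ∣ d} := by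
  rw [labels, card_union_of_disjoint (by simp [disjoint_left]), card_product, card_product,
    card_singleton, card_singleton, mul_one, mul_one]

def labelShift (p : ℕ × Bool) : ZMod n := if p.2 then ((p.1 / 2 : ℕ) : ZMod n) else 0

theorem natCast_dvd_two_mul_labelShift {p : ℕ × Bool} (hp : p.2 → 2 ∣ p.1) :
    (p.1 : ZMod n) ∣ 2 * labelShift p := by
  obtain ⟨d, _ | _⟩ := p
  · simp [labelShift]
  · obtain ⟨c, rfl⟩ := hp rfl
    simp [labelShift]

theorem injOn_rsSubgroup_labelShift [NeZero n] :
    Set.InjOn (fun p : ℕ × Bool => rsSubgroup (n := n) p.1 (labelShift p)) (labels n) := by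
  rintro ⟨d, b⟩ hp ⟨e, c⟩ hq h
  obtain ⟨hd, hd2, -⟩ := mem_labels.mp hp
  obtain ⟨he, -, -⟩ := mem_labels.mp hq
  obtain ⟨rfl, hdvd⟩ := (rsSubgroup_eq_iff hd he).mp h
  have : ¬ (d : ZMod n) ∣ ((d / 2 : ℕ) : ZMod n) := by
    rw [ZMod.natCast_dvd_natCast_iff hd]
    exact Nat.not_dvd_of_pos_of_lt (by omega) (by omega)
  cases b <;> cases c <;> simp_all [labelShift]

theorem rsSubgroup_labelShift_mul_comm {p q : ℕ × Bool} (hp : p.2 → 2 ∣ p.1)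
    (hq : q.2 → 2 ∣ q.1) :
    (rsSubgroup (n := n) p.1 (labelShift p) : Set (DihedralGroup n)) *
        (rsSubgroup (n := n) q.1 (labelShift q) : Set (DihedralGroup n)) =
      (rsSubgroup (n := n) q.1 (labelShift q) : Set (DihedralGroup n)) *
        (rsSubgroup (n := n) p.1 (labelShift p) : Set (DihedralGroup n)) := by
  refine rsSubgroup_mul_comm_iff.mpr ?_
  rw [mul_sub]
  exact dvd_sub ((Nat.cast_dvd_cast (Nat.gcd_dvd_left _ _)).trans
      (natCast_dvd_two_mul_labelShift hp))
    ((Nat.cast_dvd_cast (Nat.gcd_dvd_right _ _)).trans (natCast_dvd_two_mul_labelShift hq))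

/-- For even `d` this separates `i` from `i + d / 2` modulo `d`. -/
def parityBit (d : ℕ) (i : ZMod n) : Bool := decide (2 ∣ d ∧ Odd (i.val / (d / 2)))

theorem parityBit_ne [NeZero n] (hd : d ∣ n) (h2 : (d : ZMod n) ∣ 2 * (i - j))
    (h1 : ¬ (d : ZMod n) ∣ i - j) : parityBit d i ≠ parityBit d j := by
  have hij : i - j = (((i.val : ℤ) - j.val : ℤ) : ZMod n) := by simp
  rw [hij, ← Int.cast_ofNat, ← Int.cast_mul, ZMod.natCast_dvd_intCast_iff hd] at h2
  rw [hij, ZMod.natCast_dvd_intCast_iff hd] at h1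
  obtain ⟨c, rfl⟩ : 2 ∣ d := by
    by_contra hodd
    exact h1 (((Nat.isCoprime_iff_coprime.mpr
      (Nat.odd_iff.mpr (by omega)).coprime_two_right)).dvd_of_dvd_mul_left h2)
  push_cast at h1 h2
  obtain ⟨m, hm⟩ := (mul_dvd_mul_iff_left two_ne_zero).mp h2
  have hm_odd : Odd m := by
    refine Int.not_even_iff_odd.mp fun ⟨k, hk⟩ => h1 ⟨k, ?_⟩
    rw [hm, hk]; ring
  have hc : (c : ℤ) ≠ 0 := by
    rintro hc
    exact h1 ⟨0, by rw [hm, hc]; ring⟩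
  have hdiv : (i.val : ℤ) / c = (j.val : ℤ) / c + m := by
    rw [show (i.val : ℤ) = j.val + c * m by linarith, Int.add_mul_ediv_left _ _ hc]
  simp only [parityBit, Nat.mul_div_cancel_left c two_pos, dvd_mul_right, true_and, ne_eq,
    decide_eq_decide, ← Int.odd_coe_nat, Int.natCast_div, hdiv, Int.odd_add,
    ← Int.not_odd_iff_even]
  tauto

theorem colorable_permGraphN [NeZero n] :
    (permGraphN (DihedralGroup n)).Colorable #(labels n) := by
  choose D I hDn hD2 hDI using fun v : {H : Subgroup (DihedralGroup n) // ¬ H.Normal} =>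
    exists_eq_rsSubgroup_of_not_normal v.2
  have hmem : ∀ v, (D v, parityBit (D v) (I v)) ∈ labels n := fun v =>
    mem_labels.mpr ⟨hDn v, hD2 v, fun h => by
      simp only [parityBit, decide_eq_true_eq] at h
      exact h.1⟩
  refine Fintype.card_coe (labels n) ▸
    (SimpleGraph.Coloring.mk (fun v => ⟨_, hmem v⟩) ?_).colorable
  rintro u v ⟨hne, hperm⟩ heq
  obtain ⟨hD, hbit⟩ : D u = D v ∧ _ := by
    simpa only [Subtype.mk.injEq, Prod.mk.injEq] using heq
  rw [hDI u, hDI v, hD, rsSubgroup_mul_comm_iff, Nat.gcd_self] at hperm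
  refine parityBit_ne (hDn v) hperm (fun h => hne (Subtype.ext ?_)) (hD ▸ hbit)
  rw [hDI u, hDI v, hD, (rsSubgroup_eq_iff (hDn v) (hDn v)).mpr ⟨rfl, h⟩]

theorem permGraphN_cliqueNum_eq_and_chromaticNumber_eq [NeZero n] :
    (permGraphN (DihedralGroup n)).cliqueNum = #(labels n) ∧
      (permGraphN (DihedralGroup n)).chromaticNumber = #(labels n) := by
  have := SimpleGraph.cliqueNum_eq_and_chromaticNumber_eq (G := permGraphN (DihedralGroup n))
    (fun p : labels n => ⟨rsSubgroup p.1.1 (labelShift p.1),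
      rsSubgroup_not_normal (mem_labels.mp p.2).1 (mem_labels.mp p.2).2.1⟩)
    (fun p q hpq => ⟨fun h => hpq (Subtype.ext (injOn_rsSubgroup_labelShift p.2 q.2
        (congrArg Subtype.val h))),
      rsSubgroup_labelShift_mul_comm (mem_labels.mp p.2).2.2 (mem_labels.mp q.2).2.2⟩)
    (Fintype.card_coe (labels n) ▸ colorable_permGraphN)
  simpa using this

theorem card_labels_of_odd (hn : Odd n) : #(labels n) = #n.divisors - 1 := by
  have h2n : ¬ 2 ∣ n := Nat.not_even_iff_odd.mpr hn ∘ even_iff_two_dvd.mpr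
  have hodd : {d ∈ n.divisors | 2 < d} = n.divisors.erase 1 := by
    ext d
    simp only [mem_filter, mem_erase, Nat.mem_divisors]
    refine ⟨fun ⟨hd, h2⟩ => ⟨by omega, hd⟩, fun ⟨h1, hd, hn0⟩ => ⟨⟨hd, hn0⟩, ?_⟩⟩
    rcases (by omega : d = 0 ∨ d = 2 ∨ 2 < d) with rfl | rfl | h
    · exact absurd (zero_dvd_iff.mp hd) hn0
    · exact absurd hd h2n
    · exact h
  have heven : {d ∈ n.divisors | 2 < d ∧ 2 ∣ d} = ∅ :=
    filter_eq_empty_iff.mpr fun d hd h => h2n (h.2.trans (Nat.dvd_of_mem_divisors hd))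
  rw [card_labels, hodd, heven, card_erase_of_mem (Nat.one_mem_divisors.mpr hn.pos.ne'),
    card_empty, add_zero]

theorem card_labels_add_three (hn0 : n ≠ 0) (h2n : 2 ∣ n) :
    #(labels n) + 3 = #n.divisors + #{d ∈ n.divisors | 2 ∣ d} := by
  have hall : {d ∈ n.divisors | 2 < d} = (n.divisors.erase 1).erase 2 := by
    ext d
    simp only [mem_filter, mem_erase, Nat.mem_divisors]
    refine ⟨fun ⟨hd, h2⟩ => ⟨by omega, by omega, hd⟩, fun ⟨h2, h1, hd, hn0⟩ => ⟨⟨hd, hn0⟩, ?_⟩⟩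
    rcases (by omega : d = 0 ∨ 2 < d) with rfl | h
    · exact absurd (zero_dvd_iff.mp hd) hn0
    · exact h
  have heven : {d ∈ n.divisors | 2 < d ∧ 2 ∣ d} = {d ∈ n.divisors | 2 ∣ d}.erase 2 := by
    ext d
    simp only [mem_filter, mem_erase, Nat.mem_divisors]
    refine ⟨fun ⟨hd, h2, h2d⟩ => ⟨by omega, hd, h2d⟩,
      fun ⟨h2, ⟨hd, hn0⟩, h2d⟩ => ⟨⟨hd, hn0⟩, ?_, h2d⟩⟩
    rcases (by omega : d = 0 ∨ d = 1 ∨ 2 < d) with rfl | rfl | h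
    · exact absurd (zero_dvd_iff.mp hd) hn0
    · omega
    · exact h
  have h1 : 1 ∈ n.divisors := Nat.one_mem_divisors.mpr hn0
  have h2 : 2 ∈ n.divisors := Nat.mem_divisors.mpr ⟨h2n, hn0⟩
  have h2even : 2 ∈ {d ∈ n.divisors | 2 ∣ d} := mem_filter.mpr ⟨h2, dvd_rfl⟩
  rw [card_labels, hall, heven, card_erase_of_mem (mem_erase.mpr ⟨by omega, h2⟩),
    card_erase_of_mem h1, card_erase_of_mem h2even]
  have := one_lt_card.mpr ⟨1, h1, 2, h2, by omega⟩
  have := card_pos.mpr ⟨2, h2even⟩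
  omega

theorem card_labels_two_pow_mul {α m : ℕ} (hα : 1 ≤ α) (hm : Odd m) :
    #(labels (2 ^ α * m)) = (2 * α + 1) * #m.divisors - 3 := by
  have hsplit := card_filter_add_card_filter_not (s := (2 ^ α * m).divisors) (2 ∣ ·)
  have h3 := card_labels_add_three (by positivity [hm.pos])
    ((dvd_pow_self 2 (by omega : α ≠ 0)).mul_right m)
  rw [Nat.filter_not_two_dvd_divisors_two_pow_mul hm, Nat.card_divisors_two_pow_mul hm] at hsplit
  rw [Nat.card_divisors_two_pow_mul hm] at h3
  have := Nat.mul_pos (by omega : 0 < α) (card_pos.mpr ⟨1, Nat.one_mem_divisors.mpr hm.pos.ne'⟩)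
  rw [show (2 * α + 1) * #m.divisors = 2 * (α * #m.divisors) + #m.divisors by ring]
  rw [show (α + 1) * #m.divisors = α * #m.divisors + #m.divisors by ring] at hsplit h3
  omega

end DihedralGroup

theorem stmt_3_general (n : ℕ) :
    (Odd n →
      (permGraphN (DihedralGroup n)).cliqueNum = n.divisors.card - 1 ∧
      (permGraphN (DihedralGroup n)).chromaticNumber =
        ((n.divisors.card - 1 : ℕ) : ℕ∞)) ∧
    (∀ α n' : ℕ, Odd n' → 1 ≤ α → n = 2 ^ α * n' →
      (permGraphN (DihedralGroup n)).cliqueNum =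
        (2 * α + 1) * n'.divisors.card - 3 ∧
      (permGraphN (DihedralGroup n)).chromaticNumber =
        (((2 * α + 1) * n'.divisors.card - 3 : ℕ) : ℕ∞)) := by
  refine ⟨fun hodd => ?_, fun α n' hodd hα hn => ?_⟩
  · have : NeZero n := ⟨hodd.pos.ne'⟩
    rw [← DihedralGroup.card_labels_of_odd hodd]
    exact DihedralGroup.permGraphN_cliqueNum_eq_and_chromaticNumber_eq
  · subst hn
    have : NeZero (2 ^ α * n') := ⟨by positivity [hodd.pos]⟩
    rw [← DihedralGroup.card_labels_two_pow_mul hα hodd]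
    exact DihedralGroup.permGraphN_cliqueNum_eq_and_chromaticNumber_eq

/-- clique number and chromatic number of `Γ_N(D_n)`: both equal
`τ(n) - 1` when `n` is odd, and both equal `(2α+1)τ(n') - 3` when
`n = 2^α n'` with `n'` odd, `α ≥ 1`. In particular `Γ_N(D_n)` is weakly
perfect. -/
theorem stmt_3 (n : ℕ) (hn : 3 ≤ n) :
    (Odd n →
      (permGraphN (DihedralGroup n)).cliqueNum = n.divisors.card - 1 ∧
      (permGraphN (DihedralGroup n)).chromaticNumber =
        ((n.divisors.card - 1 : ℕ) : ℕ∞)) ∧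
    (∀ α n' : ℕ, Odd n' → 1 ≤ α → n = 2 ^ α * n' →
      (permGraphN (DihedralGroup n)).cliqueNum =
        (2 * α + 1) * n'.divisors.card - 3 ∧
      (permGraphN (DihedralGroup n)).chromaticNumber =
        (((2 * α + 1) * n'.divisors.card - 3 : ℕ) : ℕ∞)) :=
  stmt_3_general n
end

section
/- Let n ≥ 3 be an odd integer. Then twice the number of edges of the permutability graph of non-normal subgroups Γ_N(D_n) of the dihedral group D_n equals g(n) − 3σ(n) + 2, where g(n) = Σ_{r|n} Σ_{s|n} n/gcd(r,s) (the double sum running over all positive divisors r, s of n). -/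
open scoped Pointwise

namespace Stmt4

variable {n : ℕ}

/-- The additive subgroup of `ZMod n` of elements killed by `d`. -/
def asub (n d : ℕ) : AddSubgroup (ZMod n) where
  carrier := {x | d • x = 0}
  zero_mem' := by simp
  add_mem' := by intro a b ha hb; simp only [Set.mem_setOf_eq, smul_add] at *; rw [ha, hb, add_zero]
  neg_mem' := by intro a ha; simp only [Set.mem_setOf_eq, smul_neg] at *; rw [ha, neg_zero]

lemma mem_asub {d : ℕ} {x : ZMod n} : x ∈ asub n d ↔ d • x = 0 := Iff.rfl

lemma asub_mono {d e : ℕ} (h : d ∣ e) : asub n d ≤ asub n e := by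
  intro x hx
  obtain ⟨c, rfl⟩ := h
  rw [mem_asub] at *
  rw [mul_comm, mul_smul, hx, smul_zero]

lemma asub_eq_zmultiples (hn : n ≠ 0) {d : ℕ} (hd : d ∣ n) (hd0 : d ≠ 0) :
    asub n d = AddSubgroup.zmultiples ((n / d : ℕ) : ZMod n) := by
  haveI : NeZero n := ⟨hn⟩
  apply le_antisymm
  · intro x hx
    rw [mem_asub] at hx
    have hxeq : ((x.val : ℕ) : ZMod n) = x := ZMod.natCast_rightInverse x
    have : ((d * x.val : ℕ) : ZMod n) = 0 := by
      push_cast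
      rw [hxeq, ← nsmul_eq_mul, hx]
    rw [ZMod.natCast_eq_zero_iff] at this
    have h2 : n / d ∣ x.val := by
      have h3 : d * (n / d) ∣ d * x.val := by rwa [Nat.mul_div_cancel' hd]
      exact (mul_dvd_mul_iff_left hd0).mp h3
    obtain ⟨m, hm⟩ := h2
    rw [AddSubgroup.mem_zmultiples_iff]
    refine ⟨m, ?_⟩
    rw [← hxeq, hm]
    rw [zsmul_eq_mul]
    push_cast
    ring
  · rw [AddSubgroup.zmultiples_le]
    rw [mem_asub]
    have : (d • ((n / d : ℕ) : ZMod n)) = ((d * (n / d) : ℕ) : ZMod n) := by push_cast; ring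
    rw [this, Nat.mul_div_cancel' hd]
    simp

lemma card_asub (hn : n ≠ 0) {d : ℕ} (hd : d ∣ n) (hd0 : d ≠ 0) :
    Nat.card (asub n d) = d := by
  rw [asub_eq_zmultiples hn hd hd0, Nat.card_zmultiples, ZMod.addOrderOf_coe _ hn,
    Nat.gcd_eq_right (Nat.div_dvd_of_dvd hd), Nat.div_div_self hd hn]

lemma eq_asub (hn : n ≠ 0) (A : AddSubgroup (ZMod n)) : A = asub n (Nat.card A) := by
  haveI : NeZero n := ⟨hn⟩
  have hdvd : Nat.card A ∣ n := by
    simpa [Nat.card_zmod] using AddSubgroup.card_addSubgroup_dvd_card A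
  have hd0 : Nat.card A ≠ 0 := Nat.card_pos.ne'
  refine AddSubgroup.eq_of_le_of_card_ge ?_ ?_
  · intro x hx
    rw [mem_asub]
    have : (Nat.card A) • (⟨x, hx⟩ : A) = 0 := card_nsmul_eq_zero'
    have h2 := congrArg (Subtype.val) this
    simp only [AddSubmonoidClass.coe_nsmul, AddSubgroup.coe_zero] at h2
    exact h2
  · rw [card_asub hn hdvd hd0]

lemma card_dvd_n (hn : n ≠ 0) (A : AddSubgroup (ZMod n)) : Nat.card A ∣ n := by
  haveI : NeZero n := ⟨hn⟩
  simpa [Nat.card_zmod] using AddSubgroup.card_addSubgroup_dvd_card A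

lemma asub_inj (hn : n ≠ 0) {d e : ℕ} (hd : d ∣ n) (he : e ∣ n) (hd0 : d ≠ 0) (he0 : e ≠ 0)
    (h : asub n d = asub n e) : d = e := by
  have := card_asub hn hd hd0
  rw [h, card_asub hn he he0] at this
  exact this.symm

lemma card_asub_eq_self (hn : n ≠ 0) {d : ℕ} (hd : d ∣ n) (hd0 : d ≠ 0) :
    Nat.card (asub n d) = d := card_asub hn hd hd0

lemma sup_asub (hn : n ≠ 0) {d e : ℕ} (hd : d ∣ n) (he : e ∣ n) (hd0 : d ≠ 0) (he0 : e ≠ 0) :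
    asub n d ⊔ asub n e = asub n (Nat.lcm d e) := by
  haveI : NeZero n := ⟨hn⟩
  have hl : Nat.lcm d e ∣ n := Nat.lcm_dvd hd he
  have hl0 : Nat.lcm d e ≠ 0 := Nat.lcm_ne_zero hd0 he0
  apply le_antisymm
  · exact sup_le (asub_mono (Nat.dvd_lcm_left d e)) (asub_mono (Nat.dvd_lcm_right d e))
  · set C := asub n d ⊔ asub n e with hC
    have hCeq : C = asub n (Nat.card C) := eq_asub hn C
    have hdC : d ∣ Nat.card C := by
      have : Nat.card (asub n d) ∣ Nat.card C := AddSubgroup.card_dvd_of_le le_sup_left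
      rwa [card_asub hn hd hd0] at this
    have heC : e ∣ Nat.card C := by
      have : Nat.card (asub n e) ∣ Nat.card C := AddSubgroup.card_dvd_of_le le_sup_right
      rwa [card_asub hn he he0] at this
    have : Nat.lcm d e ∣ Nat.card C := Nat.lcm_dvd hdC heC
    calc asub n (Nat.lcm d e) ≤ asub n (Nat.card C) := asub_mono this
    _ = C := hCeq.symm

end Stmt4
section W2
namespace Stmt4
open DihedralGroup
variable {n : ℕ}

/-- The subgroup of `DihedralGroup n` with rotation part `A` and reflections offset `i`. -/
def dsub (A : AddSubgroup (ZMod n)) (i : ZMod n) : Subgroup (DihedralGroup n) where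
  carrier := {x | (∃ a ∈ A, x = r a) ∨ (∃ a ∈ A, x = sr (a + i))}
  one_mem' := Or.inl ⟨0, A.zero_mem, one_def⟩
  mul_mem' := by
    rintro x y (⟨a, ha, rfl⟩ | ⟨a, ha, rfl⟩) (⟨b, hb, rfl⟩ | ⟨b, hb, rfl⟩)
    · exact Or.inl ⟨a + b, A.add_mem ha hb, by rw [r_mul_r]⟩
    · exact Or.inr ⟨b - a, A.sub_mem hb ha, by rw [r_mul_sr]; congr 1; ring⟩
    · exact Or.inr ⟨a + b, A.add_mem ha hb, by rw [sr_mul_r]; congr 1; ring⟩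
    · exact Or.inl ⟨b - a, A.sub_mem hb ha, by rw [sr_mul_sr]; congr 1; ring⟩
  inv_mem' := by
    rintro x (⟨a, ha, rfl⟩ | ⟨a, ha, rfl⟩)
    · exact Or.inl ⟨-a, A.neg_mem ha, rfl⟩
    · exact Or.inr ⟨a, ha, rfl⟩

lemma r_mem_dsub {A : AddSubgroup (ZMod n)} {i a : ZMod n} : r a ∈ dsub A i ↔ a ∈ A := by
  constructor
  · rintro (⟨b, hb, h⟩ | ⟨b, hb, h⟩)
    · obtain rfl : a = b := by simpa using h
      exact hb
    · simp at h
  · exact fun ha => Or.inl ⟨a, ha, rfl⟩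

lemma sr_mem_dsub {A : AddSubgroup (ZMod n)} {i x : ZMod n} : sr x ∈ dsub A i ↔ x - i ∈ A := by
  constructor
  · rintro (⟨b, hb, h⟩ | ⟨b, hb, h⟩)
    · simp at h
    · obtain rfl : x = b + i := by simpa using h
      simpa using hb
  · intro h
    exact Or.inr ⟨x - i, h, by rw [sub_add_cancel]⟩

lemma dsub_top (i : ZMod n) : dsub (⊤ : AddSubgroup (ZMod n)) i = ⊤ := by
  rw [Subgroup.eq_top_iff']
  rintro (a | a)
  · exact r_mem_dsub.mpr trivial
  · exact sr_mem_dsub.mpr trivial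

lemma half_spec (hodd : Odd n) (z : ZMod n) :
    ((n + 1) / 2 : ℕ) • z + ((n + 1) / 2 : ℕ) • z = z := by
  obtain ⟨k, hk⟩ := hodd
  have h1 : (n + 1) / 2 = k + 1 := by omega
  have hn0 : (n : ℕ) • z = 0 := by rw [nsmul_eq_mul, ZMod.natCast_self, zero_mul]
  rw [h1, ← add_nsmul]
  have h2 : (k + 1) + (k + 1) = n + 1 := by omega
  rw [h2, succ_nsmul, hn0, zero_add]

lemma two_smul_mem (hodd : Odd n) {C : AddSubgroup (ZMod n)} {x : ZMod n}
    (h : x + x ∈ C) : x ∈ C := by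
  have := half_spec hodd x
  have h2 : ((n + 1) / 2 : ℕ) • (x + x) = x := by
    rw [smul_add]; exact this
  rw [← h2]
  exact C.nsmul_mem h _

lemma exists_double (hodd : Odd n) (z : ZMod n) : ∃ y : ZMod n, y + y = z :=
  ⟨((n + 1) / 2 : ℕ) • z, half_spec hodd z⟩

lemma not_normal_dsub (hodd : Odd n) {A : AddSubgroup (ZMod n)} (hA : A ≠ ⊤) (i : ZMod n) :
    ¬ (dsub A i).Normal := by
  intro hN
  obtain ⟨z, hz⟩ : ∃ z, z ∉ A := by
    by_contra h
    push_neg at h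
    exact hA (AddSubgroup.eq_top_iff' A |>.mpr h)
  obtain ⟨y, hy⟩ := exists_double hodd z
  have h1 : sr i ∈ dsub A i := sr_mem_dsub.mpr (by simpa using A.zero_mem)
  have h2 := hN.conj_mem _ h1 (r y)
  have h3 : r y * sr i * (r y)⁻¹ = sr (i - (y + y)) := by
    have : (r y)⁻¹ = r (-y) := rfl
    rw [this, r_mul_sr, sr_mul_r]
    congr 1
    ring
  rw [h3, sr_mem_dsub] at h2
  have h4 : i - (y + y) - i = -(y + y) := by ring
  rw [h4] at h2
  exact hz (hy ▸ A.neg_mem_iff.mp h2)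

lemma normal_of_forall_r {H : Subgroup (DihedralGroup n)} (h : ∀ x : ZMod n, sr x ∉ H) :
    H.Normal := by
  constructor
  intro g hg x
  obtain (a | a) := g
  · obtain (b | b) := x
    · have : r b * r a * (r b)⁻¹ = r a := by
        have : (r b)⁻¹ = r (-b) := rfl
        rw [this, r_mul_r, r_mul_r]
        congr 1
        ring
      rwa [this]
    · have : sr b * r a * (sr b)⁻¹ = r (-a) := by
        have : (sr b)⁻¹ = sr b := rfl
        rw [this, sr_mul_r, sr_mul_sr]
        congr 1
        ring
      rw [this]
      exact H.inv_mem hg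
  · exact absurd hg (h a)

/-- The rotation part of a subgroup. -/
def toA (H : Subgroup (DihedralGroup n)) : AddSubgroup (ZMod n) where
  carrier := {a | r a ∈ H}
  zero_mem' := by
    rw [Set.mem_setOf_eq, ← one_def]
    exact H.one_mem
  add_mem' := by
    intro a b ha hb
    have := H.mul_mem ha hb
    rwa [r_mul_r] at this
  neg_mem' := by
    intro a ha
    exact H.inv_mem ha

lemma eq_dsub_of_sr_mem {H : Subgroup (DihedralGroup n)} {i : ZMod n} (hi : sr i ∈ H) :
    H = dsub (toA H) i := by
  ext x
  obtain (a | x) := x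
  · rw [r_mem_dsub]
    exact Iff.rfl
  · rw [sr_mem_dsub]
    constructor
    · intro hx
      have h2 := H.mul_mem hi hx
      rwa [sr_mul_sr] at h2
    · intro hx
      have h2 := H.mul_mem hi (hx : r (x - i) ∈ H)
      rwa [sr_mul_r, add_sub_cancel] at h2

lemma classify {H : Subgroup (DihedralGroup n)} (hH : ¬ H.Normal) :
    ∃ (A : AddSubgroup (ZMod n)) (i : ZMod n), A ≠ ⊤ ∧ H = dsub A i := by
  obtain ⟨i, hi⟩ : ∃ i, sr i ∈ H := by
    by_contra h
    push_neg at h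
    exact hH (normal_of_forall_r h)
  refine ⟨toA H, i, ?_, eq_dsub_of_sr_mem hi⟩
  intro htop
  rw [eq_dsub_of_sr_mem hi, htop, dsub_top] at hH
  exact hH inferInstance

lemma dsub_inj {A B : AddSubgroup (ZMod n)} {i j : ZMod n} (h : dsub A i = dsub B j) :
    A = B ∧ j - i ∈ A := by
  constructor
  · ext a
    rw [← r_mem_dsub (i := i), h, r_mem_dsub]
  · have : sr j ∈ dsub B j := sr_mem_dsub.mpr (by simpa using B.zero_mem)
    rw [← h, sr_mem_dsub] at this
    exact this

lemma dsub_congr {C : AddSubgroup (ZMod n)} {i j : ZMod n} (h : j - i ∈ C) :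
    dsub C i = dsub C j := by
  ext x
  obtain (a | x) := x
  · rw [r_mem_dsub, r_mem_dsub]
  · rw [sr_mem_dsub, sr_mem_dsub]
    constructor
    · intro hx
      have := C.sub_mem hx h
      have he : x - i - (j - i) = x - j := by ring
      rwa [he] at this
    · intro hx
      have := C.add_mem hx h
      have he : x - j + (j - i) = x - i := by ring
      rwa [he] at this

end Stmt4
end W2
section W3
namespace Stmt4
open DihedralGroup
variable {n : ℕ}

lemma coe_mul_dsub {A B : AddSubgroup (ZMod n)} {i j : ZMod n} (h : j - i ∈ A ⊔ B) :
    (dsub A i : Set (DihedralGroup n)) * (dsub B j : Set (DihedralGroup n)) =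
      (dsub (A ⊔ B) i : Set (DihedralGroup n)) := by
  ext x
  constructor
  · rintro ⟨u, hu, v, hv, rfl⟩
    rw [SetLike.mem_coe] at hu hv ⊢
    obtain (⟨a, ha, rfl⟩ | ⟨a, ha, rfl⟩) := hu <;> obtain (⟨b, hb, rfl⟩ | ⟨b, hb, rfl⟩) := hv <;>
      beta_reduce
    · rw [r_mul_r, r_mem_dsub]
      exact add_mem (le_sup_left (a := A) ha) (le_sup_right (b := B) hb)
    · rw [r_mul_sr, sr_mem_dsub]
      have he : b + j - a - i = (j - i) + b + (-a) := by ring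
      rw [he]
      exact add_mem (add_mem h (le_sup_right (b := B) hb))
        (neg_mem (le_sup_left (a := A) ha))
    · rw [sr_mul_r, sr_mem_dsub]
      have he : a + i + b - i = a + b := by ring
      rw [he]
      exact add_mem (le_sup_left (a := A) ha) (le_sup_right (b := B) hb)
    · rw [sr_mul_sr, r_mem_dsub]
      have he : b + j - (a + i) = (j - i) + b + (-a) := by ring
      rw [he]
      exact add_mem (add_mem h (le_sup_right (b := B) hb))
        (neg_mem (le_sup_left (a := A) ha))
  · intro hx
    rw [SetLike.mem_coe] at hx
    obtain (⟨c, hc, rfl⟩ | ⟨c, hc, rfl⟩) := hx <;>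
      obtain ⟨a, ha, b, hb, rfl⟩ := AddSubgroup.mem_sup.mp hc
    · refine ⟨r a, Or.inl ⟨a, ha, rfl⟩, r b, Or.inl ⟨b, hb, rfl⟩, ?_⟩
      beta_reduce
      rw [r_mul_r]
    · refine ⟨sr (a + i), Or.inr ⟨a, ha, rfl⟩, r b, Or.inl ⟨b, hb, rfl⟩, ?_⟩
      beta_reduce
      rw [sr_mul_r]
      congr 1
      ring

lemma perm_iff (hodd : Odd n) {A B : AddSubgroup (ZMod n)} {i j : ZMod n} :
    (dsub A i : Set (DihedralGroup n)) * (dsub B j : Set (DihedralGroup n)) =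
      (dsub B j : Set (DihedralGroup n)) * (dsub A i : Set (DihedralGroup n)) ↔
    j - i ∈ A ⊔ B := by
  constructor
  · intro h
    have h1 : sr i ∈ (dsub A i : Set (DihedralGroup n)) :=
      SetLike.mem_coe.mpr (sr_mem_dsub.mpr (by simpa using A.zero_mem))
    have h2 : sr j ∈ (dsub B j : Set (DihedralGroup n)) :=
      SetLike.mem_coe.mpr (sr_mem_dsub.mpr (by simpa using B.zero_mem))
    have hmem := Set.mul_mem_mul h1 h2
    rw [h, sr_mul_sr, Set.mem_mul] at hmem
    obtain ⟨u, hu, v, hv, huv⟩ := hmem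
    rw [SetLike.mem_coe] at hu hv
    obtain (b | b) := u <;> obtain (a | a) := v
    · rw [r_mul_r] at huv
      obtain he : b + a = j - i := by simpa using huv
      rw [← he]
      exact add_mem (le_sup_right (a := A) (r_mem_dsub.mp hu))
        (le_sup_left (b := B) (r_mem_dsub.mp hv))
    · rw [r_mul_sr] at huv
      simp at huv
    · rw [sr_mul_r] at huv
      simp at huv
    · rw [sr_mul_sr] at huv
      obtain he : a - b = j - i := by simpa using huv
      have hb : b - j ∈ B := sr_mem_dsub.mp hu
      have ha : a - i ∈ A := sr_mem_dsub.mp hv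
      apply two_smul_mem hodd
      have he2 : (j - i) + (j - i) = (a - i) + (-(b - j)) := by linear_combination -he
      rw [he2]
      exact add_mem (le_sup_left (b := B) ha) (neg_mem (le_sup_right (a := A) hb))
  · intro h
    have h' : i - j ∈ B ⊔ A := by
      rw [sup_comm]
      have : i - j = -(j - i) := by ring
      rw [this]
      exact neg_mem h
    rw [coe_mul_dsub h, coe_mul_dsub h', sup_comm B A]
    exact congrArg _ (dsub_congr h)

end Stmt4
end W3
section W4
namespace Stmt4
open DihedralGroup
variable {n : ℕ}

/-- `dsub` descended to the quotient. -/
def dsubQ (A : AddSubgroup (ZMod n)) (q : ZMod n ⧸ A) : Subgroup (DihedralGroup n) :=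
  Quotient.liftOn' q (dsub A) (fun i j hij => dsub_congr (by
    have := QuotientAddGroup.leftRel_apply.mp hij
    rwa [neg_add_eq_sub] at this))

lemma dsubQ_mk (A : AddSubgroup (ZMod n)) (i : ZMod n) :
    dsubQ A (QuotientAddGroup.mk i) = dsub A i := rfl

/-- Index type for the non-normal subgroups. -/
def T (n : ℕ) := Σ A : {A : AddSubgroup (ZMod n) // A ≠ ⊤}, ZMod n ⧸ A.1

def phiFun (x : T n) : Subgroup (DihedralGroup n) := dsubQ x.1.1 x.2

lemma phiFun_not_normal (hodd : Odd n) (x : T n) : ¬ (phiFun x).Normal := by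
  obtain ⟨⟨A, hA⟩, q⟩ := x
  induction q using QuotientAddGroup.induction_on with
  | H i => exact not_normal_dsub hodd hA i

lemma phiFun_injective : Function.Injective (phiFun (n := n)) := by
  rintro ⟨⟨A, hA⟩, q⟩ ⟨⟨B, hB⟩, p⟩ h
  induction q using QuotientAddGroup.induction_on with
  | H i =>
  induction p using QuotientAddGroup.induction_on with
  | H j =>
  change dsub A i = dsub B j at h
  obtain ⟨hAB, hji⟩ := dsub_inj h
  subst hAB
  have hq : (QuotientAddGroup.mk i : ZMod n ⧸ A) = QuotientAddGroup.mk j := by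
    rw [QuotientAddGroup.eq, neg_add_eq_sub]
    exact hji
  exact Sigma.ext rfl (heq_of_eq hq)

noncomputable def phiEquiv (hodd : Odd n) : T n ≃ {H : Subgroup (DihedralGroup n) // ¬ H.Normal} :=
  Equiv.ofBijective (fun x => ⟨phiFun x, phiFun_not_normal hodd x⟩)
    ⟨fun x y h => phiFun_injective (congrArg Subtype.val h), by
      rintro ⟨H, hH⟩
      obtain ⟨A, i, hA, rfl⟩ := classify hH
      exact ⟨⟨⟨A, hA⟩, QuotientAddGroup.mk i⟩, rfl⟩⟩

/-- The canonical map `ZMod n ⧸ A → ZMod n ⧸ (A ⊔ B)`. -/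
def pushL (A B : AddSubgroup (ZMod n)) : ZMod n ⧸ A →+ ZMod n ⧸ (A ⊔ B) :=
  QuotientAddGroup.map A (A ⊔ B) (AddMonoidHom.id _) (fun x hx => le_sup_left (a := A) hx)

def pushR (A B : AddSubgroup (ZMod n)) : ZMod n ⧸ B →+ ZMod n ⧸ (A ⊔ B) :=
  QuotientAddGroup.map B (A ⊔ B) (AddMonoidHom.id _) (fun x hx => le_sup_right (b := B) hx)

lemma pushL_mk (A B : AddSubgroup (ZMod n)) (i : ZMod n) :
    pushL A B (QuotientAddGroup.mk i) = QuotientAddGroup.mk i := rfl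

lemma pushR_mk (A B : AddSubgroup (ZMod n)) (i : ZMod n) :
    pushR A B (QuotientAddGroup.mk i) = QuotientAddGroup.mk i := rfl

lemma pushL_surjective (A B : AddSubgroup (ZMod n)) : Function.Surjective (pushL A B) := by
  intro q
  induction q using QuotientAddGroup.induction_on with
  | H i => exact ⟨QuotientAddGroup.mk i, rfl⟩

lemma pushR_surjective (A B : AddSubgroup (ZMod n)) : Function.Surjective (pushR A B) := by
  intro q
  induction q using QuotientAddGroup.induction_on with
  | H i => exact ⟨QuotientAddGroup.mk i, rfl⟩

/-- The adjacency condition on the index type (without the `≠`). -/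
def cond (x y : T n) : Prop :=
  pushL x.1.1 y.1.1 x.2 = pushR x.1.1 y.1.1 y.2

lemma cond_mk {A B : {A : AddSubgroup (ZMod n) // A ≠ ⊤}} {i j : ZMod n} :
    cond (⟨A, QuotientAddGroup.mk i⟩ : T n) ⟨B, QuotientAddGroup.mk j⟩ ↔ j - i ∈ A.1 ⊔ B.1 := by
  show pushL A.1 B.1 (QuotientAddGroup.mk i) = pushR A.1 B.1 (QuotientAddGroup.mk j) ↔ _
  rw [pushL_mk, pushR_mk, QuotientAddGroup.eq, neg_add_eq_sub]

lemma cond_refl (x : T n) : cond x x := by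
  obtain ⟨A, q⟩ := x
  induction q using QuotientAddGroup.induction_on with
  | H i =>
    show pushL A.1 A.1 (QuotientAddGroup.mk i) = pushR A.1 A.1 (QuotientAddGroup.mk i)
    rw [pushL_mk, pushR_mk]

lemma adj_phiEquiv (hodd : Odd n) (x y : T n) :
    (permGraphN (DihedralGroup n)).Adj (phiEquiv hodd x) (phiEquiv hodd y) ↔
      x ≠ y ∧ cond x y := by
  have hne : ((phiEquiv hodd x) ≠ (phiEquiv hodd y)) ↔ x ≠ y :=
    not_congr (Equiv.apply_eq_iff_eq _)
  obtain ⟨A, q⟩ := x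
  obtain ⟨B, p⟩ := y
  induction q using QuotientAddGroup.induction_on with
  | H i =>
  induction p using QuotientAddGroup.induction_on with
  | H j =>
  change (_ ≠ _ ∧ _) ↔ _
  constructor
  · rintro ⟨h1, h2⟩
    refine ⟨hne.mp h1, ?_⟩
    rw [cond_mk]
    have h2' := h2
    exact (perm_iff hodd).mp h2'
  · rintro ⟨h1, h2⟩
    rw [cond_mk] at h2
    exact ⟨hne.mpr h1, (perm_iff hodd).mpr h2⟩

end Stmt4
end W4
section W5
namespace Stmt4
open DihedralGroup
variable {n : ℕ}

instance [NeZero n] : Finite (AddSubgroup (ZMod n)) :=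
  Finite.of_injective (fun A => (A : Set (ZMod n))) SetLike.coe_injective

instance [NeZero n] : Finite (T n) :=
  inferInstanceAs (Finite (Σ A : {A : AddSubgroup (ZMod n) // A ≠ ⊤}, ZMod n ⧸ A.1))

/-- Twice the number of edges is the number of ordered adjacent pairs. -/
lemma two_mul_card_edgeSet {V : Type*} [Finite V] (G : SimpleGraph V) :
    2 * Nat.card G.edgeSet = Nat.card {p : V × V // G.Adj p.1 p.2} := by
  classical
  haveI : Fintype V := Fintype.ofFinite V
  haveI : DecidableRel G.Adj := Classical.decRel _
  have e : G.Dart ≃ {p : V × V // G.Adj p.1 p.2} :=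
    { toFun := fun d => ⟨d.toProd, d.adj⟩
      invFun := fun p => ⟨p.1, p.2⟩
      left_inv := fun d => rfl
      right_inv := fun p => rfl }
  rw [← Nat.card_congr e]
  rw [Nat.card_eq_fintype_card, Nat.card_eq_fintype_card,
    SimpleGraph.dart_card_eq_twice_card_edges]
  congr 1
  rw [SimpleGraph.edgeFinset, Set.toFinset_card]

lemma nat_card_sigma {ι : Type*} [Fintype ι] (f : ι → Type*) [∀ i, Finite (f i)] :
    Nat.card (Σ i, f i) = ∑ i, Nat.card (f i) := by
  haveI := fun i => Fintype.ofFinite (f i)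
  simp only [Nat.card_eq_fintype_card]
  exact Fintype.card_sigma

lemma card_fiber {G H : Type*} [AddCommGroup G] [AddCommGroup H] (f : G →+ H)
    (hf : Function.Surjective f) (t : H) :
    Nat.card {x : G // f x = t} = Nat.card f.ker := by
  obtain ⟨x0, hx0⟩ := hf t
  apply Nat.card_congr
  refine
    { toFun := fun x => ⟨x.1 - x0, by rw [AddMonoidHom.mem_ker, map_sub, x.2, hx0, sub_self]⟩
      invFun := fun k => ⟨(k : G) + x0, by rw [map_add, hx0, AddMonoidHom.mem_ker.mp k.2, zero_add]⟩
      left_inv := fun x => by ext; simp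
      right_inv := fun k => by ext; simp }

lemma card_quot (hn : n ≠ 0) (A : AddSubgroup (ZMod n)) :
    Nat.card (ZMod n ⧸ A) = n / Nat.card A := by
  haveI : NeZero n := ⟨hn⟩
  have h := AddSubgroup.card_eq_card_quotient_mul_card_addSubgroup A
  rw [Nat.card_zmod] at h
  have hA : 0 < Nat.card A := Nat.card_pos
  exact (Nat.div_eq_of_eq_mul_left hA h).symm

lemma asub_n_top (n : ℕ) : asub n n = ⊤ := by
  rw [AddSubgroup.eq_top_iff']
  intro x
  rw [mem_asub, nsmul_eq_mul, ZMod.natCast_self, zero_mul]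

lemma card_ne_n {A : AddSubgroup (ZMod n)} (hn : n ≠ 0) (hA : A ≠ ⊤) : Nat.card A ≠ n := by
  intro h
  apply hA
  rw [eq_asub hn A, h, asub_n_top]

lemma asub_ne_top (hn : n ≠ 0) {d : ℕ} (hd : d ∣ n) (hdn : d ≠ n) :
    asub n d ≠ ⊤ := by
  intro h
  apply hdn
  have h1 : (1 : ZMod n) ∈ asub n d := h ▸ trivial
  rw [mem_asub, nsmul_eq_mul, mul_one] at h1
  rw [ZMod.natCast_eq_zero_iff] at h1
  exact Nat.dvd_antisymm hd h1

lemma card_pos_AS (hn : n ≠ 0) (A : AddSubgroup (ZMod n)) : Nat.card A ≠ 0 := by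
  haveI : NeZero n := ⟨hn⟩
  exact Nat.card_pos.ne'

noncomputable instance [NeZero n] : Fintype {A : AddSubgroup (ZMod n) // A ≠ ⊤} :=
  Fintype.ofFinite _

/-- Reindexing a sum over proper subgroups of `ZMod n` as a sum over proper divisors. -/
lemma sum_AS_eq [NeZero n] {M : Type*} [AddCommMonoid M] (f : ℕ → M) :
    ∑ A : {A : AddSubgroup (ZMod n) // A ≠ ⊤}, f (Nat.card A.1) =
      ∑ d ∈ n.divisors.erase n, f d := by
  have hn : n ≠ 0 := NeZero.ne n
  refine Finset.sum_bij' (fun A _ => Nat.card A.1)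
    (fun d hd => ⟨asub n d, asub_ne_top hn (Nat.dvd_of_mem_divisors (Finset.mem_of_mem_erase hd))
      (Finset.ne_of_mem_erase hd)⟩) ?_ ?_ ?_ ?_ ?_
  · intro A _
    rw [Finset.mem_erase, Nat.mem_divisors]
    exact ⟨card_ne_n hn A.2, card_dvd_n hn A.1, hn⟩
  · intro d hd
    exact Finset.mem_univ _
  · intro A _
    apply Subtype.ext
    exact (eq_asub hn A.1).symm
  · intro d hd
    have hdvd := Nat.dvd_of_mem_divisors (Finset.mem_of_mem_erase hd)
    have hd0 : d ≠ 0 := by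
      rintro rfl
      exact hn (Nat.eq_zero_of_zero_dvd hdvd)
    exact card_asub hn hdvd hd0
  · intro A _
    rfl

end Stmt4
end W5
section W6
namespace Stmt4
open DihedralGroup
variable {n : ℕ}

lemma card_T [NeZero n] : Nat.card (T n) = ∑ d ∈ n.divisors.erase n, n / d := by
  have hn : n ≠ 0 := NeZero.ne n
  rw [show Nat.card (T n) =
      Nat.card (Σ A : {A : AddSubgroup (ZMod n) // A ≠ ⊤}, ZMod n ⧸ A.1) from rfl]
  rw [nat_card_sigma]
  rw [← sum_AS_eq (n := n) (f := fun d => n / d)]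
  exact Finset.sum_congr rfl fun A _ => card_quot hn A.1

lemma card_split [NeZero n] :
    Nat.card {x : T n × T n // cond x.1 x.2} =
      Nat.card {x : T n × T n // x.1 ≠ x.2 ∧ cond x.1 x.2} + Nat.card (T n) := by
  classical
  have e : {x : T n × T n // cond x.1 x.2} ≃
      {x : T n × T n // x.1 ≠ x.2 ∧ cond x.1 x.2} ⊕ T n :=
    { toFun := fun x => if h : x.1.1 = x.1.2 then Sum.inr x.1.1 else Sum.inl ⟨x.1, h, x.2⟩
      invFun := fun y => Sum.rec (fun z => ⟨z.1, z.2.2⟩) (fun t => ⟨(t, t), cond_refl t⟩) y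
      left_inv := by
        rintro ⟨⟨x1, x2⟩, hc⟩
        by_cases h : x1 = x2
        · subst h
          simp
        · simp only [dif_neg h]
      right_inv := by
        rintro (⟨⟨x1, x2⟩, hne, hc⟩ | t)
        · simp only [dif_neg hne]
        · simp }
  rw [Nat.card_congr e, Nat.card_sum]

lemma arith (hn : n ≠ 0) {a b : ℕ} (ha : a ∣ n) (hb : b ∣ n) (ha0 : a ≠ 0) (hb0 : b ≠ 0) :
    (n / a) * ((n / b) / (n / Nat.lcm a b)) = n / Nat.gcd a b := by
  have hbl : b ∣ Nat.lcm a b := Nat.dvd_lcm_right a b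
  have hl : Nat.lcm a b ∣ n := Nat.lcm_dvd ha hb
  have hl0 : 0 < Nat.lcm a b := Nat.pos_of_ne_zero (Nat.lcm_ne_zero ha0 hb0)
  have hnl0 : 0 < n / Nat.lcm a b :=
    Nat.pos_of_ne_zero ((Nat.div_ne_zero_iff_of_dvd hl).mpr ⟨hn, hl0.ne'⟩)
  have hnb : n / b = (n / Nat.lcm a b) * (Nat.lcm a b / b) := by
    rw [Nat.div_mul_div_comm hl hbl, mul_comm n (Nat.lcm a b),
      Nat.mul_div_mul_left _ _ hl0]
  have h1 : (n / b) / (n / Nat.lcm a b) = Nat.lcm a b / b := by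
    rw [hnb, Nat.mul_div_cancel_left _ hnl0]
  rw [h1, Nat.div_mul_div_comm ha hbl]
  have hg : Nat.gcd a b ∣ n := (Nat.gcd_dvd_left a b).trans ha
  have hg0 : 0 < Nat.gcd a b := Nat.pos_of_ne_zero (Nat.gcd_ne_zero_left ha0)
  obtain ⟨m, hm⟩ := hg
  have h3 : n * Nat.lcm a b = m * (a * b) := by
    rw [hm, ← Nat.gcd_mul_lcm a b]
    ring
  rw [h3, hm, Nat.mul_div_cancel_left m hg0,
    Nat.mul_div_cancel m (Nat.mul_pos (Nat.pos_of_ne_zero ha0) (Nat.pos_of_ne_zero hb0))]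

lemma card_W [NeZero n] (A B : AddSubgroup (ZMod n)) :
    Nat.card {y : (ZMod n ⧸ A) × (ZMod n ⧸ B) // pushL A B y.1 = pushR A B y.2} =
      n / Nat.gcd (Nat.card A) (Nat.card B) := by
  classical
  have hn : n ≠ 0 := NeZero.ne n
  have e : {y : (ZMod n ⧸ A) × (ZMod n ⧸ B) // pushL A B y.1 = pushR A B y.2} ≃
      Σ q : ZMod n ⧸ A, {p : ZMod n ⧸ B // pushR A B p = pushL A B q} :=
    { toFun := fun y => ⟨y.1.1, ⟨y.1.2, y.2.symm⟩⟩
      invFun := fun z => ⟨(z.1, z.2.1), z.2.2.symm⟩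
      left_inv := fun y => rfl
      right_inv := fun z => rfl }
  haveI : Fintype (ZMod n ⧸ A) := Fintype.ofFinite _
  rw [Nat.card_congr e, nat_card_sigma]
  have hf : ∀ q : ZMod n ⧸ A,
      Nat.card {p : ZMod n ⧸ B // pushR A B p = pushL A B q} = Nat.card (pushR A B).ker :=
    fun q => card_fiber _ (pushR_surjective A B) _
  rw [Finset.sum_congr rfl fun q _ => hf q, Finset.sum_const, Finset.card_univ, smul_eq_mul]
  -- identify cardinalities
  have hker : Nat.card (ZMod n ⧸ B) =
      Nat.card (ZMod n ⧸ (A ⊔ B)) * Nat.card (pushR A B).ker := by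
    rw [AddSubgroup.card_eq_card_quotient_mul_card_addSubgroup (pushR A B).ker]
    congr 1
    exact Nat.card_congr
      (QuotientAddGroup.quotientKerEquivOfSurjective _ (pushR_surjective A B)).toEquiv
  set a := Nat.card A with hadef
  set b := Nat.card B with hbdef
  have ha : a ∣ n := card_dvd_n hn A
  have hb : b ∣ n := card_dvd_n hn B
  have ha0 : a ≠ 0 := card_pos_AS hn A
  have hb0 : b ≠ 0 := card_pos_AS hn B
  have hsup : Nat.card (A ⊔ B : AddSubgroup (ZMod n)) = Nat.lcm a b := by
    have hA' : A = asub n a := eq_asub hn A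
    have hB' : B = asub n b := eq_asub hn B
    rw [hA', hB', sup_asub hn ha hb ha0 hb0]
    exact card_asub hn (Nat.lcm_dvd ha hb) (Nat.lcm_ne_zero ha0 hb0)
  have hkercard : Nat.card (pushR A B).ker = (n / b) / (n / Nat.lcm a b) := by
    rw [card_quot hn B, card_quot hn (A ⊔ B), hsup] at hker
    have hpos : 0 < n / Nat.lcm a b :=
      Nat.pos_of_ne_zero ((Nat.div_ne_zero_iff_of_dvd (Nat.lcm_dvd ha hb)).mpr
        ⟨hn, Nat.lcm_ne_zero ha0 hb0⟩)
    rw [hker, Nat.mul_div_cancel_left _ hpos]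
  rw [← Nat.card_eq_fintype_card, card_quot hn A, hkercard]
  exact arith hn ha hb ha0 hb0

lemma card_cond [NeZero n] :
    Nat.card {x : T n × T n // cond x.1 x.2} =
      ∑ r ∈ n.divisors.erase n, ∑ s ∈ n.divisors.erase n, n / Nat.gcd r s := by
  have e : {x : T n × T n // cond x.1 x.2} ≃
      Σ AB : {A : AddSubgroup (ZMod n) // A ≠ ⊤} × {A : AddSubgroup (ZMod n) // A ≠ ⊤},
        {y : (ZMod n ⧸ AB.1.1) × (ZMod n ⧸ AB.2.1) //
          pushL AB.1.1 AB.2.1 y.1 = pushR AB.1.1 AB.2.1 y.2} :=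
    { toFun := fun x => ⟨(x.1.1.1, x.1.2.1), ⟨(x.1.1.2, x.1.2.2), x.2⟩⟩
      invFun := fun y => ⟨(⟨y.1.1, y.2.1.1⟩, ⟨y.1.2, y.2.1.2⟩), y.2.2⟩
      left_inv := fun x => rfl
      right_inv := fun y => rfl }
  rw [Nat.card_congr e, nat_card_sigma]
  have hW : ∀ AB : {A : AddSubgroup (ZMod n) // A ≠ ⊤} × {A : AddSubgroup (ZMod n) // A ≠ ⊤},
      Nat.card {y : (ZMod n ⧸ AB.1.1) × (ZMod n ⧸ AB.2.1) //
          pushL AB.1.1 AB.2.1 y.1 = pushR AB.1.1 AB.2.1 y.2} =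
        n / Nat.gcd (Nat.card AB.1.1) (Nat.card AB.2.1) := fun AB => card_W AB.1.1 AB.2.1
  rw [Finset.sum_congr rfl fun AB _ => hW AB]
  rw [Fintype.sum_prod_type]
  rw [show (fun (A : {A : AddSubgroup (ZMod n) // A ≠ ⊤}) =>
      ∑ B : {A : AddSubgroup (ZMod n) // A ≠ ⊤}, n / Nat.gcd (Nat.card A.1) (Nat.card B.1)) =
      (fun A => ∑ s ∈ n.divisors.erase n, n / Nat.gcd (Nat.card A.1) s) from
    funext fun A => sum_AS_eq (n := n) (fun s => n / Nat.gcd (Nat.card A.1) s)]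
  exact sum_AS_eq (n := n) (fun r => ∑ s ∈ n.divisors.erase n, n / Nat.gcd r s)

end Stmt4
end W6
section W7
open Stmt4 in
/-- for odd `n ≥ 3`, twice the number of edges of `Γ_N(D_n)`
equals `g(n) - 3σ(n) + 2`, where `g(n) = Σ_{r∣n} Σ_{s∣n} n / gcd(r,s)`. -/
theorem stmt_4 (n : ℕ) (hn : 3 ≤ n) (hodd : Odd n) :
    (2 * Nat.card (permGraphN (DihedralGroup n)).edgeSet : ℤ) =
      ((∑ r ∈ n.divisors, ∑ s ∈ n.divisors, n / Nat.gcd r s : ℕ) : ℤ)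
        - 3 * ((∑ d ∈ n.divisors, d : ℕ) : ℤ) + 2 := by
  haveI : NeZero n := ⟨by omega⟩
  have hn0 : n ≠ 0 := by omega
  haveI : Finite (Subgroup (DihedralGroup n)) :=
    Finite.of_injective (fun H => (H : Set (DihedralGroup n))) SetLike.coe_injective
  -- Step 1: twice the edges = ordered adjacent pairs
  have h1 := two_mul_card_edgeSet (permGraphN (DihedralGroup n))
  -- Step 2: transport along the classification equivalence
  have h2 : Nat.card {p : {H : Subgroup (DihedralGroup n) // ¬ H.Normal} ×
        {H : Subgroup (DihedralGroup n) // ¬ H.Normal} //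
        (permGraphN (DihedralGroup n)).Adj p.1 p.2} =
      Nat.card {x : T n × T n // x.1 ≠ x.2 ∧ cond x.1 x.2} := by
    apply Nat.card_congr
    exact (Equiv.subtypeEquiv ((phiEquiv hodd).prodCongr (phiEquiv hodd))
      (fun x => (adj_phiEquiv hodd x.1 x.2).symm)).symm
  -- Step 3: counting
  have h3 := card_split (n := n)
  have h4 := card_cond (n := n)
  have h5 := card_T (n := n)
  -- abbreviations
  set P : ℕ := ∑ r ∈ n.divisors.erase n, ∑ s ∈ n.divisors.erase n, n / Nat.gcd r s with hP
  set Q : ℕ := ∑ d ∈ n.divisors.erase n, n / d with hQ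
  set σ : ℕ := ∑ d ∈ n.divisors, d with hσ
  have hkey : 2 * Nat.card (permGraphN (DihedralGroup n)).edgeSet + Q = P := by
    rw [h1, h2, ← h5, ← h4, h3]
  -- divisor arithmetic
  have hmem : n ∈ n.divisors := Nat.mem_divisors_self n hn0
  have hsplit : ∀ F : ℕ → ℕ, ∑ d ∈ n.divisors, F d = F n + ∑ d ∈ n.divisors.erase n, F d :=
    fun F => (Finset.add_sum_erase _ F hmem).symm
  have hdiv : ∑ d ∈ n.divisors, n / d = ∑ d ∈ n.divisors, d :=
    Nat.sum_div_divisors n (fun d => d)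
  have hσQ : σ = 1 + Q := by
    rw [hσ, ← hdiv, hsplit (fun d => n / d), Nat.div_self (by omega)]
  have hg : (∑ r ∈ n.divisors, ∑ s ∈ n.divisors, n / Nat.gcd r s) = σ + (Q + P) := by
    rw [hsplit (fun r => ∑ s ∈ n.divisors, n / Nat.gcd r s)]
    have hgn : (∑ s ∈ n.divisors, n / Nat.gcd n s) = σ := by
      rw [hσ, ← hdiv]
      apply Finset.sum_congr rfl
      intro s hs
      rw [Nat.gcd_eq_right (Nat.dvd_of_mem_divisors hs)]
    have hinner : ∀ r ∈ n.divisors.erase n,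
        (∑ s ∈ n.divisors, n / Nat.gcd r s) = n / r + ∑ s ∈ n.divisors.erase n, n / Nat.gcd r s := by
      intro r hr
      rw [hsplit (fun s => n / Nat.gcd r s),
        Nat.gcd_eq_left (Nat.dvd_of_mem_divisors (Finset.mem_of_mem_erase hr))]
    rw [Finset.sum_congr rfl hinner, Finset.sum_add_distrib, hgn]
  omega

end W7
end

section
/- Let n = 2^α with α ≥ 2. Then the number of edges of the permutability graph of non-normal subgroups Γ_N(D_n) of the dihedral group D_n equals 2^α(4α − 11) + 14 (as an integer identity). -/
open scoped Pointwise

namespace Stmt5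

open DihedralGroup

/-- The subgroup of `ZMod (2^α)` of multiples of `2^k`. -/
def Dk (α k : ℕ) : AddSubgroup (ZMod (2^α)) :=
  AddSubgroup.zmultiples ((2^k : ℕ) : ZMod (2^α))

lemma mem_Dk {α k : ℕ} (hk : k ≤ α) {m : ZMod (2^α)} :
    m ∈ Dk α k ↔ 2^k ∣ m.val := by
  constructor
  · rintro ⟨c, rfl⟩
    show 2^k ∣ (c • ((2^k : ℕ) : ZMod (2^α))).val
    have h1 : (c • ((2^k : ℕ) : ZMod (2^α))) = ((c : ZMod (2^α)) * ((2^k : ℕ) : ZMod (2^α))) := by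
      simp [zsmul_eq_mul]
    rw [h1, ZMod.val_mul]
    refine (Nat.dvd_mod_iff (pow_dvd_pow 2 hk)).mpr ?_
    exact Dvd.dvd.mul_left (by rw [ZMod.val_natCast]; exact (Nat.dvd_mod_iff (pow_dvd_pow 2 hk)).mpr dvd_rfl) _
  · rintro ⟨t, ht⟩
    refine ⟨(t : ℤ), ?_⟩
    show (t : ℤ) • ((2^k : ℕ) : ZMod (2^α)) = m
    have h1 : ((t : ℤ) • ((2^k : ℕ) : ZMod (2^α))) = (((2^k * t : ℕ) : ZMod (2^α))) := by
      rw [zsmul_eq_mul]; push_cast; ring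
    rw [h1, ← ht, ZMod.natCast_zmod_val]

lemma Dk_antitone {α k l : ℕ} (hkl : k ≤ l) (hl : l ≤ α) : Dk α l ≤ Dk α k := by
  intro m hm
  rw [mem_Dk hl] at hm
  exact (mem_Dk (hkl.trans hl)).mpr ((pow_dvd_pow 2 hkl).trans hm)

/-- The subgroup `⟨r^{2^k}, s r^i⟩` of the dihedral group. -/
def P (α k : ℕ) (i : ZMod (2^α)) : Subgroup (DihedralGroup (2^α)) where
  carrier := {x | match x with
    | .r m => m ∈ Dk α k
    | .sr m => m - i ∈ Dk α k}
  one_mem' := by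
    show (0 : ZMod (2^α)) ∈ Dk α k
    exact zero_mem _
  mul_mem' := by
    rintro (a | a) (b | b) ha hb
    · show a + b ∈ Dk α k
      exact add_mem ha hb
    · show (b - a) - i ∈ Dk α k
      have : (b - a) - i = (b - i) - a := by ring
      rw [this]; exact sub_mem hb ha
    · show (a + b) - i ∈ Dk α k
      have : (a + b) - i = (a - i) + b := by ring
      rw [this]; exact add_mem ha hb
    · show (b - a) ∈ Dk α k
      have : b - a = (b - i) - (a - i) := by ring
      rw [this]; exact sub_mem hb ha
  inv_mem' := by
    rintro (a | a) ha
    · show -a ∈ Dk α k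
      exact neg_mem ha
    · exact ha

@[simp] lemma r_mem_P {α k : ℕ} {i m : ZMod (2^α)} : r m ∈ P α k i ↔ m ∈ Dk α k := Iff.rfl
@[simp] lemma sr_mem_P {α k : ℕ} {i m : ZMod (2^α)} : sr m ∈ P α k i ↔ m - i ∈ Dk α k := Iff.rfl


lemma mem_Dk_iff_castHom {α k : ℕ} (hk : k ≤ α) {m : ZMod (2^α)} :
    m ∈ Dk α k ↔ ZMod.castHom (pow_dvd_pow 2 hk) (ZMod (2^k)) m = 0 := by
  rw [mem_Dk hk, ZMod.castHom_apply, ← ZMod.natCast_val, ZMod.natCast_eq_zero_iff]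

lemma intCast_mem_Dk {α k : ℕ} (hk : k ≤ α) {z : ℤ} :
    ((z : ZMod (2^α)) ∈ Dk α k) ↔ (2^k : ℤ) ∣ z := by
  rw [mem_Dk_iff_castHom hk, map_intCast, ZMod.intCast_zmod_eq_zero_iff_dvd]
  norm_cast

lemma sub_cast_val {α : ℕ} (a b : ZMod (2^α)) :
    a - b = (((a.val : ℤ) - (b.val : ℤ) : ℤ) : ZMod (2^α)) := by
  push_cast [ZMod.natCast_val, ZMod.intCast_zmod_cast]
  ring

/-- difference of two elements of exact level `k-1` lies in level `k` -/
lemma level_sub {α k : ℕ} (hk1 : 1 ≤ k) (hk : k ≤ α) {a b : ZMod (2^α)}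
    (ha1 : a ∈ Dk α (k-1)) (ha2 : a ∉ Dk α k) (hb1 : b ∈ Dk α (k-1)) (hb2 : b ∉ Dk α k) :
    a - b ∈ Dk α k := by
  obtain ⟨j, rfl⟩ : ∃ j, k = j + 1 := ⟨k-1, by omega⟩
  simp only [Nat.add_sub_cancel] at *
  rw [mem_Dk (by omega : j ≤ α)] at ha1 hb1
  rw [mem_Dk hk] at ha2 hb2
  rw [sub_cast_val, intCast_mem_Dk hk]
  obtain ⟨A, hA⟩ := ha1
  obtain ⟨B, hB⟩ := hb1
  have hAodd : ¬ 2 ∣ A := by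
    rintro ⟨c, rfl⟩
    exact ha2 ⟨c, by rw [hA]; ring⟩
  have hBodd : ¬ 2 ∣ B := by
    rintro ⟨c, rfl⟩
    exact hb2 ⟨c, by rw [hB]; ring⟩
  have h2 : (2:ℤ) ∣ (A : ℤ) - B := by omega
  obtain ⟨t, ht⟩ := h2
  refine ⟨t, ?_⟩
  have : (a.val : ℤ) - b.val = 2^j * ((A:ℤ) - B) := by
    rw [hA, hB]; push_cast; ring
  rw [this, ht]; ring

/-- if `x + x` is in level `k`, then `x` is in level `k-1` -/
lemma level_half {α k : ℕ} (hk1 : 1 ≤ k) (hk : k ≤ α) {x : ZMod (2^α)}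
    (h : x + x ∈ Dk α k) : x ∈ Dk α (k-1) := by
  obtain ⟨j, rfl⟩ : ∃ j, k = j + 1 := ⟨k-1, by omega⟩
  simp only [Nat.add_sub_cancel]
  have hx : x + x = (((2 * x.val : ℤ)) : ZMod (2^α)) := by
    push_cast [ZMod.natCast_val, ZMod.intCast_zmod_cast]; ring
  rw [hx, intCast_mem_Dk hk] at h
  rw [mem_Dk (by omega : j ≤ α)]
  have h2 : (2^j : ℤ) ∣ (x.val : ℤ) := by
    have : ((2:ℤ) * 2^j) ∣ 2 * (x.val : ℤ) := by
      rw [show (2:ℤ) * 2^j = 2^(j+1) by ring]; exact h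
    exact (mul_dvd_mul_iff_left (by norm_num : (2:ℤ) ≠ 0)).mp this
  exact_mod_cast h2

lemma Dk_top (α : ℕ) : Dk α α = ⊥ := by
  ext m
  rw [mem_Dk le_rfl, AddSubgroup.mem_bot]
  constructor
  · intro h
    have hv : m.val < 2^α := ZMod.val_lt m
    have h0 : m.val = 0 := Nat.eq_zero_of_dvd_of_lt h hv
    exact (ZMod.val_eq_zero m).mp h0
  · rintro rfl
    simp

lemma Dk_inj {α k l : ℕ} (hk : k ≤ α) (hl : l ≤ α) (h : Dk α k = Dk α l) : k = l := by
  by_contra hne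
  wlog hkl : k < l generalizing k l
  · exact this hl hk h.symm (Ne.symm hne) (by omega)
  have hmem : ((2^k : ℕ) : ZMod (2^α)) ∈ Dk α k := ⟨1, by simp⟩
  rw [h, mem_Dk hl] at hmem
  rw [ZMod.val_natCast, Nat.mod_eq_of_lt (by exact Nat.pow_lt_pow_right one_lt_two (lt_of_lt_of_le hkl hl))] at hmem
  have := Nat.le_of_dvd (by positivity) hmem
  exact absurd (Nat.pow_le_pow_iff_right one_lt_two |>.mp this) (by omega)

lemma addSubgroup_eq_Dk {α : ℕ} (D : AddSubgroup (ZMod (2^α))) :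
    ∃ k, k ≤ α ∧ D = Dk α k := by
  by_cases hD : D = ⊥
  · exact ⟨α, le_rfl, by rw [hD, Dk_top]⟩
  -- pick a nonzero element
  obtain ⟨m₀, hm₀D, hm₀⟩ : ∃ m ∈ D, m ≠ (0 : ZMod (2^α)) := by
    by_contra h
    push_neg at h
    exact hD (by ext x; simp only [AddSubgroup.mem_bot]; exact ⟨fun hx => h x hx, by rintro rfl; exact zero_mem _⟩)
  have hQ : ∃ v, ∃ m ∈ D, ¬ 2^(v+1) ∣ m.val := by
    refine ⟨m₀.val, m₀, hm₀D, ?_⟩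
    intro hdvd
    have h1 : m₀.val ≠ 0 := fun h => hm₀ (by rwa [ZMod.val_eq_zero] at h)
    have h2 : 2^(m₀.val+1) ≤ m₀.val := Nat.le_of_dvd (by omega) hdvd
    have h3 : m₀.val < 2^(m₀.val+1) := by
      calc m₀.val < 2^(m₀.val) := Nat.lt_two_pow_self
      _ ≤ 2^(m₀.val+1) := Nat.pow_le_pow_right (by norm_num) (by omega)
    omega
  classical
  set k := Nat.find hQ with hkdef
  obtain ⟨m, hmD, hmk⟩ := Nat.find_spec hQ
  -- all elements of D are divisible by 2^k
  have hall : ∀ x ∈ D, 2^k ∣ x.val := by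
    intro x hx
    rcases Nat.eq_zero_or_pos k with h0 | hpos
    · rw [h0, pow_zero]; exact one_dvd _
    · by_contra hnd
      have hle : Nat.find hQ ≤ k - 1 :=
        Nat.find_le ⟨x, hx, by rwa [Nat.sub_add_cancel hpos]⟩
      rw [← hkdef] at hle
      omega
  have hmdvd : 2^k ∣ m.val := hall m hmD
  obtain ⟨u, hu⟩ := hmdvd
  have hu_odd : ¬ 2 ∣ u := by
    rintro ⟨c, rfl⟩
    exact hmk ⟨c, by rw [hu]; ring⟩
  have hmne : m.val ≠ 0 := by
    intro h
    exact hmk (h ▸ dvd_zero _)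
  have hkα : k ≤ α := by
    have h1 : 2^k ≤ m.val := Nat.le_of_dvd (by omega) ⟨u, hu⟩
    have h2 : m.val < 2^α := ZMod.val_lt m
    exact le_of_lt (Nat.pow_lt_pow_iff_right one_lt_two |>.mp (lt_of_le_of_lt h1 h2))
  refine ⟨k, hkα, ?_⟩
  -- show 2^k ∈ D
  have hcop : Nat.Coprime u (2^α) := Nat.Coprime.pow_right _ (Odd.coprime_two_right (Nat.odd_iff.mpr (by omega)))
  have hunit : IsUnit ((u : ℕ) : ZMod (2^α)) := (ZMod.unitOfCoprime u hcop).isUnit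
  obtain ⟨w, hw⟩ := hunit.exists_left_inv
  have hgen : ((2^k : ℕ) : ZMod (2^α)) ∈ D := by
    have h1 : w * m ∈ D := by
      have : w * m = w.val • m := by
        rw [nsmul_eq_mul, ZMod.natCast_zmod_val]
      rw [this]
      exact AddSubgroup.nsmul_mem D hmD _
    have h2 : w * m = ((2^k : ℕ) : ZMod (2^α)) := by
      have hm : m = ((2^k : ℕ) : ZMod (2^α)) * ((u : ℕ) : ZMod (2^α)) := by
        rw [← Nat.cast_mul, ← hu, ZMod.natCast_zmod_val]
      rw [hm, ← mul_assoc, mul_comm w, mul_assoc, hw, mul_one]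
    rwa [h2] at h1
  apply le_antisymm
  · intro x hx
    obtain ⟨t, ht⟩ := hall x hx
    exact (mem_Dk hkα).mpr ⟨t, ht⟩
  · intro x hx
    obtain ⟨c, hc⟩ := hx
    rw [← hc]
    exact AddSubgroup.zsmul_mem D hgen c


lemma two_mem_Dk_of_le_one {α k : ℕ} (hα : 2 ≤ α) (hk : k ≤ 1) :
    (2 : ZMod (2^α)) ∈ Dk α k := by
  rw [mem_Dk (by omega)]
  have h2 : ((2 : ZMod (2^α))) = ((2 : ℕ) : ZMod (2^α)) := by norm_cast
  rw [h2, ZMod.val_natCast, Nat.mod_eq_of_lt (by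
    calc 2 < 2^2 := by norm_num
    _ ≤ 2^α := Nat.pow_le_pow_right (by norm_num) hα)]
  calc (2:ℕ)^k ∣ 2^1 := pow_dvd_pow 2 hk
  _ = 2 := by norm_num

lemma two_mul_mem_Dk {α k : ℕ} (h2 : (2 : ZMod (2^α)) ∈ Dk α k) (t : ZMod (2^α)) :
    2 * t ∈ Dk α k := by
  have : 2 * t = t.val • (2 : ZMod (2^α)) := by
    rw [nsmul_eq_mul, ZMod.natCast_zmod_val, mul_comm]
  rw [this]
  exact AddSubgroup.nsmul_mem _ h2 _

lemma not_two_mem_Dk {α k : ℕ} (hα : 2 ≤ α) (hk2 : 2 ≤ k) (hk : k ≤ α) :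
    (2 : ZMod (2^α)) ∉ Dk α k := by
  rw [mem_Dk hk]
  have h2 : ((2 : ZMod (2^α))) = ((2 : ℕ) : ZMod (2^α)) := by norm_cast
  rw [h2, ZMod.val_natCast, Nat.mod_eq_of_lt (by
    calc 2 < 2^2 := by norm_num
    _ ≤ 2^α := Nat.pow_le_pow_right (by norm_num) hα)]
  intro h
  have := Nat.le_of_dvd (by norm_num) h
  have h4 : (2:ℕ)^2 ≤ 2^k := Nat.pow_le_pow_right (by norm_num) hk2
  omega

lemma P_normal_of_le_one {α k : ℕ} (hα : 2 ≤ α) (hk : k ≤ 1) (i : ZMod (2^α)) :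
    (P α k i).Normal := by
  have h2 := two_mem_Dk_of_le_one hα hk (k := k)
  constructor
  rintro (m | m) hm (t | t)
  · have : r t * r m * (r t)⁻¹ = r m := by
      show r t * r m * r (-t) = r m
      simp [add_comm, add_left_comm]
    rwa [this]
  · have : sr t * r m * (sr t)⁻¹ = r (-m) := by
      show sr t * r m * sr t = r (-m)
      simp
    rw [this, r_mem_P]
    exact neg_mem (r_mem_P.mp hm)
  · have : r t * sr m * (r t)⁻¹ = sr (m - 2*t) := by
      show r t * sr m * r (-t) = sr (m - 2*t)
      simp
      ring_nf
    rw [this, sr_mem_P]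
    have : m - 2*t - i = (m - i) - 2*t := by ring
    rw [this]
    exact sub_mem (sr_mem_P.mp hm) (two_mul_mem_Dk h2 t)
  · have : sr t * sr m * (sr t)⁻¹ = sr (2*t - m) := by
      show sr t * sr m * sr t = sr (2*t - m)
      simp
      ring_nf
    rw [this, sr_mem_P]
    have heq : 2*t - m - i = 2*(t - i) - (m - i) := by ring
    rw [heq]
    exact sub_mem (two_mul_mem_Dk (by rwa [mem_Dk (by omega)] at h2 ⊢) (t - i)) (sr_mem_P.mp hm)

lemma P_not_normal {α k : ℕ} (hα : 2 ≤ α) (hk2 : 2 ≤ k) (hk : k ≤ α) (i : ZMod (2^α)) :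
    ¬ (P α k i).Normal := by
  intro hN
  have hsr : sr i ∈ P α k i := sr_mem_P.mpr (by rw [sub_self]; exact zero_mem _)
  have hconj := hN.conj_mem _ hsr (r 1)
  have heq : r 1 * sr i * (r 1)⁻¹ = sr (i - 2) := by
    show r 1 * sr i * r (-1) = sr (i - 2)
    simp
    ring_nf
  rw [heq, sr_mem_P] at hconj
  have : i - 2 - i = -2 := by ring
  rw [this, neg_mem_iff] at hconj
  exact not_two_mem_Dk hα hk2 hk hconj

/-- the rotation part of a subgroup -/
def rotSub {α : ℕ} (H : Subgroup (DihedralGroup (2^α))) : AddSubgroup (ZMod (2^α)) where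
  carrier := {m | DihedralGroup.r m ∈ H}
  zero_mem' := by show r 0 ∈ H; rw [← one_def]; exact one_mem H
  add_mem' := by
    intro a b ha hb
    show r (a + b) ∈ H
    rw [← r_mul_r]
    exact mul_mem ha hb
  neg_mem' := by
    intro a ha
    show r (-a) ∈ H
    have : r (-a) = (r a)⁻¹ := rfl
    rw [this]
    exact inv_mem ha

lemma normal_of_rot_only {α : ℕ} (H : Subgroup (DihedralGroup (2^α)))
    (h : ∀ m : ZMod (2^α), sr m ∉ H) : H.Normal := by
  constructor
  rintro (m | m) hm (t | t)
  · have : r t * r m * (r t)⁻¹ = r m := by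
      show r t * r m * r (-t) = r m
      simp
    rwa [this]
  · have : sr t * r m * (sr t)⁻¹ = r (-m) := by
      show sr t * r m * sr t = r (-m)
      simp
    rw [this]
    have : r (-m) = (r m)⁻¹ := rfl
    rw [this]
    exact inv_mem hm
  · exact absurd hm (h m)
  · exact absurd hm (h m)

lemma eq_P_of_not_normal {α : ℕ} (hα : 2 ≤ α) (H : Subgroup (DihedralGroup (2^α)))
    (hH : ¬ H.Normal) : ∃ k i, 2 ≤ k ∧ k ≤ α ∧ H = P α k i := by
  obtain ⟨i, hi⟩ : ∃ i, sr i ∈ H := by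
    by_contra h
    push_neg at h
    exact hH (normal_of_rot_only H h)
  obtain ⟨k, hk, hD⟩ := addSubgroup_eq_Dk (rotSub H)
  have hHP : H = P α k i := by
    ext x
    cases x with
    | r m =>
      rw [r_mem_P, ← hD]
      exact Iff.rfl
    | sr m =>
      rw [sr_mem_P, ← hD]
      constructor
      · intro hx
        show r (m - i) ∈ H
        have : r (m - i) = sr i * sr m := by rw [sr_mul_sr]
        rw [this]
        exact mul_mem hi hx
      · intro hx
        have hx' : r (m - i) ∈ H := hx
        have : sr m = sr i * r (m - i) := by rw [sr_mul_r]; congr 1; ring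
        rw [this]
        exact mul_mem hi hx'
  refine ⟨k, i, ?_, hk, hHP⟩
  by_contra h
  push_neg at h
  exact hH (hHP ▸ P_normal_of_le_one hα (by omega) i)

lemma P_eq_P_iff {α k l : ℕ} (hk : k ≤ α) (hl : l ≤ α) (i j : ZMod (2^α)) :
    P α k i = P α l j ↔ (k = l ∧ i - j ∈ Dk α k) := by
  constructor
  · intro h
    have hDk : Dk α k = Dk α l := by
      ext m
      rw [← r_mem_P (i := i), ← r_mem_P (i := j), h]
    have hkl := Dk_inj hk hl hDk
    subst hkl
    refine ⟨rfl, ?_⟩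
    have h1 : sr i ∈ P α k i := sr_mem_P.mpr (by rw [sub_self]; exact zero_mem _)
    rw [h, sr_mem_P] at h1
    exact h1
  · rintro ⟨rfl, hij⟩
    ext x
    cases x with
    | r m => rw [r_mem_P, r_mem_P]
    | sr m =>
      rw [sr_mem_P, sr_mem_P]
      constructor
      · intro h
        have : m - j = (m - i) + (i - j) := by ring
        rw [this]; exact add_mem h hij
      · intro h
        have : m - i = (m - j) - (i - j) := by ring
        rw [this]; exact sub_mem h hij


lemma mem_P_cases {α k : ℕ} {i : ZMod (2^α)} {x : DihedralGroup (2^α)} :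
    x ∈ P α k i ↔ (∃ m, x = r m ∧ m ∈ Dk α k) ∨ (∃ m, x = sr m ∧ m - i ∈ Dk α k) := by
  cases x with
  | r m => simp [r_mem_P, sr_mem_P]
  | sr m => simp [r_mem_P, sr_mem_P]

lemma coe_mul_of_le {G : Type*} [Group G] {H K : Subgroup G} (h : K ≤ H) :
    (H : Set G) * (K : Set G) = (H : Set G) := by
  apply subset_antisymm
  · rintro z hz
    rw [Set.mem_mul] at hz
    obtain ⟨x, hx, y, hy, rfl⟩ := hz
    exact mul_mem hx (h hy)
  · intro x hx
    rw [Set.mem_mul]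
    exact ⟨x, hx, 1, one_mem K, mul_one x⟩

lemma mul_coe_of_le {G : Type*} [Group G] {H K : Subgroup G} (h : K ≤ H) :
    (K : Set G) * (H : Set G) = (H : Set G) := by
  apply subset_antisymm
  · rintro z hz
    rw [Set.mem_mul] at hz
    obtain ⟨x, hx, y, hy, rfl⟩ := hz
    exact mul_mem (h hx) hy
  · intro x hx
    rw [Set.mem_mul]
    exact ⟨1, one_mem K, x, hx, one_mul x⟩

lemma adj_iff_aux {α k l : ℕ} (hα : 2 ≤ α) (hk2 : 2 ≤ k) (hl : l ≤ α) (hkl : k ≤ l)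
    {i j : ZMod (2^α)} :
    ((P α k i : Set (DihedralGroup (2^α))) * (P α l j : Set (DihedralGroup (2^α)))
      = (P α l j : Set (DihedralGroup (2^α))) * (P α k i : Set (DihedralGroup (2^α))))
    ↔ i - j ∈ Dk α (k - 1) := by
  have hk : k ≤ α := hkl.trans hl
  have hk1α : k - 1 ≤ α := by omega
  constructor
  · -- if products agree then i - j ∈ Dk (k-1)
    intro heq
    by_contra hij
    -- r (i - j) ∈ (P l j) * (P k i)
    have hmem : r (i - j) ∈ (P α l j : Set (DihedralGroup (2^α))) * (P α k i : Set _) := by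
      rw [Set.mem_mul]
      refine ⟨sr j, ?_, sr i, ?_, ?_⟩
      · exact sr_mem_P.mpr (by rw [sub_self]; exact zero_mem _)
      · exact sr_mem_P.mpr (by rw [sub_self]; exact zero_mem _)
      · rw [sr_mul_sr]
    rw [← heq, Set.mem_mul] at hmem
    obtain ⟨x, hx, y, hy, hxy⟩ := hmem
    rcases mem_P_cases.mp hx with ⟨a, rfl, ha⟩ | ⟨a, rfl, ha⟩ <;>
      rcases mem_P_cases.mp hy with ⟨b, rfl, hb⟩ | ⟨b, rfl, hb⟩
    · rw [r_mul_r] at hxy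
      have hv : a + b = i - j := (DihedralGroup.r.injEq _ _).mp hxy
      apply hij
      rw [← hv]
      exact Dk_antitone (by omega) hk (add_mem ha (Dk_antitone hkl hl hb))
    · rw [r_mul_sr] at hxy; exact absurd hxy (by simp)
    · rw [sr_mul_r] at hxy; exact absurd hxy (by simp)
    · rw [sr_mul_sr] at hxy
      have hv : b - a = i - j := (DihedralGroup.r.injEq _ _).mp hxy
      have hb' : b - j ∈ Dk α k := Dk_antitone hkl hl hb
      have hsum : (i - j) + (i - j) ∈ Dk α k := by
        have : (i - j) + (i - j) = (b - j) - (a - i) + ((i - j) - (b - a)) := by ring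
        rw [this, hv, sub_self, add_zero]

        exact sub_mem hb' ha
      exact hij (level_half (by omega) hk hsum)
  · intro hij
    by_cases hk' : i - j ∈ Dk α k
    · -- containment case : P l j ≤ P k i
      have hle : P α l j ≤ P α k i := by
        intro x hx
        rcases mem_P_cases.mp hx with ⟨m, rfl, hm⟩ | ⟨m, rfl, hm⟩
        · exact r_mem_P.mpr (Dk_antitone hkl hl hm)
        · refine sr_mem_P.mpr ?_
          have : m - i = (m - j) - (i - j) := by ring
          rw [this]
          exact sub_mem (Dk_antitone hkl hl hm) hk'
      rw [coe_mul_of_le hle, mul_coe_of_le hle]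
    · -- exact level k-1 case : both products equal P (k-1) i
      have hij' : i - j ∉ Dk α k := hk'
      have hji : j - i ∈ Dk α (k-1) := by
        have : j - i = -(i - j) := by ring
        rw [this]; exact neg_mem hij
      have hji' : j - i ∉ Dk α k := by
        intro h
        exact hij' (by have : i - j = -(j - i) := by ring
                       rw [this]; exact neg_mem h)
      have hsub : ∀ x ∈ P α k i, x ∈ P α (k-1) i := by
        intro x hx
        rcases mem_P_cases.mp hx with ⟨m, rfl, hm⟩ | ⟨m, rfl, hm⟩
        · exact r_mem_P.mpr (Dk_antitone (by omega) hk hm)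
        · exact sr_mem_P.mpr (Dk_antitone (by omega) hk hm)
      have hsub' : ∀ x ∈ P α l j, x ∈ P α (k-1) i := by
        intro x hx
        rcases mem_P_cases.mp hx with ⟨m, rfl, hm⟩ | ⟨m, rfl, hm⟩
        · exact r_mem_P.mpr (Dk_antitone (by omega) hl hm)
        · refine sr_mem_P.mpr ?_
          have : m - i = (m - j) + (j - i) := by ring
          rw [this]
          exact add_mem (Dk_antitone (by omega) hl hm) hji
      have h1 : (P α k i : Set (DihedralGroup (2^α))) * (P α l j : Set _)
          = (P α (k-1) i : Set _) := by
        apply subset_antisymm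
        · rintro z hz
          rw [Set.mem_mul] at hz
          obtain ⟨x, hx, y, hy, rfl⟩ := hz
          exact mul_mem (hsub x hx) (hsub' y hy)
        · intro x hx
          rw [Set.mem_mul]
          rcases mem_P_cases.mp hx with ⟨m, rfl, hm⟩ | ⟨m, rfl, hm⟩
          · by_cases hmk : m ∈ Dk α k
            · exact ⟨r m, r_mem_P.mpr hmk, 1, one_mem _, mul_one _⟩
            · refine ⟨sr (j - m), ?_, sr j, sr_mem_P.mpr (by rw [sub_self]; exact zero_mem _), ?_⟩
              · refine sr_mem_P.mpr ?_
                have heq2 : (j - m) - i = -((i - j) + m) := by ring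
                rw [heq2]
                refine neg_mem ?_
                have heq3 : (i - j) + m = (i - j) - (-m) := by ring
                rw [heq3]
                exact level_sub (by omega) hk hij hij' (neg_mem hm) (fun h => hmk (by simpa using neg_mem h))
              · rw [sr_mul_sr]; congr 1; ring
          · by_cases hmk : m - i ∈ Dk α k
            · exact ⟨sr m, sr_mem_P.mpr hmk, 1, one_mem _, mul_one _⟩
            · refine ⟨r (j - m), ?_, sr j, sr_mem_P.mpr (by rw [sub_self]; exact zero_mem _), ?_⟩
              · refine r_mem_P.mpr ?_
                have heq2 : j - m = (j - i) - (m - i) := by ring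
                rw [heq2]
                exact level_sub (by omega) hk hji hji' hm hmk
              · rw [r_mul_sr]; congr 1; ring
      have h2 : (P α l j : Set (DihedralGroup (2^α))) * (P α k i : Set _)
          = (P α (k-1) i : Set _) := by
        apply subset_antisymm
        · rintro z hz
          rw [Set.mem_mul] at hz
          obtain ⟨x, hx, y, hy, rfl⟩ := hz
          exact mul_mem (hsub' x hx) (hsub y hy)
        · intro x hx
          rw [Set.mem_mul]
          rcases mem_P_cases.mp hx with ⟨m, rfl, hm⟩ | ⟨m, rfl, hm⟩
          · by_cases hmk : m ∈ Dk α k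
            · exact ⟨1, one_mem _, r m, r_mem_P.mpr hmk, one_mul _⟩
            · refine ⟨sr j, sr_mem_P.mpr (by rw [sub_self]; exact zero_mem _), sr (j + m), ?_, ?_⟩
              · refine sr_mem_P.mpr ?_
                have heq2 : (j + m) - i = m - (i - j) := by ring
                rw [heq2]
                exact level_sub (by omega) hk hm hmk hij hij'
              · rw [sr_mul_sr]; congr 1; ring
          · by_cases hmk : m - i ∈ Dk α k
            · exact ⟨1, one_mem _, sr m, sr_mem_P.mpr hmk, one_mul _⟩
            · refine ⟨sr j, sr_mem_P.mpr (by rw [sub_self]; exact zero_mem _), r (m - j), ?_, ?_⟩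
              · refine r_mem_P.mpr ?_
                have heq2 : m - j = (m - i) - (j - i) := by ring
                rw [heq2]
                exact level_sub (by omega) hk hm hmk hji hji'
              · rw [sr_mul_r]; congr 1; ring
      rw [h1, h2]


lemma adj_iff {α k l : ℕ} (hα : 2 ≤ α) (hk2 : 2 ≤ k) (hk : k ≤ α) (hl2 : 2 ≤ l) (hl : l ≤ α)
    {i j : ZMod (2^α)} :
    ((P α k i : Set (DihedralGroup (2^α))) * (P α l j : Set (DihedralGroup (2^α)))
      = (P α l j : Set (DihedralGroup (2^α))) * (P α k i : Set (DihedralGroup (2^α))))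
    ↔ i - j ∈ Dk α (min k l - 1) := by
  rcases le_total k l with h | h
  · rw [min_eq_left h]
    exact adj_iff_aux hα hk2 hl h
  · rw [min_eq_right h, eq_comm, adj_iff_aux hα hl2 hk h,
      show j - i = -(i - j) by ring, neg_mem_iff]


lemma sub_mem_Dk_iff_cast {α m : ℕ} (hm : m ≤ α) (a b : ZMod (2^α)) :
    a - b ∈ Dk α m ↔ ((a.val : ZMod (2^m)) = (b.val : ZMod (2^m))) := by
  have key : ∀ x : ZMod (2^α), ZMod.castHom (pow_dvd_pow 2 hm) (ZMod (2^m)) x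
      = (x.val : ZMod (2^m)) := by
    intro x
    rw [ZMod.castHom_apply, ← ZMod.natCast_val]
  have key2 : a - b ∈ Dk α m ↔ ZMod.castHom (pow_dvd_pow 2 hm) (ZMod (2^m)) (a-b) = 0 := by
    rw [key, ZMod.natCast_eq_zero_iff, mem_Dk hm]
  rw [key2, map_sub, sub_eq_zero, key, key]

/-- vertex type -/
abbrev V (α : ℕ) := Σ k : (Finset.Icc 2 α), ZMod (2^(k:ℕ))

/-- the combinatorial model graph -/
def modelGraph (α : ℕ) : SimpleGraph (V α) where
  Adj x y := x ≠ y ∧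
    (((x.2.val : ℕ) : ZMod (2^(min (x.1:ℕ) (y.1:ℕ) - 1)))
      = ((y.2.val : ℕ) : ZMod (2^(min (x.1:ℕ) (y.1:ℕ) - 1))))
  symm := by
    refine ⟨?_⟩
    rintro x y ⟨hne, h⟩
    refine ⟨hne.symm, ?_⟩
    rw [min_comm]
    exact h.symm
  loopless := ⟨fun x ⟨hne, _⟩ => hne rfl⟩

instance (α : ℕ) : DecidableRel (modelGraph α).Adj := fun x y => instDecidableAnd

/-- the vertex map -/
noncomputable def vmap {α : ℕ} (hα : 2 ≤ α) (x : V α) : {H : Subgroup (DihedralGroup (2^α)) // ¬ H.Normal} :=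
  ⟨P α (x.1 : ℕ) ((x.2.val : ℕ) : ZMod (2^α)),
    P_not_normal hα (Finset.mem_Icc.mp x.1.2).1 (Finset.mem_Icc.mp x.1.2).2 _⟩

lemma val_lift {α k : ℕ} (hk : k ≤ α) (i : ZMod (2^k)) :
    (((i.val : ℕ) : ZMod (2^α))).val = i.val :=
  ZMod.val_natCast_of_lt (lt_of_lt_of_le (ZMod.val_lt i) (Nat.pow_le_pow_right (by norm_num) hk))

lemma vmap_bijective {α : ℕ} (hα : 2 ≤ α) : Function.Bijective (vmap hα) := by
  constructor
  · rintro ⟨⟨k, hk⟩, i⟩ ⟨⟨l, hl⟩, j⟩ h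
    rw [Finset.mem_Icc] at hk hl
    have h' := Subtype.ext_iff.mp h
    simp only [vmap] at h'
    rw [P_eq_P_iff hk.2 hl.2] at h'
    obtain ⟨rfl, hsub⟩ := h'
    rw [sub_mem_Dk_iff_cast hk.2, val_lift hk.2, val_lift hk.2] at hsub
    rw [ZMod.natCast_zmod_val, ZMod.natCast_zmod_val] at hsub
    subst hsub
    rfl
  · rintro ⟨H, hH⟩
    obtain ⟨k, i, hk2, hk, rfl⟩ := eq_P_of_not_normal hα H hH
    refine ⟨⟨⟨k, Finset.mem_Icc.mpr ⟨hk2, hk⟩⟩, ((i.val : ℕ) : ZMod (2^k))⟩, ?_⟩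
    apply Subtype.ext
    simp only [vmap]
    rw [P_eq_P_iff hk hk]
    refine ⟨rfl, ?_⟩
    rw [sub_mem_Dk_iff_cast hk, val_lift hk, ZMod.val_natCast, ZMod.natCast_mod]

noncomputable def graphIso {α : ℕ} (hα : 2 ≤ α) :
    modelGraph α ≃g permGraphN (DihedralGroup (2^α)) where
  toEquiv := Equiv.ofBijective _ (vmap_bijective hα)
  map_rel_iff' := by
    rintro ⟨⟨k, hk'⟩, i⟩ ⟨⟨l, hl'⟩, j⟩
    obtain ⟨hk1, hk2⟩ := Finset.mem_Icc.mp hk'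
    obtain ⟨hl1, hl2⟩ := Finset.mem_Icc.mp hl'
    show (permGraphN _).Adj (vmap hα ⟨⟨k, hk'⟩, i⟩) (vmap hα ⟨⟨l, hl'⟩, j⟩) ↔ _
    have hadj := adj_iff hα hk1 hk2 hl1 hl2
      (i := ((i.val : ℕ) : ZMod (2^α))) (j := ((j.val : ℕ) : ZMod (2^α)))
    constructor
    · rintro ⟨hne, hmul⟩
      refine ⟨fun hc => hne (congrArg (vmap hα) hc), ?_⟩
      have h2 := hadj.mp hmul
      rw [sub_mem_Dk_iff_cast (by omega), val_lift hk2, val_lift hl2] at h2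
      exact h2
    · rintro ⟨hne, hcast⟩
      refine ⟨fun hc => hne ((vmap_bijective hα).1 hc), ?_⟩
      apply hadj.mpr
      rw [sub_mem_Dk_iff_cast (by omega), val_lift hk2, val_lift hl2]
      exact hcast


lemma count_fiber {l m : ℕ} (hm : m ≤ l) (c : ZMod (2^m)) :
    (Finset.univ.filter fun j : ZMod (2^l) => ((j.val : ℕ) : ZMod (2^m)) = c).card
      = 2^(l-m) := by
  have hml : (2:ℕ)^m ∣ 2^l := pow_dvd_pow 2 hm
  have hmpos : 0 < (2:ℕ)^m := by positivity
  have hcv : c.val < 2^m := ZMod.val_lt c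
  have hsplit : (2:ℕ)^l = 2^m * 2^(l-m) := by
    rw [← pow_add]; congr 1; omega
  have e : {j : ZMod (2^l) // ((j.val : ℕ) : ZMod (2^m)) = c} ≃ ZMod (2^(l-m)) := by
    refine ⟨fun j => ((j.1.val / 2^m : ℕ) : ZMod (2^(l-m))),
      fun t => ⟨((c.val + t.val * 2^m : ℕ) : ZMod (2^l)), ?_⟩, ?_, ?_⟩
    · have htv : t.val < 2^(l-m) := ZMod.val_lt t
      have hlt : c.val + t.val * 2^m < 2^l := by
        calc c.val + t.val * 2^m < 2^m + t.val * 2^m := by omega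
        _ ≤ 2^m + (2^(l-m) - 1) * 2^m := by
            have : t.val ≤ 2^(l-m) - 1 := by omega
            nlinarith
        _ = (1 + (2^(l-m) - 1)) * 2^m := by ring
        _ = 2^(l-m) * 2^m := by
            have h1 : 1 ≤ (2:ℕ)^(l-m) := Nat.one_le_two_pow
            congr 1
            omega
        _ = 2^l := by rw [mul_comm, ← hsplit]
      rw [ZMod.val_natCast_of_lt hlt, Nat.cast_add,
        (ZMod.natCast_eq_zero_iff _ _).mpr (dvd_mul_left ((2:ℕ)^m) t.val),
        add_zero, ZMod.natCast_zmod_val]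
    · rintro ⟨j, hj⟩
      have hjv : j.val < 2^l := ZMod.val_lt j
      have hdiv : j.val / 2^m < 2^(l-m) := by
        rw [Nat.div_lt_iff_lt_mul hmpos, mul_comm, ← hsplit]; exact hjv
      have hcval : c.val = j.val % 2^m := by
        rw [← hj, ZMod.val_natCast]
      apply Subtype.ext
      simp only
      rw [ZMod.val_natCast_of_lt hdiv, hcval, Nat.mod_add_div', ZMod.natCast_zmod_val]
    · intro t
      have htv : t.val < 2^(l-m) := ZMod.val_lt t
      have hlt : c.val + t.val * 2^m < 2^l := by
        calc c.val + t.val * 2^m < 2^m + t.val * 2^m := by omega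
        _ ≤ 2^m + (2^(l-m) - 1) * 2^m := by
            have : t.val ≤ 2^(l-m) - 1 := by omega
            nlinarith
        _ = (1 + (2^(l-m) - 1)) * 2^m := by ring
        _ = 2^(l-m) * 2^m := by
            have h1 : 1 ≤ (2:ℕ)^(l-m) := Nat.one_le_two_pow
            congr 1
            omega
        _ = 2^l := by rw [mul_comm, ← hsplit]
      simp only
      rw [ZMod.val_natCast_of_lt hlt, Nat.add_mul_div_right _ _ hmpos,
        Nat.div_eq_of_lt hcv, zero_add, ZMod.natCast_zmod_val]
  calc (Finset.univ.filter fun j : ZMod (2^l) => ((j.val : ℕ) : ZMod (2^m)) = c).card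
      = Fintype.card {j : ZMod (2^l) // ((j.val : ℕ) : ZMod (2^m)) = c} :=
        (Fintype.card_subtype _).symm
  _ = Fintype.card (ZMod (2^(l-m))) := Fintype.card_congr e
  _ = 2^(l-m) := by rw [ZMod.card]

lemma card_filter_sigma {ι : Type*} [Fintype ι] [DecidableEq ι] {β : ι → Type*}
    [∀ i, Fintype (β i)] [∀ i, DecidableEq (β i)] (p : (Σ i, β i) → Prop) [DecidablePred p] :
    (Finset.univ.filter p).card
      = ∑ a : ι, (Finset.univ.filter fun b : β a => p ⟨a, b⟩).card := by
  rw [← Finset.univ_sigma_univ]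
  have h : (Finset.univ.sigma fun _ => Finset.univ).filter p
      = Finset.univ.sigma (fun a : ι => Finset.univ.filter fun b : β a => p ⟨a, b⟩) := by
    ext ⟨a, b⟩
    simp
  rw [h, Finset.card_sigma]


lemma degree_add_one (α : ℕ) (a : ↥(Finset.Icc 2 α)) (i : ZMod (2^(a:ℕ))) :
    (modelGraph α).degree ⟨a, i⟩ + 1 = ∑ l ∈ Finset.Icc 2 α, 2^(l - min (a:ℕ) l + 1) := by
  classical
  obtain ⟨ha2, haα⟩ := Finset.mem_Icc.mp a.2
  rw [← SimpleGraph.card_neighborFinset_eq_degree, SimpleGraph.neighborFinset_eq_filter,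
    card_filter_sigma]
  rw [← Finset.sum_coe_sort (Finset.Icc 2 α) (fun l => 2^(l - min (a:ℕ) l + 1))]
  rw [← Finset.add_sum_erase Finset.univ _ (Finset.mem_univ a),
    ← Finset.add_sum_erase Finset.univ (fun b : ↥(Finset.Icc 2 α) => 2^((b:ℕ) - min (a:ℕ) (b:ℕ) + 1)) (Finset.mem_univ a)]
  have hmain : ∀ b : ↥(Finset.Icc 2 α), b ≠ a →
      (Finset.univ.filter fun j : ZMod (2^(b:ℕ)) => (modelGraph α).Adj ⟨a, i⟩ ⟨b, j⟩).card
        = 2^((b:ℕ) - min (a:ℕ) (b:ℕ) + 1) := by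
    intro b hb
    obtain ⟨hb2, hbα⟩ := Finset.mem_Icc.mp b.2
    have hm : min (a:ℕ) (b:ℕ) - 1 ≤ (b:ℕ) := by omega
    have hfilter : (Finset.univ.filter fun j : ZMod (2^(b:ℕ)) => (modelGraph α).Adj ⟨a, i⟩ ⟨b, j⟩)
        = Finset.univ.filter fun j : ZMod (2^(b:ℕ)) =>
            ((j.val : ℕ) : ZMod (2^(min (a:ℕ) (b:ℕ) - 1))) = ((i.val : ℕ) : ZMod (2^(min (a:ℕ) (b:ℕ) - 1))) := by
      apply Finset.filter_congr
      intro j _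
      show ((⟨a, i⟩ : V α) ≠ ⟨b, j⟩ ∧ _) ↔ _
      constructor
      · rintro ⟨_, h⟩
        exact h.symm
      · intro h
        refine ⟨?_, h.symm⟩
        intro hcontra
        exact hb (congrArg Sigma.fst hcontra).symm
    rw [hfilter, count_fiber hm]
    congr 1
    omega
  have hself : (Finset.univ.filter fun j : ZMod (2^(a:ℕ)) => (modelGraph α).Adj ⟨a, i⟩ ⟨a, j⟩).card + 1
      = 2^((a:ℕ) - min (a:ℕ) (a:ℕ) + 1) := by
    have hm : min (a:ℕ) (a:ℕ) - 1 ≤ (a:ℕ) := by omega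
    have hfilter : (Finset.univ.filter fun j : ZMod (2^(a:ℕ)) => (modelGraph α).Adj ⟨a, i⟩ ⟨a, j⟩)
        = (Finset.univ.filter fun j : ZMod (2^(a:ℕ)) =>
            ((j.val : ℕ) : ZMod (2^(min (a:ℕ) (a:ℕ) - 1))) = ((i.val : ℕ) : ZMod (2^(min (a:ℕ) (a:ℕ) - 1)))).erase i := by
      ext j
      simp only [Finset.mem_filter, Finset.mem_erase, Finset.mem_univ, true_and]
      constructor
      · rintro ⟨hne, h⟩
        refine ⟨?_, h.symm⟩
        intro hcontra
        exact hne (by rw [hcontra])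
      · rintro ⟨hne, h⟩
        refine ⟨?_, h.symm⟩
        intro hcontra
        obtain ⟨-, h2⟩ := Sigma.mk.inj_iff.mp hcontra
        exact hne (eq_of_heq h2).symm
    have hi : i ∈ (Finset.univ.filter fun j : ZMod (2^(a:ℕ)) =>
        ((j.val : ℕ) : ZMod (2^(min (a:ℕ) (a:ℕ) - 1))) = ((i.val : ℕ) : ZMod (2^(min (a:ℕ) (a:ℕ) - 1)))) := by
      simp
    rw [hfilter, Finset.card_erase_of_mem hi, count_fiber hm]
    have h2 : (a:ℕ) - min (a:ℕ) (a:ℕ) + 1 = 1 := by omega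
    have h1 : (a:ℕ) - (min (a:ℕ) (a:ℕ) - 1) = 1 := by omega
    rw [h1, h2]
    norm_num
  rw [add_right_comm, hself]
  congr 1
  apply Finset.sum_congr rfl
  intro b hb
  exact hmain b (Finset.ne_of_mem_erase hb)


lemma arith (α : ℕ) (hα : 2 ≤ α) :
    ∑ k ∈ Finset.Icc 2 α, ((2:ℤ)^k * ((∑ l ∈ Finset.Icc 2 α, (2:ℤ)^(l - min k l + 1)) - 1))
      = 2^(α+1) * (4*(α:ℤ) - 11) + 28 := by
  induction α, hα using Nat.le_induction with
  | base => norm_num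
  | succ α hα ih =>
    rw [Finset.sum_Icc_succ_top (by omega : 2 ≤ α + 1)]
    have h1 : ∀ k ∈ Finset.Icc 2 α,
        (2:ℤ)^k * ((∑ l ∈ Finset.Icc 2 (α+1), (2:ℤ)^(l - min k l + 1)) - 1)
          = (2:ℤ)^k * ((∑ l ∈ Finset.Icc 2 α, (2:ℤ)^(l - min k l + 1)) - 1) + 2^(α+2) := by
      intro k hk
      obtain ⟨hk2, hkα⟩ := Finset.mem_Icc.mp hk
      rw [Finset.sum_Icc_succ_top (by omega : 2 ≤ α + 1)]
      have he : α + 1 - min k (α+1) + 1 = α + 2 - k := by omega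
      rw [he]
      have h2 : (2:ℤ)^k * 2^(α+2-k) = 2^(α+2) := by
        rw [← pow_add]; congr 1; omega
      linear_combination h2
    rw [Finset.sum_congr rfl h1, Finset.sum_add_distrib, ih, Finset.sum_const, Nat.card_Icc]
    have h3 : ∑ l ∈ Finset.Icc 2 (α+1), (2:ℤ)^(l - min (α+1) l + 1)
        = ∑ l ∈ Finset.Icc 2 (α+1), 2 := by
      apply Finset.sum_congr rfl
      intro l hl
      obtain ⟨hl2, hlα⟩ := Finset.mem_Icc.mp hl
      have : l - min (α+1) l + 1 = 1 := by omega
      rw [this, pow_one]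
    rw [h3, Finset.sum_const, Nat.card_Icc]
    have hc1 : ((α + 1 - 2 : ℕ) : ℤ) = (α:ℤ) - 1 := by omega
    have hc2 : ((α + 1 + 1 - 2 : ℕ) : ℤ) = (α:ℤ) := by omega
    rw [nsmul_eq_mul, nsmul_eq_mul, hc1, hc2]
    push_cast
    rw [show α + 1 + 1 = α + 2 by ring, pow_succ, pow_succ]
    ring


lemma model_card (α : ℕ) (hα : 2 ≤ α) :
    (Nat.card (modelGraph α).edgeSet : ℤ) = 2^α * (4*(α:ℤ) - 11) + 14 := by
  classical
  have hNat : Nat.card (modelGraph α).edgeSet = (modelGraph α).edgeFinset.card := by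
    rw [Nat.card_eq_fintype_card, SimpleGraph.edgeFinset_card]
  have hsum := SimpleGraph.sum_degrees_eq_twice_card_edges (modelGraph α)
  have hv : ∑ v : V α, ((modelGraph α).degree v + 1)
      = ∑ k ∈ Finset.Icc 2 α, 2^k * (∑ l ∈ Finset.Icc 2 α, 2^(l - min k l + 1)) := by
    rw [← Finset.univ_sigma_univ, Finset.sum_sigma]
    rw [← Finset.sum_coe_sort (Finset.Icc 2 α)
      (fun k => 2^k * (∑ l ∈ Finset.Icc 2 α, 2^(l - min k l + 1)))]
    apply Finset.sum_congr rfl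
    intro a _
    rw [Finset.sum_congr rfl (fun i _ => degree_add_one α a i),
      Finset.sum_const, Finset.card_univ, ZMod.card, smul_eq_mul]
  have hv2 : ∑ v : V α, ((modelGraph α).degree v + 1)
      = 2 * (modelGraph α).edgeFinset.card + Fintype.card (V α) := by
    rw [Finset.sum_add_distrib, hsum, Finset.sum_const, Finset.card_univ, smul_eq_mul, mul_one]
  have hV : Fintype.card (V α) = ∑ k ∈ Finset.Icc 2 α, 2^k := by
    rw [Fintype.card_sigma, ← Finset.sum_coe_sort (Finset.Icc 2 α) (fun k => 2^k)]
    exact Finset.sum_congr rfl (fun a _ => ZMod.card _)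
  have hcast : 2 * ((modelGraph α).edgeFinset.card : ℤ) + (Fintype.card (V α) : ℤ)
      = ∑ k ∈ Finset.Icc 2 α, ((2:ℤ)^k * (∑ l ∈ Finset.Icc 2 α, (2:ℤ)^(l - min k l + 1))) := by
    have h := congrArg (fun n : ℕ => (n : ℤ)) (hv2.symm.trans hv)
    push_cast at h
    exact h
  have hVZ : (Fintype.card (V α) : ℤ) = ∑ k ∈ Finset.Icc 2 α, (2:ℤ)^k := by
    rw [hV]; push_cast; rfl
  have hZ : 2 * ((modelGraph α).edgeFinset.card : ℤ)
      = ∑ k ∈ Finset.Icc 2 α, ((2:ℤ)^k * ((∑ l ∈ Finset.Icc 2 α, (2:ℤ)^(l - min k l + 1)) - 1)) := by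
    have hsplit : ∑ k ∈ Finset.Icc 2 α, ((2:ℤ)^k * ((∑ l ∈ Finset.Icc 2 α, (2:ℤ)^(l - min k l + 1)) - 1))
        = (∑ k ∈ Finset.Icc 2 α, (2:ℤ)^k * (∑ l ∈ Finset.Icc 2 α, (2:ℤ)^(l - min k l + 1)))
          - ∑ k ∈ Finset.Icc 2 α, (2:ℤ)^k := by
      rw [← Finset.sum_sub_distrib]
      exact Finset.sum_congr rfl (fun k _ => by ring)
    rw [hsplit, ← hcast, ← hVZ]
    ring
  have h2 := hZ.trans (arith α hα)
  rw [pow_succ] at h2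
  rw [hNat]
  linarith


end Stmt5

/-- for `n = 2^α`, `α ≥ 2`, the number of edges of `Γ_N(D_n)`
equals `2^α (4α - 11) + 14` (as an integer identity). -/
theorem stmt_5 (α : ℕ) (hα : 2 ≤ α) :
    (Nat.card (permGraphN (DihedralGroup (2 ^ α))).edgeSet : ℤ) =
      2 ^ α * (4 * (α : ℤ) - 11) + 14 := by
  have hcard : Nat.card (permGraphN (DihedralGroup (2 ^ α))).edgeSet
      = Nat.card (Stmt5.modelGraph α).edgeSet :=
    (Nat.card_congr (Stmt5.graphIso hα).mapEdgeSet).symm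
  rw [hcard]
  exact Stmt5.model_card α hα
end

section
/- Let n ≥ 3 be an integer that is deficient, i.e., σ(n) < 2n. Then the permutability graph of non-normal subgroups Γ_N(D_n) of the dihedral group D_n is not Hamiltonian (it contains no cycle passing through every vertex). -/
open scoped Pointwise

set_option linter.unusedSectionVars false
set_option linter.unusedVariables false
set_option maxHeartbeats 1000000

section WalkHelpers
open SimpleGraph

lemma walk_getVert_eq_support_getElem {V : Type*} {G : SimpleGraph V} {u v : V} (p : G.Walk u v)
    {i : ℕ} (h : i < p.support.length) : p.getVert i = p.support[i] := by
  induction p generalizing i with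
  | nil => simp only [Walk.support_nil, List.length_cons, List.length_nil] at h
           interval_cases i; simp [Walk.getVert]
  | cons hadj q ih =>
      cases i with
      | zero => simp [Walk.getVert]
      | succ i =>
          simp only [Walk.support_cons, List.length_cons] at h
          simpa [Walk.getVert] using ih (Nat.lt_of_succ_lt_succ h)

lemma hamcycle_getVert_inj {V : Type*} [DecidableEq V] {G : SimpleGraph V} {a : V} {p : G.Walk a a}
    (hp : p.IsHamiltonianCycle) {i j : ℕ} (hi : i < p.length) (hj : j < p.length)
    (hij : p.getVert i = p.getVert j) : i = j := by
  classical
  have hnn : p.support.tail.Nodup := by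
    rw [← Walk.support_tail_of_not_nil p hp.1.not_nil]
    exact List.nodup_iff_count_le_one.2 fun x => le_of_eq (hp.isHamiltonian_tail x)
  have hlen : p.support.length = p.length + 1 := p.length_support
  have htl : p.support.tail.length = p.length := by
    rw [List.length_tail, hlen]; omega
  have hsupp : ∀ k (h1 : k < p.length + 1) (h2 : 1 ≤ k),
      p.support[k]'(by omega) = p.support.tail[k-1]'(by omega) := by
    intro k h1 h2
    rw [List.getElem_tail]
    congr 1; omega
  have hlast : p.support.tail[p.length - 1]'(by rw [htl]; omega) = a := by
    have h0 : 0 < p.length := by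
      have := hp.1.three_le_length; omega
    have : p.getVert p.length = a := p.getVert_length
    rw [walk_getVert_eq_support_getElem p (by omega), hsupp p.length (by omega) (by omega)] at this
    exact this
  have h0 : 0 < p.length := by have := hp.1.three_le_length; omega
  rw [walk_getVert_eq_support_getElem p (by omega), walk_getVert_eq_support_getElem p (by omega)] at hij
  have hget0 : ∀ k (hk : k < p.length), p.support[k]'(by omega) = a → k = 0 := by
    intro k hk hka
    by_contra hk0
    have h1k : 1 ≤ k := by omega
    rw [hsupp k (by omega) h1k] at hka
    have := (List.Nodup.getElem_inj_iff hnn).1 (hka.trans hlast.symm)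
    omega
  rcases Nat.eq_zero_or_pos i with hi0 | hip
  · subst hi0
    have : p.support[0] = a := by
      rw [← walk_getVert_eq_support_getElem p (by omega)]; exact p.getVert_zero
    rw [this] at hij
    exact (hget0 j hj hij.symm).symm
  · rcases Nat.eq_zero_or_pos j with hj0 | hjp
    · subst hj0
      have : p.support[0] = a := by
        rw [← walk_getVert_eq_support_getElem p (by omega)]; exact p.getVert_zero
      rw [this] at hij
      exact (hget0 i hi hij)
    · rw [hsupp i (by omega) hip, hsupp j (by omega) hjp] at hij
      have := (List.Nodup.getElem_inj_iff hnn).1 hij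
      omega

lemma hamcycle_getVert_surj {V : Type*} [DecidableEq V] {G : SimpleGraph V} {a : V} {p : G.Walk a a}
    (hp : p.IsHamiltonianCycle) (v : V) : ∃ k, k < p.length ∧ p.getVert k = v := by
  have hv := hp.mem_support v
  rw [Walk.mem_support_iff_exists_getVert] at hv
  obtain ⟨k, hk1, hk2⟩ := hv
  have h0 : 0 < p.length := by have := hp.1.three_le_length; omega
  rcases eq_or_lt_of_le hk2 with h | h
  · exact ⟨0, h0, by rw [p.getVert_zero, ← hk1, h, p.getVert_length]⟩
  · exact ⟨k, h, hk1⟩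



private lemma exists_offset (N i kv : ℕ) (hN : 0 < N) (hkv : kv < N) :
    ∃ k, 1 ≤ k ∧ k ≤ N ∧ (i + k) % N = kv := by
  have h1 := Nat.mod_add_div i N
  have h2 : i % N < N := Nat.mod_lt _ hN
  rcases le_or_gt kv (i % N) with h | h
  · refine ⟨N - i % N + kv, by omega, by omega, ?_⟩
    have h3 : i + (N - i % N + kv) = N * (i / N + 1) + kv := by ring_nf; omega
    rw [h3, Nat.mul_add_mod, Nat.mod_eq_of_lt hkv]
  · refine ⟨kv - i % N, by omega, by omega, ?_⟩
    have h3 : i + (kv - i % N) = N * (i / N) + kv := by omega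
    rw [h3, Nat.mul_add_mod, Nat.mod_eq_of_lt hkv]

private lemma offset_cancel {N i A B : ℕ} (hN : 0 < N) (hA1 : 1 ≤ A) (hA2 : A ≤ N)
    (hB1 : 1 ≤ B) (hB2 : B ≤ N) (h : (i + A) % N = (i + B) % N) : A = B := by
  have h' : A % N = B % N := Nat.ModEq.add_left_cancel' i h
  have hA : (A = N ∧ A % N = 0) ∨ A % N = A := by
    rcases eq_or_lt_of_le hA2 with h | h
    · exact Or.inl ⟨h.symm ▸ rfl, by rw [h]; exact Nat.mod_self N⟩
    · exact Or.inr (Nat.mod_eq_of_lt h)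
  have hB : (B = N ∧ B % N = 0) ∨ B % N = B := by
    rcases eq_or_lt_of_le hB2 with h | h
    · exact Or.inl ⟨h.symm ▸ rfl, by rw [h]; exact Nat.mod_self N⟩
    · exact Or.inr (Nat.mod_eq_of_lt h)
  omega

lemma not_isHamiltonian_of_classes {V : Type*} [Fintype V] [DecidableEq V]
    (G : SimpleGraph V) {C : Type*} [Fintype C] [DecidableEq C]
    (f : V → C) (S : Finset V)
    (h1 : ∀ v w, G.Adj v w → v ∉ S → w ∉ S → f v = f w)
    (h2 : ∀ c : C, ∃ v, v ∉ S ∧ f v = c)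
    (h2le : 2 ≤ Fintype.card C)
    (hlt : S.card < Fintype.card C) :
    ¬ G.IsHamiltonian := by
  classical
  intro hham
  obtain ⟨c1, c2, hc12⟩ := Fintype.exists_pair_of_one_lt_card (by omega : 1 < Fintype.card C)
  obtain ⟨v1, hv1S, hv1⟩ := h2 c1
  obtain ⟨v2, hv2S, hv2⟩ := h2 c2
  have hV2 : 1 < Fintype.card V :=
    Fintype.one_lt_card_iff_nontrivial.2 ⟨v1, v2, fun h => hc12 (by rw [← hv1, ← hv2, h])⟩
  obtain ⟨a, p, hp⟩ := hham (by omega)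
  set N := p.length with hNdef
  have hN3 : 3 ≤ N := hp.1.three_le_length
  have hN0 : 0 < N := by omega
  set u : ℕ → V := fun k => p.getVert (k % N) with hu
  have hu_congr : ∀ {x y : ℕ}, x % N = y % N → u x = u y := by
    intro x y h; simp only [hu, h]
  have hu_adj : ∀ k, G.Adj (u k) (u (k + 1)) := by
    intro k
    have hr : k % N < N := Nat.mod_lt _ hN0
    have hadj := p.adj_getVert_succ hr
    have hmod : (k + 1) % N = (k % N + 1) % N := by
      conv_lhs => rw [Nat.add_mod]
      rw [Nat.mod_eq_of_lt (show 1 < N by omega)]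
    by_cases hcase : k % N + 1 = N
    · have h2' : (k + 1) % N = 0 := by rw [hmod, hcase, Nat.mod_self]
      show G.Adj (p.getVert (k % N)) (p.getVert ((k+1) % N))
      rw [h2']
      have hz : p.getVert 0 = p.getVert N := by
        rw [p.getVert_zero]; exact (p.getVert_length).symm
      rw [hz]
      rw [hcase] at hadj
      exact hadj
    · have h2' : (k + 1) % N = k % N + 1 := by
        rw [hmod]; exact Nat.mod_eq_of_lt (by omega)
      show G.Adj (p.getVert (k % N)) (p.getVert ((k+1) % N))
      rw [h2']; exact hadj
  have hu_surj : ∀ v : V, ∃ k, k < N ∧ u k = v := by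
    intro v
    obtain ⟨k, hk, hkv⟩ := hamcycle_getVert_surj hp v
    exact ⟨k, hk, by simp only [hu]; rw [Nat.mod_eq_of_lt hk]; exact hkv⟩
  have hu_inj : ∀ {x y : ℕ}, u x = u y → x % N = y % N := by
    intro x y h
    exact hamcycle_getVert_inj hp (Nat.mod_lt _ hN0) (Nat.mod_lt _ hN0) h
  -- choose a starting point just before a "crossing"
  have hstep : ∃ i, u i ∉ S ∧ (u (i + 1) ∈ S ∨ f (u (i + 1)) ≠ f (u i)) := by
    by_contra hcon
    push_neg at hcon
    obtain ⟨k1, hk1, hk1v⟩ := hu_surj v1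
    obtain ⟨k2, hk2, hk2v⟩ := hu_surj v2
    have hall : ∀ t, u (k1 + t) ∉ S ∧ f (u (k1 + t)) = c1 := by
      intro t
      induction t with
      | zero => exact ⟨by rwa [Nat.add_zero, hk1v], by rwa [Nat.add_zero, hk1v]⟩
      | succ t ih =>
          obtain ⟨hS', hf'⟩ := hcon (k1 + t) ih.1
          rw [← Nat.add_assoc] at *
          exact ⟨hS', by rw [hf', ih.2]⟩
    obtain ⟨k, hk1', hkN, hkmod⟩ := exists_offset N k1 k2 hN0 hk2
    have := hall k
    rw [hu_congr (x := k1 + k) (y := k2) (by rw [hkmod, Nat.mod_eq_of_lt hk2]), hk2v] at this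
    exact hc12 ((this.2.symm).trans hv2)
  obtain ⟨i₀, hi₀S, hi₀x⟩ := hstep
  -- for each class, the minimal entry offset
  have hex : ∀ c : C, ∃ k, 1 ≤ k ∧ k ≤ N ∧ u (i₀ + k) ∉ S ∧ f (u (i₀ + k)) = c := by
    intro c
    obtain ⟨v, hvS, hvc⟩ := h2 c
    obtain ⟨kv, hkv, hkvv⟩ := hu_surj v
    obtain ⟨k, hk1, hkN, hkmod⟩ := exists_offset N i₀ kv hN0 hkv
    have : u (i₀ + k) = v := by
      rw [hu_congr (x := i₀ + k) (y := kv) (by rw [hkmod, Nat.mod_eq_of_lt hkv])]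
      exact hkvv
    exact ⟨k, hk1, hkN, by rwa [this], by rwa [this]⟩
  set kk : C → ℕ := fun c => Nat.find (hex c) with hkk
  have hkk_spec : ∀ c, 1 ≤ kk c ∧ kk c ≤ N ∧ u (i₀ + kk c) ∉ S ∧ f (u (i₀ + kk c)) = c :=
    fun c => Nat.find_spec (hex c)
  have hkk_min : ∀ c t, t < kk c → ¬ (1 ≤ t ∧ t ≤ N ∧ u (i₀ + t) ∉ S ∧ f (u (i₀ + t)) = c) :=
    fun c t ht => Nat.find_min (hex c) ht
  set jj : C → ℕ := fun c => Nat.findGreatest (fun j => u (i₀ + j) ∉ S) (kk c - 1) with hjj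
  have hjj_spec : ∀ c, u (i₀ + jj c) ∉ S := by
    intro c
    exact Nat.findGreatest_spec (P := fun j => u (i₀ + j) ∉ S) (Nat.zero_le _)
      (by simpa using hi₀S)
  have hjj_le : ∀ c, jj c ≤ kk c - 1 := fun c => Nat.findGreatest_le _
  have hjj_max : ∀ c t, jj c < t → t ≤ kk c - 1 → u (i₀ + t) ∈ S := by
    intro c t ht1 ht2
    by_contra hcon
    exact (Nat.findGreatest_is_greatest ht1 ht2) hcon
  set s : C → V := fun c => u (i₀ + jj c + 1) with hs
  have hsS : ∀ c, s c ∈ S := by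
    intro c
    by_contra hnot
    obtain ⟨hk1, hkN, hkS, hkf⟩ := hkk_spec c
    have hj := hjj_le c
    by_cases hcase : jj c + 1 ≤ kk c - 1
    · have hmem := hjj_max c (jj c + 1) (by omega) hcase
      rw [show i₀ + (jj c + 1) = i₀ + jj c + 1 from by omega] at hmem
      exact hnot hmem
    · have hjeq : jj c + 1 = kk c := by omega
      have hadj := hu_adj (i₀ + jj c)
      have hfeq : f (u (i₀ + jj c)) = f (u (i₀ + jj c + 1)) :=
        h1 _ _ hadj (hjj_spec c) hnot
      have hfc : f (u (i₀ + jj c)) = c := by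
        rw [hfeq, show i₀ + jj c + 1 = i₀ + kk c by omega]
        exact hkf
      rcases Nat.eq_zero_or_pos (jj c) with hj0 | hjp
      · rw [hj0] at hjeq
        have hk1' : kk c = 1 := by omega
        rcases hi₀x with hS' | hf'
        · rw [show i₀ + kk c = i₀ + 1 by omega] at hkS
          exact hkS hS'
        · rw [hj0, Nat.add_zero] at hfc
          rw [show i₀ + kk c = i₀ + 1 by omega] at hkf
          exact hf' (by rw [hkf, hfc])
      · exact hkk_min c (jj c) (by omega) ⟨hjp, by omega, hjj_spec c, hfc⟩
  have key : ∀ c c', jj c = jj c' → kk c < kk c' → False := by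
    intro c c' hj hk
    obtain ⟨hk1, hkN, hkS, hkf⟩ := hkk_spec c
    have : kk c ≤ jj c' := Nat.le_findGreatest (by omega) hkS
    have := hjj_le c
    omega
  have hinj : Function.Injective s := by
    intro c c' h
    have h' : (i₀ + jj c + 1) % N = (i₀ + jj c' + 1) % N := hu_inj h
    have hjc : jj c + 1 ≤ N := by have := hjj_le c; have := (hkk_spec c).2.1; omega
    have hjc' : jj c' + 1 ≤ N := by have := hjj_le c'; have := (hkk_spec c').2.1; omega
    have hjeq : jj c = jj c' := by
      have := offset_cancel hN0 (show 1 ≤ jj c + 1 by omega) hjc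
        (show 1 ≤ jj c' + 1 by omega) hjc'
        (by rw [show i₀ + (jj c + 1) = i₀ + jj c + 1 by omega,
                show i₀ + (jj c' + 1) = i₀ + jj c' + 1 by omega]; exact h')
      omega
    by_contra hcc
    have hkne : kk c ≠ kk c' := by
      intro hk
      apply hcc
      have h1' := (hkk_spec c).2.2.2
      have h2' := (hkk_spec c').2.2.2
      rw [← h1', ← h2', hk]
    rcases lt_or_gt_of_ne hkne with h | h
    · exact key c c' hjeq h
    · exact key c' c hjeq.symm h
  have : Fintype.card C ≤ S.card := by
    rw [← Finset.card_univ]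
    exact Finset.card_le_card_of_injOn s (fun c _ => hsS c) hinj.injOn
  omega

end WalkHelpers

section Dihedral
open DihedralGroup

variable {n : ℕ}

lemma r_inv (i : ZMod n) : (r i)⁻¹ = r (-i) := by
  apply inv_eq_of_mul_eq_one_right
  rw [r_mul_r, add_neg_cancel]; rfl

lemma sr_inv (i : ZMod n) : (sr i)⁻¹ = sr i := by
  apply inv_eq_of_mul_eq_one_right
  exact sr_mul_self i

/-- the two-element subgroup {1, sr w} -/
def reflSubgroup (n : ℕ) (w : ZMod n) : Subgroup (DihedralGroup n) where
  carrier := {1, sr w}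
  one_mem' := Or.inl rfl
  mul_mem' := by
    rintro a b (rfl | ha) (rfl | hb)
    · exact Or.inl (one_mul 1)
    · simp only [Set.mem_insert_iff, Set.mem_singleton_iff] at hb ⊢
      rw [one_mul]; exact Or.inr hb
    · simp only [Set.mem_insert_iff, Set.mem_singleton_iff] at ha ⊢
      rw [ha, mul_one]; exact Or.inr rfl
    · simp only [Set.mem_insert_iff, Set.mem_singleton_iff] at ha hb ⊢
      rw [ha, hb, sr_mul_self]; exact Or.inl rfl
  inv_mem' := by
    rintro a (rfl | ha)
    · exact Or.inl inv_one
    · simp only [Set.mem_insert_iff, Set.mem_singleton_iff] at ha ⊢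
      rw [ha, sr_inv]; exact Or.inr rfl

lemma mem_reflSubgroup {w : ZMod n} {x : DihedralGroup n} :
    x ∈ reflSubgroup n w ↔ x = 1 ∨ x = sr w := Iff.rfl

lemma reflSubgroup_not_normal (hn : 3 ≤ n) (w : ZMod n) : ¬ (reflSubgroup n w).Normal := by
  intro hN
  have h2 : ((2 : ℕ) : ZMod n) ≠ 0 := by
    haveI : NeZero n := ⟨by omega⟩
    rw [Ne, ZMod.natCast_eq_zero_iff]
    intro hdvd
    exact absurd (Nat.le_of_dvd (by omega) hdvd) (by omega)
  have := hN.conj_mem (sr w) (Or.inr rfl) (r 1)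
  rw [mem_reflSubgroup] at this
  rcases this with h | h
  · rw [r_inv, r_mul_sr, sr_mul_r] at h
    exact absurd h (by rw [DihedralGroup.one_def]; intro h; cases h)
  · rw [r_inv, r_mul_sr, sr_mul_r] at h
    have : w - 1 + -1 = w := by exact sr.inj h
    have h2' : (2 : ZMod n) = 0 := by linear_combination -this
    exact h2 (by push_cast; exact h2')

lemma exists_sr_mem {H : Subgroup (DihedralGroup n)} (hH : ¬ H.Normal) :
    ∃ u : ZMod n, sr u ∈ H := by
  by_contra hcon
  push_neg at hcon
  apply hH
  constructor
  intro h hh g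
  cases h with
  | r k =>
      cases g with
      | r j => rwa [r_mul_r, r_inv, r_mul_r, show j + k + -j = k by ring]
      | sr j =>
          rw [sr_inv, sr_mul_r, sr_mul_sr, show j - (j + k) = -k by ring, ← r_inv]
          exact H.inv_mem hh
  | sr k => exact absurd hh (hcon k)

lemma good_rot {Q : ℕ} (hQn : Q ∣ n) {H : Subgroup (DihedralGroup n)}
    (hgood : ∀ u v : ZMod n, sr u ∈ H → sr v ∈ H →
      ZMod.castHom hQn (ZMod Q) u = ZMod.castHom hQn (ZMod Q) v)
    {w : ZMod n} (hw : sr w ∈ H) {t : ZMod n} (ht : r t ∈ H) :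
    ZMod.castHom hQn (ZMod Q) t = 0 := by
  have : sr (w + t) ∈ H := by
    rw [← sr_mul_r]; exact H.mul_mem hw ht
  have := hgood _ _ this hw
  rw [map_add] at this
  linear_combination this

open scoped Pointwise in
lemma adj_class {Q q : ℕ} (hQn : Q ∣ n) (hqQ : q ∣ Q)
    (hkey : ∀ x : ZMod Q, x + x = 0 → ZMod.castHom hqQ (ZMod q) x = 0)
    {H K : Subgroup (DihedralGroup n)}
    (hgoodH : ∀ u v : ZMod n, sr u ∈ H → sr v ∈ H →
      ZMod.castHom hQn (ZMod Q) u = ZMod.castHom hQn (ZMod Q) v)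
    (hgoodK : ∀ u v : ZMod n, sr u ∈ K → sr v ∈ K →
      ZMod.castHom hQn (ZMod Q) u = ZMod.castHom hQn (ZMod Q) v)
    (hperm : (H : Set (DihedralGroup n)) * (K : Set (DihedralGroup n))
           = (K : Set (DihedralGroup n)) * (H : Set (DihedralGroup n)))
    {u v : ZMod n} (hu : sr u ∈ H) (hv : sr v ∈ K) :
    ZMod.castHom hqQ (ZMod q) (ZMod.castHom hQn (ZMod Q) u)
      = ZMod.castHom hqQ (ZMod q) (ZMod.castHom hQn (ZMod Q) v) := by
  set π := ZMod.castHom hqQ (ZMod q)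
  set ψ := ZMod.castHom hQn (ZMod Q)
  have hx : (sr u : DihedralGroup n) * (sr v) ∈
      (K : Set (DihedralGroup n)) * (H : Set (DihedralGroup n)) := by
    rw [← hperm]
    exact Set.mul_mem_mul hu hv
  rw [sr_mul_sr] at hx
  rw [Set.mem_mul] at hx
  obtain ⟨k, hk, h, hh, hmul⟩ := hx
  have hkK : k ∈ K := hk
  have hhH : h ∈ H := hh
  cases k with
  | r s =>
      cases h with
      | r t =>
          rw [r_mul_r] at hmul
          have heq : s + t = v - u := r.inj hmul
          have hs0 : ψ s = 0 := good_rot hQn hgoodK hv hkK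
          have ht0 : ψ t = 0 := good_rot hQn hgoodH hu hhH
          have : ψ (v - u) = 0 := by
            rw [← heq, map_add, hs0, ht0, add_zero]
          have huv : ψ u = ψ v := by
            rw [map_sub] at this
            linear_combination -this
          rw [huv]
      | sr t =>
          rw [r_mul_sr] at hmul
          exact absurd hmul (by simp)
  | sr s =>
      cases h with
      | r t =>
          rw [sr_mul_r] at hmul
          exact absurd hmul (by simp)
      | sr t =>
          rw [sr_mul_sr] at hmul
          have heq : t - s = v - u := r.inj hmul
          have h1 : ψ t = ψ u := hgoodH _ _ hhH hu
          have h2 : ψ s = ψ v := hgoodK _ _ hkK hv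
          have hX : ψ (v - u) + ψ (v - u) = 0 := by
            have e1 : ψ (v - u) = ψ v - ψ u := by rw [map_sub]
            have e2 : ψ (v - u) = ψ u - ψ v := by
              rw [← heq, map_sub, h1, h2]
            linear_combination e1 + e2
          have hz := hkey _ hX
          rw [map_sub, map_sub] at hz
          linear_combination -hz

section counting
open scoped Classical
variable [NeZero n]

lemma r_natCast_pow (k m : ℕ) : (r ((k : ℕ) : ZMod n)) ^ m = r (((k * m : ℕ)) : ZMod n) := by
  induction m with
  | zero => rw [pow_zero, Nat.mul_zero, Nat.cast_zero, one_def]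
  | succ m ih =>
      rw [pow_succ, ih, r_mul_r]
      congr 1
      push_cast
      ring

lemma ex_rot (H : Subgroup (DihedralGroup n)) : ∃ k : ℕ, 0 < k ∧ r ((k : ℕ) : ZMod n) ∈ H :=
  ⟨n, NeZero.pos n, by rw [ZMod.natCast_self, ← one_def]; exact H.one_mem⟩

noncomputable def dd (H : Subgroup (DihedralGroup n)) : ℕ := Nat.find (ex_rot H)

lemma dd_pos (H : Subgroup (DihedralGroup n)) : 0 < dd H := (Nat.find_spec (ex_rot H)).1

lemma dd_mem (H : Subgroup (DihedralGroup n)) : r ((dd H : ℕ) : ZMod n) ∈ H :=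
  (Nat.find_spec (ex_rot H)).2

lemma mem_rot_iff (H : Subgroup (DihedralGroup n)) (k : ℕ) :
    r ((k : ℕ) : ZMod n) ∈ H ↔ dd H ∣ k := by
  constructor
  · intro hk
    by_contra hdvd
    have hmod : ¬ (k % dd H = 0) := fun h => hdvd (Nat.dvd_of_mod_eq_zero h)
    have hlt : k % dd H < dd H := Nat.mod_lt _ (dd_pos H)
    have hmem : r ((k % dd H : ℕ) : ZMod n) ∈ H := by
      have h1 : (r ((dd H : ℕ) : ZMod n)) ^ (k / dd H) ∈ H := H.pow_mem (dd_mem H) _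
      rw [r_natCast_pow] at h1
      have h2 : r ((k : ℕ) : ZMod n) * (r ((dd H * (k / dd H) : ℕ) : ZMod n))⁻¹ ∈ H :=
        H.mul_mem hk (H.inv_mem h1)
      rw [r_inv, r_mul_r] at h2
      have hc : ((k % dd H : ℕ) : ZMod n) + ((dd H * (k / dd H) : ℕ) : ZMod n)
          = ((k : ℕ) : ZMod n) := by
        rw [← Nat.cast_add, Nat.mod_add_div]
      have h3 : ((k : ℕ) : ZMod n) + -(((dd H * (k / dd H)) : ℕ) : ZMod n)
          = ((k % dd H : ℕ) : ZMod n) := by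
        linear_combination -hc
      rwa [h3] at h2
    have hge : dd H ≤ k % dd H := Nat.find_min' (ex_rot H) ⟨Nat.pos_of_ne_zero hmod, hmem⟩
    omega
  · rintro ⟨t, rfl⟩
    have := H.pow_mem (dd_mem H) t
    rwa [r_natCast_pow] at this

end counting

section counting2
open scoped Classical
variable [NeZero n]

lemma zmod_self_cast (x : ZMod n) : ((x.val : ℕ) : ZMod n) = x :=
  ZMod.natCast_rightInverse x

lemma dd_dvd (H : Subgroup (DihedralGroup n)) : dd H ∣ n := by
  rw [← mem_rot_iff, ZMod.natCast_self, ← one_def]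
  exact H.one_mem

lemma mem_rot_iff' (H : Subgroup (DihedralGroup n)) (x : ZMod n) :
    r x ∈ H ↔ dd H ∣ x.val := by
  rw [← mem_rot_iff H x.val, zmod_self_cast]

lemma ex_refl (H : Subgroup (DihedralGroup n)) (hex : ∃ u : ZMod n, sr u ∈ H) :
    ∃ i : ℕ, sr ((i : ℕ) : ZMod n) ∈ H := by
  obtain ⟨u, hu⟩ := hex
  exact ⟨u.val, by rwa [zmod_self_cast]⟩

noncomputable def ii (H : Subgroup (DihedralGroup n)) : ℕ :=
  if hex : ∃ i : ℕ, sr ((i : ℕ) : ZMod n) ∈ H then Nat.find hex else 0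

lemma ii_mem {H : Subgroup (DihedralGroup n)} (hex : ∃ u : ZMod n, sr u ∈ H) :
    sr ((ii H : ℕ) : ZMod n) ∈ H := by
  rw [ii, dif_pos (ex_refl H hex)]
  exact Nat.find_spec (ex_refl H hex)

lemma ii_min {H : Subgroup (DihedralGroup n)} (hex : ∃ u : ZMod n, sr u ∈ H)
    {m : ℕ} (hm : m < ii H) : ¬ sr ((m : ℕ) : ZMod n) ∈ H := by
  rw [ii, dif_pos (ex_refl H hex)] at hm
  exact Nat.find_min (ex_refl H hex) hm

lemma sr_mem_iff {H : Subgroup (DihedralGroup n)} (hex : ∃ u : ZMod n, sr u ∈ H)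
    (x : ZMod n) : sr x ∈ H ↔ dd H ∣ (x - ((ii H : ℕ) : ZMod n)).val := by
  rw [← mem_rot_iff' H]
  constructor
  · intro hx
    have := H.mul_mem (ii_mem hex) hx
    rwa [sr_mul_sr] at this
  · intro hr
    have := H.mul_mem (ii_mem hex) hr
    rwa [sr_mul_r, add_sub_cancel] at this

lemma ii_lt_dd {H : Subgroup (DihedralGroup n)} (hex : ∃ u : ZMod n, sr u ∈ H) :
    ii H < dd H := by
  by_contra hcon
  push_neg at hcon
  have hmem : sr (((ii H - dd H : ℕ) : ℕ) : ZMod n) ∈ H := by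
    have h1 : ((ii H - dd H : ℕ) : ZMod n) = ((ii H : ℕ) : ZMod n) + (-((dd H : ℕ) : ZMod n)) := by
      rw [Nat.cast_sub hcon]; ring
    rw [h1, ← sr_mul_r]
    exact H.mul_mem (ii_mem hex) (by rw [← r_inv]; exact H.inv_mem (dd_mem H))
  exact ii_min hex (by have := dd_pos H; omega) hmem

lemma subgroup_eq_of_dd_ii {H K : Subgroup (DihedralGroup n)}
    (hexH : ∃ u : ZMod n, sr u ∈ H) (hexK : ∃ u : ZMod n, sr u ∈ K)
    (hdd : dd H = dd K) (hii : ii H = ii K) : H = K := by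
  ext g
  cases g with
  | r x => rw [mem_rot_iff', mem_rot_iff', hdd]
  | sr x => rw [sr_mem_iff hexH, sr_mem_iff hexK, hdd, hii]

end counting2

section counting3
open scoped Classical
variable [NeZero n]

lemma eq_top_of_dd_one {H : Subgroup (DihedralGroup n)} (hex : ∃ u : ZMod n, sr u ∈ H)
    (h1 : dd H = 1) : H = ⊤ := by
  rw [Subgroup.eq_top_iff']
  intro g
  cases g with
  | r x => rw [mem_rot_iff', h1]; exact one_dvd _
  | sr x => rw [sr_mem_iff hex, h1]; exact one_dvd _

lemma val_dvd_iff_cast_eq_zero (Q : ℕ) (hQn : Q ∣ n) (x : ZMod n) :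
    Q ∣ x.val ↔ ZMod.castHom hQn (ZMod Q) x = 0 := by
  haveI : NeZero Q := ⟨fun h => by subst h; exact (NeZero.ne n) (Nat.eq_zero_of_zero_dvd hQn)⟩
  conv_rhs => rw [← zmod_self_cast x, map_natCast]
  rw [ZMod.natCast_eq_zero_iff]

end counting3

section counting4
open scoped Classical
variable [NeZero n]

lemma good_of_dvd_dd {Q : ℕ} (hQn : Q ∣ n) {H : Subgroup (DihedralGroup n)}
    (hex : ∃ u : ZMod n, sr u ∈ H) (hdd : Q ∣ dd H) :
    ∀ u v : ZMod n, sr u ∈ H → sr v ∈ H →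
      ZMod.castHom hQn (ZMod Q) u = ZMod.castHom hQn (ZMod Q) v := by
  intro u v hu hv
  have h1 : dd H ∣ (u - ((ii H : ℕ) : ZMod n)).val := (sr_mem_iff hex u).1 hu
  have h2 : dd H ∣ (v - ((ii H : ℕ) : ZMod n)).val := (sr_mem_iff hex v).1 hv
  have e1 : ZMod.castHom hQn (ZMod Q) (u - ((ii H : ℕ) : ZMod n)) = 0 :=
    (val_dvd_iff_cast_eq_zero Q hQn _).1 (dvd_trans hdd h1)
  have e2 : ZMod.castHom hQn (ZMod Q) (v - ((ii H : ℕ) : ZMod n)) = 0 :=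
    (val_dvd_iff_cast_eq_zero Q hQn _).1 (dvd_trans hdd h2)
  rw [map_sub] at e1 e2
  linear_combination e1 - e2

lemma normal_of_dd_two {H : Subgroup (DihedralGroup n)}
    (hex : ∃ u : ZMod n, sr u ∈ H) (h2 : dd H = 2) : H.Normal := by
  have h2n : (2 : ℕ) ∣ n := h2 ▸ dd_dvd H
  have hcrit : ∀ x : ZMod n, sr x ∈ H ↔
      ZMod.castHom h2n (ZMod 2) (x - ((ii H : ℕ) : ZMod n)) = 0 := by
    intro x
    rw [sr_mem_iff hex, h2, val_dvd_iff_cast_eq_zero 2 h2n]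
  set φ := ZMod.castHom h2n (ZMod 2)
  have hφ2 : ∀ y : ZMod n, φ y + φ y = 0 := by
    intro y
    have : (φ y + φ y) = 2 * φ y := by ring
    rw [this]
    have h22 : (2 : ZMod 2) = 0 := by decide
    rw [h22, zero_mul]
  constructor
  intro h hh g
  cases h with
  | r x =>
      cases g with
      | r j =>
          rwa [r_mul_r, r_inv, r_mul_r, show j + x + -j = x by ring]
      | sr j =>
          rw [sr_inv, sr_mul_r, sr_mul_sr, show j - (j + x) = -x by ring, ← r_inv]
          exact H.inv_mem hh
  | sr x =>
      cases g with
      | r j =>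
          rw [r_mul_sr, r_inv, sr_mul_r, hcrit]
          rw [hcrit] at hh
          simp only [map_sub, map_add, map_neg] at hh ⊢
          linear_combination hh - hφ2 j
      | sr j =>
          rw [sr_inv, sr_mul_sr, r_mul_sr, hcrit]
          rw [hcrit] at hh
          simp only [map_sub, map_add, map_neg] at hh ⊢
          linear_combination - hh + hφ2 j - hφ2 ((ii H : ℕ) : ZMod n)
end counting4

lemma core_lemma (n q Q : ℕ) [NeZero n] (hn3 : 3 ≤ n) (hq2 : 2 ≤ q) [NeZero Q]
    (hQn : Q ∣ n) (hqQ : q ∣ Q)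
    (hkey : ∀ x : ZMod Q, x + x = 0 → ZMod.castHom hqQ (ZMod q) x = 0)
    (hcard : ∑ d ∈ n.divisors.filter (fun d => 3 ≤ d ∧ ¬ Q ∣ d), d < q)
    [inst1 : DecidableEq {H : Subgroup (DihedralGroup n) // ¬ H.Normal}]
    [inst2 : Fintype {H : Subgroup (DihedralGroup n) // ¬ H.Normal}] :
    ¬ (permGraphN (DihedralGroup n)).IsHamiltonian := by
  classical
  haveI : NeZero q := ⟨by omega⟩
  set ψ := ZMod.castHom hQn (ZMod Q) with hψ
  set π := ZMod.castHom hqQ (ZMod q) with hπ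
  set Good : Subgroup (DihedralGroup n) → Prop :=
    fun H => ∀ u v : ZMod n, sr u ∈ H → sr v ∈ H → ψ u = ψ v with hGood
  set S : Finset {H : Subgroup (DihedralGroup n) // ¬ H.Normal} :=
    Finset.univ.filter (fun H => ¬ Good H.1) with hS
  set f : {H : Subgroup (DihedralGroup n) // ¬ H.Normal} → ZMod q := fun H =>
    if h : ∃ u : ZMod n, sr u ∈ H.1 then π (ψ h.choose) else 0 with hf
  have hgood_iff : ∀ H, H ∉ S ↔ Good H.1 := by
    intro H
    rw [hS, Finset.mem_filter]
    constructor
    · intro h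
      by_contra hg
      exact h ⟨Finset.mem_univ _, hg⟩
    · intro h hmem
      exact hmem.2 h
  have hf_spec : ∀ (H : {H : Subgroup (DihedralGroup n) // ¬ H.Normal}) (u : ZMod n),
      Good H.1 → sr u ∈ H.1 → f H = π (ψ u) := by
    intro H u hg hu
    have hex : ∃ u : ZMod n, sr u ∈ H.1 := ⟨u, hu⟩
    rw [hf]
    dsimp only
    rw [dif_pos hex, hg _ _ hex.choose_spec hu]
  -- cardinality bound
  have hScard : S.card < q := by
    have hle : S.card ≤ ∑ d ∈ n.divisors.filter (fun d => 3 ≤ d ∧ ¬ Q ∣ d), d := by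
      have := Finset.card_le_card_of_injOn
        (f := fun H : {H : Subgroup (DihedralGroup n) // ¬ H.Normal} =>
          (⟨dd H.1, ii H.1⟩ : Σ _ : ℕ, ℕ))
        (s := S)
        (t := (n.divisors.filter (fun d => 3 ≤ d ∧ ¬ Q ∣ d)).sigma (fun d => Finset.range d))
        ?maps ?inj
      · rwa [Finset.card_sigma, Finset.sum_congr rfl
          (fun d _ => Finset.card_range d)] at this
      · intro H hH
        dsimp only
        have hbad : ¬ Good H.1 := (Finset.mem_filter.1 hH).2
        obtain ⟨u, hu⟩ := exists_sr_mem H.2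
        have hex : ∃ u : ZMod n, sr u ∈ H.1 := ⟨u, hu⟩
        rw [Finset.mem_coe, Finset.mem_sigma]
        refine ⟨Finset.mem_filter.2 ⟨Nat.mem_divisors.2 ⟨dd_dvd _, NeZero.ne n⟩, ?_, ?_⟩,
          Finset.mem_range.2 (ii_lt_dd hex)⟩
        · -- 3 ≤ dd
          show 3 ≤ dd H.1
          have h1 : dd H.1 ≠ 1 := by
            intro h1
            apply H.2
            rw [eq_top_of_dd_one hex h1]
            infer_instance
          have h2 : dd H.1 ≠ 2 := by
            intro h2
            exact H.2 (normal_of_dd_two hex h2)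
          have := dd_pos H.1
          omega
        · -- ¬ Q ∣ dd
          intro hdvd
          exact hbad (good_of_dvd_dd hQn hex hdvd)
      · intro H hH K hK hHK
        have hexH := exists_sr_mem H.2
        have hexK := exists_sr_mem K.2
        simp only [Sigma.mk.inj_iff, heq_eq_eq] at hHK
        exact Subtype.ext (subgroup_eq_of_dd_ii hexH hexK hHK.1 hHK.2)
    omega
  apply not_isHamiltonian_of_classes (permGraphN (DihedralGroup n)) f S
  · -- h1
    intro v w hadj hv hw
    have hgv : Good v.1 := (hgood_iff v).1 hv
    have hgw : Good w.1 := (hgood_iff w).1 hw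
    obtain ⟨u, hu⟩ := exists_sr_mem v.2
    obtain ⟨u', hu'⟩ := exists_sr_mem w.2
    have := adj_class hQn hqQ hkey hgv hgw hadj.2 hu hu'
    rw [hf_spec v u hgv hu, hf_spec w u' hgw hu']
    exact this
  · -- h2
    intro c
    set wc : ZMod n := ((c.val : ℕ) : ZMod n) with hwc
    refine ⟨⟨reflSubgroup n wc, reflSubgroup_not_normal hn3 wc⟩, ?_, ?_⟩
    · rw [hgood_iff]
      intro u v hu hv
      rw [mem_reflSubgroup] at hu hv
      rcases hu with hu | hu
      · exact absurd hu (by rw [one_def]; intro h; cases h)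
      · rcases hv with hv | hv
        · exact absurd hv (by rw [one_def]; intro h; cases h)
        · rw [sr.inj hu, sr.inj hv]
    · have hgood : Good (reflSubgroup n wc) := by
        intro u v hu hv
        rw [mem_reflSubgroup] at hu hv
        rcases hu with hu | hu
        · exact absurd hu (by rw [one_def]; intro h; cases h)
        · rcases hv with hv | hv
          · exact absurd hv (by rw [one_def]; intro h; cases h)
          · rw [sr.inj hu, sr.inj hv]
      rw [hf_spec _ wc hgood (mem_reflSubgroup.2 (Or.inr rfl))]
      rw [hwc, hψ, hπ, map_natCast, map_natCast]
      exact ZMod.natCast_rightInverse c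
  · rw [ZMod.card]; omega
  · rw [ZMod.card]; omega

end Dihedral


lemma sum_divisors_pow_two (a : ℕ) :
    2 ^ (a + 1) - 1 ≤ ∑ e ∈ (2 ^ a).divisors, e := by
  induction a with
  | zero => simp
  | succ a ih =>
      have hsub : (2 ^ a).divisors ⊆ (2 ^ (a + 1)).divisors :=
        Nat.divisors_subset_of_dvd (by positivity) (pow_dvd_pow 2 (by omega))
      have hmem : 2 ^ (a + 1) ∈ (2 ^ (a + 1)).divisors :=
        Nat.mem_divisors_self _ (by positivity)
      have hnot : 2 ^ (a + 1) ∉ (2 ^ a).divisors := by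
        intro h
        have := Nat.le_of_dvd (by positivity) (Nat.mem_divisors.1 h).1
        have h2 : (2:ℕ) ^ a < 2 ^ (a + 1) := by
          exact Nat.pow_lt_pow_right (by omega) (by omega)
        omega
      have hins : insert (2 ^ (a + 1)) ((2 ^ a).divisors) ⊆ (2 ^ (a + 1)).divisors := by
        intro x hx
        rcases Finset.mem_insert.1 hx with rfl | hx
        · exact hmem
        · exact hsub hx
      have hsum : ∑ e ∈ insert (2 ^ (a + 1)) ((2 ^ a).divisors), e
          ≤ ∑ e ∈ (2 ^ (a + 1)).divisors, e :=
        Finset.sum_le_sum_of_subset hins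
      rw [Finset.sum_insert hnot] at hsum
      have : 2 ^ (a + 1 + 1) - 1 ≤ 2 ^ (a + 1) + (2 ^ (a + 1) - 1) := by
        have : (2:ℕ) ^ (a + 1 + 1) = 2 ^ (a+1) + 2 ^ (a+1) := by ring
        have hp : (1:ℕ) ≤ 2 ^ (a+1) := Nat.one_le_two_pow
        omega
      omega

lemma odd_case_card (n m a : ℕ) (hm : ¬ 2 ∣ m) (hnm : n = 2 ^ a * m) (hm3 : 3 ≤ m)
    (hdef : ∑ d ∈ n.divisors, d < 2 * n) :
    ∑ d ∈ n.divisors.filter (fun d => 3 ≤ d ∧ ¬ m ∣ d), d < m := by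
  have hn0 : n ≠ 0 := by rw [hnm]; positivity
  set A := ∑ d ∈ n.divisors.filter (fun d => ¬ m ∣ d), d with hA
  set B := ∑ d ∈ n.divisors.filter (fun d => m ∣ d), d with hB
  have hAB : B + A = ∑ d ∈ n.divisors, d := Finset.sum_filter_add_sum_filter_not _ _ _
  have hsub : ∑ d ∈ n.divisors.filter (fun d => 3 ≤ d ∧ ¬ m ∣ d), d ≤ A := by
    apply Finset.sum_le_sum_of_subset
    intro d hd
    rw [Finset.mem_filter] at hd ⊢
    exact ⟨hd.1, hd.2.2⟩
  have hBimage : ∀ e ∈ (2 ^ a).divisors, m * e ∈ n.divisors.filter (fun d => m ∣ d) := by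
    intro e he
    rw [Finset.mem_filter, Nat.mem_divisors]
    obtain ⟨he1, -⟩ := Nat.mem_divisors.1 he
    exact ⟨⟨by rw [hnm, mul_comm (2^a) m]; exact mul_dvd_mul_left m he1, hn0⟩,
      Dvd.intro e rfl⟩
  have hBge : 2 ^ a * m * 2 - m ≤ B := by
    have hinj : Set.InjOn (fun e => m * e) ((2 ^ a).divisors : Set ℕ) := by
      intro x _ y _ h
      exact Nat.eq_of_mul_eq_mul_left (by omega) h
    have himg : ∑ e ∈ (2 ^ a).divisors, m * e
        = ∑ d ∈ ((2 ^ a).divisors.image (fun e => m * e)), d := by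
      rw [Finset.sum_image (by intro x hx y hy h; exact hinj hx hy h)]
    have hsub2 : ((2 ^ a).divisors.image (fun e => m * e)) ⊆
        n.divisors.filter (fun d => m ∣ d) := by
      intro d hd
      obtain ⟨e, he, rfl⟩ := Finset.mem_image.1 hd
      exact hBimage e he
    have h1 : ∑ e ∈ (2 ^ a).divisors, m * e ≤ B := by
      rw [himg]; exact Finset.sum_le_sum_of_subset hsub2
    have h2 : m * (2 ^ (a + 1) - 1) ≤ ∑ e ∈ (2 ^ a).divisors, m * e := by
      rw [← Finset.mul_sum]
      exact Nat.mul_le_mul_left m (sum_divisors_pow_two a)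
    have h3 : 2 ^ a * m * 2 - m ≤ m * (2 ^ (a + 1) - 1) := by
      have hp : (1:ℕ) ≤ 2 ^ a := Nat.one_le_two_pow
      have e1 : m * 2 ^ (a+1) = 2 ^ a * m * 2 := by rw [pow_succ]; ring
      have e2 : m * (2 ^ (a+1) - 1) = m * 2 ^ (a+1) - m * 1 := Nat.mul_sub m _ _
      omega
    omega
  omega

/-- if `n ≥ 3` is deficient (`σ(n) < 2n`), then `Γ_N(D_n)` is
not Hamiltonian. -/
theorem stmt_7 (n : ℕ) (hn : 3 ≤ n) (hdef : ∑ d ∈ n.divisors, d < 2 * n) :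
    haveI : NeZero n := ⟨by omega⟩
    haveI : DecidableEq {H : Subgroup (DihedralGroup n) // ¬ H.Normal} :=
      Classical.decEq _
    haveI : Fintype {H : Subgroup (DihedralGroup n) // ¬ H.Normal} :=
      Fintype.ofFinite _
    ¬ (permGraphN (DihedralGroup n)).IsHamiltonian := by
  haveI : NeZero n := ⟨by omega⟩
  letI instD : DecidableEq {H : Subgroup (DihedralGroup n) // ¬ H.Normal} := Classical.decEq _
  letI instF : Fintype {H : Subgroup (DihedralGroup n) // ¬ H.Normal} := Fintype.ofFinite _
  show ¬ (permGraphN (DihedralGroup n)).IsHamiltonian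
  obtain ⟨a, m, hm, hnm⟩ := Nat.exists_eq_pow_mul_and_not_dvd (show n ≠ 0 by omega) 2 (by norm_num)
  rcases eq_or_ne m 1 with hm1 | hm1
  · -- n = 2 ^ a
    subst hm1
    rw [mul_one] at hnm
    have ha2 : 2 ≤ a := by
      by_contra hcon
      interval_cases a <;> omega
    have h4n : (4 : ℕ) ∣ n := by
      rw [hnm, show (4:ℕ) = 2^2 by norm_num]
      exact pow_dvd_pow 2 ha2
    apply core_lemma n 2 4 hn (by omega) h4n (by norm_num)
    · decide
    · have hempty : ∀ d ∈ n.divisors.filter (fun d => 3 ≤ d ∧ ¬ (4:ℕ) ∣ d), False := by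
        intro d hd
        rw [Finset.mem_filter, Nat.mem_divisors] at hd
        obtain ⟨⟨hdvd, -⟩, h3d, h4d⟩ := hd
        rw [hnm] at hdvd
        obtain ⟨i, hi, rfl⟩ := (Nat.dvd_prime_pow Nat.prime_two).1 hdvd
        have hi2 : 2 ≤ i := by
          by_contra hcon
          interval_cases i <;> omega
        exact h4d (by rw [show (4:ℕ) = 2^2 by norm_num]; exact pow_dvd_pow 2 hi2)
      have : ∑ d ∈ n.divisors.filter (fun d => 3 ≤ d ∧ ¬ (4:ℕ) ∣ d), d = 0 :=
        Finset.sum_eq_zero (fun d hd => (hempty d hd).elim)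
      omega
  · -- odd part m ≥ 3
    have hm3 : 3 ≤ m := by
      rcases Nat.lt_or_ge m 3 with h | h
      · interval_cases m
        · omega
        · omega
        · exact absurd (dvd_refl 2) hm
      · exact h
    haveI : NeZero m := ⟨by omega⟩
    have hmn : m ∣ n := ⟨2 ^ a, by rw [hnm]; ring⟩
    apply core_lemma n m m hn (by omega) hmn dvd_rfl
    · intro x hx
      have hx0 : x = 0 := by
        have ht : ((2 : ℕ) : ZMod m) * (((m + 1) / 2 : ℕ) : ZMod m) = 1 := by
          rw [← Nat.cast_mul]
          have : 2 * ((m + 1) / 2) = m + 1 := by omega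
          rw [this]
          push_cast
          rw [ZMod.natCast_self]
          ring
        have h2x : ((2 : ℕ) : ZMod m) * x = 0 := by push_cast; linear_combination hx
        calc x = (((2:ℕ) : ZMod m) * (((m + 1) / 2 : ℕ) : ZMod m)) * x := by rw [ht, one_mul]
        _ = (((m + 1) / 2 : ℕ) : ZMod m) * (((2:ℕ) : ZMod m) * x) := by ring
        _ = 0 := by rw [h2x, mul_zero]
      rw [hx0, map_zero]
    · exact odd_case_card n m a hm hnm hm3 hdef
end

section
/- Let n ≥ 3 be an integer. The total number of subgroups of the dihedral group D_n (including the trivial subgroup and D_n itself) equals τ(n) + σ(n). -/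
open DihedralGroup

variable {n : ℕ}

/-- The subgroup of `DihedralGroup n` with rotation part `A` and reflection part
(if `o = some j₀`) the coset `j₀ + A`. -/
def dihFull (A : AddSubgroup (ZMod n)) (o : Option (ZMod n)) : Subgroup (DihedralGroup n) where
  carrier := {x | match x with
    | DihedralGroup.r i => i ∈ A
    | DihedralGroup.sr j => ∃ j₀, o = some j₀ ∧ j - j₀ ∈ A}
  one_mem' := A.zero_mem
  mul_mem' := by
    rintro (i | i) (j | j) hi hj <;>
      simp only [Set.mem_setOf_eq, r_mul_r, r_mul_sr, sr_mul_r, sr_mul_sr] at *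
    · exact A.add_mem hi hj
    · obtain ⟨j₀, rfl, hj⟩ := hj
      exact ⟨j₀, rfl, by simpa [sub_sub, add_comm] using A.sub_mem hj hi⟩
    · obtain ⟨j₀, rfl, hi⟩ := hi
      exact ⟨j₀, rfl, by simpa [add_sub_right_comm] using A.add_mem hi hj⟩
    · obtain ⟨j₀, rfl, hi⟩ := hi
      obtain ⟨j₀', h', hj⟩ := hj
      obtain rfl : j₀ = j₀' := by injection h'
      simpa [sub_sub_sub_cancel_right] using A.sub_mem hj hi
  inv_mem' := by
    rintro (i | i) h <;> simp only [Set.mem_setOf_eq] at *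
    · show -i ∈ A
      exact A.neg_mem h
    · exact h

@[simp] lemma r_mem_dihFull {A : AddSubgroup (ZMod n)} {o : Option (ZMod n)} {i : ZMod n} :
    DihedralGroup.r i ∈ dihFull A o ↔ i ∈ A := Iff.rfl

@[simp] lemma sr_mem_dihFull {A : AddSubgroup (ZMod n)} {o : Option (ZMod n)} {j : ZMod n} :
    DihedralGroup.sr j ∈ dihFull A o ↔ ∃ j₀, o = some j₀ ∧ j - j₀ ∈ A := Iff.rfl

/-- The rotation part of a subgroup of a dihedral group. -/
def rotSub (H : Subgroup (DihedralGroup n)) : AddSubgroup (ZMod n) where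
  carrier := {i | DihedralGroup.r i ∈ H}
  zero_mem' := by simpa [← DihedralGroup.one_def] using H.one_mem
  add_mem' := fun hi hj => by simpa using H.mul_mem hi hj
  neg_mem' := fun {i} hi => by
    have h2 : (DihedralGroup.r i)⁻¹ ∈ H := H.inv_mem hi
    exact h2

@[simp] lemma mem_rotSub {H : Subgroup (DihedralGroup n)} {i : ZMod n} :
    i ∈ rotSub H ↔ DihedralGroup.r i ∈ H := Iff.rfl

lemma rotSub_dihFull (A : AddSubgroup (ZMod n)) (o : Option (ZMod n)) :
    rotSub (dihFull A o) = A := by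
  ext i; simp

lemma dihFull_eq_of_sr_mem (H : Subgroup (DihedralGroup n)) {j₁ : ZMod n}
    (h : DihedralGroup.sr j₁ ∈ H) : dihFull (rotSub H) (some j₁) = H := by
  ext x
  rcases x with i | j
  · simp
  · simp only [sr_mem_dihFull, Option.some_inj, mem_rotSub]
    constructor
    · rintro ⟨j₀, rfl, hj⟩
      simpa using H.mul_mem h hj
    · intro hj
      exact ⟨j₁, rfl, by simpa using H.mul_mem h hj⟩

noncomputable def psi (n : ℕ) (p : Σ A : AddSubgroup (ZMod n), Option (ZMod n ⧸ A)) :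
    Subgroup (DihedralGroup n) :=
  dihFull p.1 (p.2.map Quotient.out)

lemma sr_mem_psi_some (A : AddSubgroup (ZMod n)) (q : ZMod n ⧸ A) (j : ZMod n) :
    DihedralGroup.sr j ∈ psi n ⟨A, some q⟩ ↔ (j : ZMod n ⧸ A) = q := by
  simp only [psi, Option.map_some, sr_mem_dihFull, Option.some_inj]
  constructor
  · rintro ⟨j₀, rfl, hj⟩
    rw [← QuotientAddGroup.out_eq' q, QuotientAddGroup.eq]
    simpa [neg_add_eq_sub] using A.neg_mem hj
  · intro hq
    refine ⟨q.out, rfl, ?_⟩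
    have h1 : (j : ZMod n ⧸ A) = ((q.out : ZMod n) : ZMod n ⧸ A) := by
      rw [hq, QuotientAddGroup.out_eq']
    have h2 : -j + q.out ∈ A := QuotientAddGroup.eq.mp h1
    have h3 := A.neg_mem h2
    rwa [neg_add_rev, neg_neg, add_comm, ← sub_eq_add_neg] at h3

lemma psi_bijective (n : ℕ) : Function.Bijective (psi n) := by
  constructor
  · rintro ⟨A, o⟩ ⟨A', o'⟩ h
    obtain rfl : A = A' := by
      have := congrArg rotSub h
      simpa only [psi, rotSub_dihFull] using this
    suffices ho : o = o' by rw [ho]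
    match o, o' with
    | none, none => rfl
    | none, some q =>
        exfalso
        have h1 : DihedralGroup.sr q.out ∈ psi n ⟨A, some q⟩ :=
          (sr_mem_psi_some A q q.out).mpr (QuotientAddGroup.out_eq' q)
        rw [← h] at h1
        obtain ⟨j₀, hj₀, -⟩ := sr_mem_dihFull.mp h1
        simp [psi] at hj₀
    | some q, none =>
        exfalso
        have h1 : DihedralGroup.sr q.out ∈ psi n ⟨A, some q⟩ :=
          (sr_mem_psi_some A q q.out).mpr (QuotientAddGroup.out_eq' q)
        rw [h] at h1
        obtain ⟨j₀, hj₀, -⟩ := sr_mem_dihFull.mp h1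
        simp [psi] at hj₀
    | some q, some q' =>
        have h1 : DihedralGroup.sr q.out ∈ psi n ⟨A, some q⟩ :=
          (sr_mem_psi_some A q q.out).mpr (QuotientAddGroup.out_eq' q)
        rw [h] at h1
        have h2 := (sr_mem_psi_some A q' q.out).mp h1
        rw [QuotientAddGroup.out_eq' q] at h2
        rw [h2]
  · intro H
    by_cases h : ∃ j, DihedralGroup.sr j ∈ H
    · obtain ⟨j₁, hj₁⟩ := h
      refine ⟨⟨rotSub H, some (QuotientAddGroup.mk j₁)⟩, ?_⟩
      show dihFull (rotSub H) (some (QuotientAddGroup.mk (s := rotSub H) j₁).out) = H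
      set j₂ := (QuotientAddGroup.mk (s := rotSub H) j₁).out with hj₂
      have hmem : DihedralGroup.sr j₂ ∈ H := by
        have : (j₂ : ZMod n ⧸ rotSub H) = QuotientAddGroup.mk j₁ :=
          QuotientAddGroup.out_eq' _
        have h3 : -j₂ + j₁ ∈ rotSub H := QuotientAddGroup.eq.mp this
        have h4 : DihedralGroup.r (-(-j₂ + j₁)) ∈ H := (rotSub H).neg_mem h3
        have h5 := H.mul_mem hj₁ h4
        have h6 : DihedralGroup.sr j₁ * DihedralGroup.r (-(-j₂ + j₁)) =
            DihedralGroup.sr j₂ := by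
          rw [sr_mul_r]; congr 1; abel
        rwa [h6] at h5
      exact dihFull_eq_of_sr_mem H hmem
    · refine ⟨⟨rotSub H, none⟩, ?_⟩
      show dihFull (rotSub H) none = H
      ext x
      rcases x with i | j
      · simp
      · simp only [sr_mem_dihFull, mem_rotSub]
        exact iff_of_false (by rintro ⟨j₀, h', -⟩; cases h')
          (fun hj => h ⟨j, hj⟩)

open AddSubgroup

lemma card_zmultiples_div (n d : ℕ) (hn : n ≠ 0) (hd : d ∣ n) :
    Nat.card (zmultiples ((↑(n / d) : ZMod n))) = d := by
  have : NeZero n := ⟨hn⟩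
  rw [Nat.card_zmultiples, ZMod.addOrderOf_coe _ hn,
    Nat.gcd_eq_right (Nat.div_dvd_of_dvd hd),
    Nat.div_div_self hd hn]

lemma zmod_addSubgroup_card_dvd (n : ℕ) (hn : n ≠ 0) (A : AddSubgroup (ZMod n)) :
    Nat.card A ∣ n := by
  have : NeZero n := ⟨hn⟩
  simpa [Nat.card_zmod] using AddSubgroup.card_addSubgroup_dvd_card A

lemma zmod_addSubgroup_eq (n : ℕ) (hn : n ≠ 0) (A : AddSubgroup (ZMod n)) :
    A = zmultiples ((↑(n / Nat.card A) : ZMod n)) := by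
  have : NeZero n := ⟨hn⟩
  have hdvd : Nat.card A ∣ n := zmod_addSubgroup_card_dvd n hn A
  set d := Nat.card A with hd
  have hd0 : d ≠ 0 := Nat.card_pos.ne'
  refine AddSubgroup.eq_of_le_of_card_ge ?_ ?_
  · intro a ha
    have h1 : d • (⟨a, ha⟩ : A) = 0 := card_nsmul_eq_zero'
    have h2 : d • a = 0 := by
      have := congrArg Subtype.val h1
      simpa using this
    have h3 : ((d * a.val : ℕ) : ZMod n) = 0 := by
      push_cast
      rw [ZMod.natCast_val, ZMod.cast_id, ← nsmul_eq_mul, h2]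
    have h4 : n ∣ d * a.val := (ZMod.natCast_eq_zero_iff _ n).mp h3
    have h5 : n / d ∣ a.val := by
      rw [← Nat.mul_dvd_mul_iff_left (Nat.pos_of_ne_zero hd0),
        Nat.mul_div_cancel' hdvd]
      exact h4
    obtain ⟨k, hk⟩ := h5
    refine mem_zmultiples_iff.mpr ⟨(k : ℤ), ?_⟩
    have : a = ((a.val : ℕ) : ZMod n) := by
      rw [ZMod.natCast_val, ZMod.cast_id]
    rw [this, hk, natCast_zsmul, nsmul_eq_mul]
    push_cast
    ring
  · rw [card_zmultiples_div n d hn hdvd]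

/-- for `n ≥ 3`, the total number of subgroups of the dihedral
group `D_n` equals `τ(n) + σ(n)`. -/
theorem stmt_9 (n : ℕ) (hn : 3 ≤ n) :
    Nat.card (Subgroup (DihedralGroup n)) =
      n.divisors.card + ∑ d ∈ n.divisors, d := by
  classical
  have hn0 : n ≠ 0 := by omega
  haveI : NeZero n := ⟨hn0⟩
  rw [← Nat.card_eq_of_bijective _ (psi_bijective n)]
  letI : Fintype (AddSubgroup (ZMod n)) := Fintype.ofFinite _
  letI : ∀ A : AddSubgroup (ZMod n), Fintype (ZMod n ⧸ A) := fun A => Fintype.ofFinite _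
  rw [Nat.card_eq_fintype_card, Fintype.card_sigma]
  have hq : ∀ A : AddSubgroup (ZMod n),
      Fintype.card (Option (ZMod n ⧸ A)) = n / Nat.card A + 1 := by
    intro A
    rw [Fintype.card_option, ← Nat.card_eq_fintype_card]
    congr 1
    have h1 : Nat.card A * A.index = n := by
      rw [AddSubgroup.card_mul_index, Nat.card_zmod]
    have h2 : Nat.card (ZMod n ⧸ A) = A.index := rfl
    rw [h2]
    have h3 : n / Nat.card A = A.index :=
      Nat.div_eq_of_eq_mul_left Nat.card_pos (by rw [mul_comm]; exact h1.symm)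
    rw [h3]
  simp_rw [hq]
  have hsum : ∑ A : AddSubgroup (ZMod n), (n / Nat.card A + 1) =
      ∑ d ∈ n.divisors, (n / d + 1) := by
    refine Finset.sum_bij (fun A _ => Nat.card A) ?_ ?_ ?_ ?_
    · intro A _
      exact Nat.mem_divisors.mpr ⟨zmod_addSubgroup_card_dvd n hn0 A, hn0⟩
    · intro A _ A' _ hAA'
      have h : Nat.card A = Nat.card A' := hAA'
      calc A = AddSubgroup.zmultiples ((↑(n / Nat.card A) : ZMod n)) :=
            zmod_addSubgroup_eq n hn0 A
        _ = AddSubgroup.zmultiples ((↑(n / Nat.card A') : ZMod n)) := by rw [h]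
        _ = A' := (zmod_addSubgroup_eq n hn0 A').symm
    · intro d hd
      obtain ⟨hdvd, -⟩ := Nat.mem_divisors.mp hd
      exact ⟨AddSubgroup.zmultiples ((↑(n / d) : ZMod n)), Finset.mem_univ _,
        card_zmultiples_div n d hn0 hdvd⟩
    · intro A _
      rfl
  have hdiv : ∑ x ∈ n.divisors, n / x = ∑ d ∈ n.divisors, d := by
    simpa using Nat.sum_div_divisors n id
  rw [hsum, Finset.sum_add_distrib, Finset.sum_const, smul_eq_mul, mul_one,
    hdiv, Nat.add_comm]
end
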